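/- arXiv:1907.01378 — 12 statements merged into one kernel-verified Lean document; each statement's English description precedes it below -/
import Mathlib

section
/- Let A and B be alphabets, let S be a finite semigroup, and let φ : A⁺ → S and ψ : B⁺ → S be surjective semigroup homomorphisms. Then the fiber product Π(φ,ψ) = {(u,v) ∈ A⁺ × B⁺ : φ(u) = ψ(v)} is not finitely generated as a semigroup. -/
/-- The fiber product of two semigroup homomorphisms with common codomain,
as a subsemigroup of the direct product. -/
def fiberSubsemigroup {S T F : Type*} [Semigroup S] [Semigroup T] [Semigroup F]
    (φ : S →ₙ* F) (ψ : T →ₙ* F) : Subsemigroup (S × T) where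
  carrier := {p | φ p.1 = ψ p.2}
  mul_mem' := by
    intro a b ha hb
    simp only [Set.mem_setOf_eq, Prod.fst_mul, Prod.snd_mul, map_mul] at *
    rw [ha, hb]

/-- A subsemigroup is finitely generated if it is the closure of a finite subset. -/
def SubsemigroupFG {M : Type*} [Mul M] (P : Subsemigroup M) : Prop :=
  ∃ X : Set M, X.Finite ∧ Subsemigroup.closure X = P

/-!
A finite generating set bounds the lengths of the second coordinates of the generators by some
`M`, and since lengths add under multiplication, every element `(u, v)` it generates satisfies
`|v| ≤ M |u|`. On the other hand, by pigeonhole on the finite semigroup `S`, some `s ∈ S` is the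
image under `ψ` of infinitely many powers `b ^ (n + 1)` of a letter `b`; pairing these with one
fixed preimage `u` of `s` under `φ` gives elements `(u, b ^ (n + 1))` of the fiber product with
`n` arbitrarily large.
-/

namespace FreeSemigroup

theorem one_le_length {α : Type*} (x : FreeSemigroup α) : 1 ≤ x.length :=
  Nat.le_add_left 1 x.tail.length

theorem length_snd_le_mul_length_fst_of_mem_closure {α β : Type*}
    {X : Set (FreeSemigroup α × FreeSemigroup β)} {M : ℕ} (hX : ∀ p ∈ X, p.2.length ≤ M)
    {p : FreeSemigroup α × FreeSemigroup β} (hp : p ∈ Subsemigroup.closure X) :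
    p.2.length ≤ M * p.1.length := by
  induction hp using Subsemigroup.closure_induction with
  | mem p hp => exact (hX p hp).trans (Nat.le_mul_of_pos_right M p.1.one_le_length)
  | mul p q _ _ hp hq =>
    simp only [Prod.fst_mul, Prod.snd_mul, length_mul, Nat.mul_add]
    exact Nat.add_le_add hp hq

end FreeSemigroup

open FreeSemigroup in
theorem exists_mem_fiberSubsemigroup_mul_length_fst_lt {A B S : Type*} [Semigroup S] [Finite S]
    [Nonempty B] (φ : FreeSemigroup A →ₙ* S) (ψ : FreeSemigroup B →ₙ* S)
    (hφ : Function.Surjective φ) (M : ℕ) :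
    ∃ p ∈ fiberSubsemigroup φ ψ, M * p.1.length < p.2.length := by
  let b : B := Classical.arbitrary B
  let power (n : ℕ) : FreeSemigroup B := ⟨b, List.replicate n b⟩
  obtain ⟨s, hs⟩ := Finite.exists_infinite_fiber fun n ↦ ψ (power n)
  obtain ⟨u, hu⟩ := hφ s
  obtain ⟨n, hn, hlt⟩ := (Set.infinite_coe_iff.mp hs).exists_gt (M * u.length)
  refine ⟨(u, power n), hu.trans hn.symm, ?_⟩
  calc M * u.length < n := hlt
    _ < (power n).length := by simp [power, length]

/-- the fiber product of two free semigroups over a finite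
semigroup is never finitely generated. -/
theorem stmt0 {A B S : Type} [Semigroup S] [Finite S] [Nonempty S]
    (φ : FreeSemigroup A →ₙ* S) (ψ : FreeSemigroup B →ₙ* S)
    (hφ : Function.Surjective φ) (hψ : Function.Surjective ψ) :
    ¬ SubsemigroupFG (fiberSubsemigroup φ ψ) := by
  rintro ⟨X, hXfin, hXcl⟩
  obtain ⟨M, hM⟩ := (hXfin.image fun p ↦ p.2.length).bddAbove
  have : Nonempty B := (hψ (Classical.arbitrary S)).elim fun w _ ↦ ⟨w.head⟩
  obtain ⟨p, hp, hlt⟩ := exists_mem_fiberSubsemigroup_mul_length_fst_lt φ ψ hφ M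
  rw [← hXcl] at hp
  exact (FreeSemigroup.length_snd_le_mul_length_fst_of_mem_closure
    (fun q hq ↦ hM ⟨q, hq, rfl⟩) hp).not_gt hlt
end

section
/- Let A and B be alphabets, let M be a finite monoid, and let φ : A* → M and ψ : B* → M be surjective monoid homomorphisms. If M is not a group, then the fiber product Π(φ,ψ) = {(u,v) ∈ A* × B* : φ(u) = ψ(v)} is not finitely generated as a monoid. -/
/-- The fiber product of two monoid homomorphisms with common codomain,
as a submonoid of the direct product. -/
def fiberSubmonoid {S T F : Type*} [Monoid S] [Monoid T] [Monoid F]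
    (φ : S →* F) (ψ : T →* F) : Submonoid (S × T) where
  carrier := {p | φ p.1 = ψ p.2}
  mul_mem' := by
    intro a b ha hb
    simp only [Set.mem_setOf_eq, Prod.fst_mul, Prod.snd_mul, map_mul] at *
    rw [ha, hb]
  one_mem' := by simp

-- finite monoid: one-sided inverse is two-sided
lemma onesided {M : Type} [Monoid M] [Finite M] {x y : M} (h : x * y = 1) : y * x = 1 := by
  have inj : Function.Injective (fun z : M => y * z) := by
    intro a b hab
    have hab' : y * a = y * b := hab
    have : x * (y * a) = x * (y * b) := by rw [hab']
    simpa [← mul_assoc, h] using this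
  obtain ⟨z, hz⟩ := (Finite.injective_iff_surjective.mp inj) 1
  have hz' : y * z = 1 := hz
  have hxz : x = z := by
    calc x = x * (y * z) := by rw [hz']; simp
    _ = (x * y) * z := by rw [mul_assoc]
    _ = z := by rw [h, one_mul]
  simpa [hxz] using hz'

lemma idem_pow {M : Type} [Monoid M] [Finite M] (m : M) :
    ∃ p : ℕ, 0 < p ∧ (m ^ p) * (m ^ p) = m ^ p := by
  obtain ⟨i, j, hij, hpow⟩ := Finite.exists_ne_map_eq_of_infinite (fun n : ℕ => m ^ n)
  wlog hlt : i < j generalizing i j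
  · exact this j i hij.symm hpow.symm (by omega)
  set t := j - i with ht
  have h1 : ∀ a, i ≤ a → m ^ (a + t) = m ^ a := by
    intro a ha
    have : m ^ (a + t) = m ^ j * m ^ (a - i) := by
      rw [← pow_add]; congr 1; omega
    rw [this, ← hpow, ← pow_add]
    congr 1; omega
  have h2 : ∀ k a, i ≤ a → m ^ (a + k * t) = m ^ a := by
    intro k
    induction k with
    | zero => simp
    | succ k ih =>
      intro a ha
      have : a + (k+1) * t = (a + t) + k * t := by ring
      rw [this, ih _ (by omega), h1 _ ha]
  have htpos : 0 < t := by omega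
  refine ⟨(i + 1) * t, by positivity, ?_⟩
  rw [← pow_add]
  have : (i+1)*t + (i+1)*t = (i+1)*t + ((i+1)) * t := by ring
  exact h2 (i+1) ((i+1)*t) (by nlinarith)

lemma fm_length_pow {α : Type} (v : FreeMonoid α) (n : ℕ) : (v ^ n).length = n * v.length := by
  induction n with
  | zero => simp [FreeMonoid.length_one]
  | succ n ih => rw [pow_succ, FreeMonoid.length_mul, ih]; ring

lemma split_prefix {α : Type} (p q r s : FreeMonoid α) (h : p * q = r * s)
    (hl : p.length ≤ r.length) : ∃ t, r = p * t ∧ q = t * s := by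
  have h' : p.toList ++ q.toList = r.toList ++ s.toList := by
    rw [← FreeMonoid.toList_mul, ← FreeMonoid.toList_mul, h]
  rcases List.append_eq_append_iff.mp h' with ⟨a', ha1, ha2⟩ | ⟨c', hc1, hc2⟩
  · refine ⟨FreeMonoid.ofList a', ?_, ?_⟩
    · apply FreeMonoid.toList.injective
      rw [FreeMonoid.toList_mul, FreeMonoid.toList_ofList, ← ha1]
    · apply FreeMonoid.toList.injective
      rw [FreeMonoid.toList_mul, FreeMonoid.toList_ofList, ha2]
  · have hc' : c' = [] := by
      have := congrArg List.length hc1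
      simp only [List.length_append] at this
      have : c'.length = 0 := by
        have hp : p.length = p.toList.length := rfl
        have hr : r.length = r.toList.length := rfl
        omega
      exact List.eq_nil_of_length_eq_zero this
    subst hc'
    refine ⟨1, ?_, ?_⟩
    · apply FreeMonoid.toList.injective
      simp only [FreeMonoid.toList_mul, FreeMonoid.toList_one, List.append_nil]
      simp [hc1]
    · apply FreeMonoid.toList.injective
      simp only [FreeMonoid.toList_mul, FreeMonoid.toList_one, List.nil_append]
      simp [hc2]

lemma aligned {α : Type} (v x c y : FreeMonoid α) (n : ℕ) (hk : 0 < v.length)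
    (h : x * c * y = v ^ n) (hc : 2 * v.length ≤ c.length) :
    ∃ x2 y2, c = x2 * v * y2 := by
  set k := v.length with hkdef
  set α' := x.length / k + 1 with hα
  have e1 : α' * k = x.length / k * k + k := by rw [hα, add_mul, one_mul]
  have e2 : x.length / k * k + x.length % k = x.length := by
    rw [mul_comm]; exact Nat.div_add_mod _ _
  have e3 : x.length % k < k := Nat.mod_lt _ hk
  have hx1 : x.length < α' * k := by omega
  have hx2 : α' * k ≤ x.length + k := by omega
  have hlen : x.length + c.length + y.length = n * k := by
    have := congrArg FreeMonoid.length h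
    simpa [FreeMonoid.length_mul, fm_length_pow] using this
  have hαn : α' + 1 ≤ n := by
    have h1 : (α' + 1) * k ≤ n * k := by
      have h2 : (α' + 1) * k = α' * k + k := by ring
      omega
    exact Nat.le_of_mul_le_mul_right h1 hk
  have hdecomp : v ^ n = v ^ α' * (v * v ^ (n - α' - 1)) := by
    rw [← pow_succ', ← pow_add]
    congr 1
    omega
  have h' : x * (c * y) = v ^ α' * (v * v ^ (n - α' - 1)) := by
    rw [← hdecomp, ← h, mul_assoc]
  obtain ⟨x2, hx2e, hrest⟩ := split_prefix x (c * y) (v ^ α') (v * v ^ (n - α' - 1)) h'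
    (by rw [fm_length_pow, ← hkdef]; omega)
  have hx2len : x.length + x2.length = α' * k := by
    have h5 := congrArg FreeMonoid.length hx2e
    rw [fm_length_pow, FreeMonoid.length_mul, ← hkdef] at h5
    omega
  have h'' : (x2 * v) * v ^ (n - α' - 1) = c * y := by
    rw [mul_assoc, ← hrest]
  obtain ⟨y2, hy2e, _⟩ := split_prefix (x2 * v) (v ^ (n - α' - 1)) c y h''
    (by simp only [FreeMonoid.length_mul, ← hkdef]; omega)
  exact ⟨x2, y2, hy2e⟩

lemma key {A B M : Type} [Monoid M] (φ : FreeMonoid A →* M) (ψ : FreeMonoid B →* M)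
    (L K : ℕ) (hK : 0 < K) :
    ∀ l : List (FreeMonoid A × FreeMonoid B),
      (∀ x ∈ l, φ x.1 = ψ x.2 ∧ x.2.length ≤ L) →
      (∃ x c y, (l.map Prod.snd).prod = x * c * y ∧ ψ c = 1 ∧ K ≤ c.length) ∨
      (∃ c r, (l.map Prod.snd).prod = c * r ∧ ψ c = 1 ∧ c.length < K ∧
        r.length ≤ (l.map Prod.fst).prod.length * (L + K)) := by
  intro l
  induction l with
  | nil =>
    intro _
    right
    exact ⟨1, 1, by simp, by simp, by simpa using hK, by simp [FreeMonoid.length_one]⟩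
  | cons hd tl ih =>
    intro hmem
    obtain ⟨hφψ, hlen⟩ := hmem hd List.mem_cons_self
    rcases ih (fun x hx => hmem x (List.mem_cons_of_mem _ hx)) with
      ⟨x, c, y, hw, hc1, hcK⟩ | ⟨c, r, hw, hc1, hcK, hr⟩
    · left
      exact ⟨hd.2 * x, c, y, by simp only [List.map_cons, List.prod_cons, hw, mul_assoc],
        hc1, hcK⟩
    · by_cases hd1 : hd.1 = 1
      · -- first component empty, second maps to 1
        have hψb : ψ hd.2 = 1 := by rw [← hφψ, hd1, map_one]
        by_cases hbig : K ≤ (hd.2 * c).length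
        · left
          refine ⟨1, hd.2 * c, r, ?_, ?_, hbig⟩
          · simp only [List.map_cons, List.prod_cons, hw, one_mul, mul_assoc]
          · rw [map_mul, hψb, hc1, one_mul]
        · right
          refine ⟨hd.2 * c, r, ?_, ?_, by omega, ?_⟩
          · simp only [List.map_cons, List.prod_cons, hw, mul_assoc]
          · rw [map_mul, hψb, hc1, one_mul]
          · simpa [List.map_cons, List.prod_cons, FreeMonoid.length_mul, hd1] using hr
      · right
        refine ⟨1, hd.2 * (c * r), ?_, by simp, by simpa using hK, ?_⟩
        · simp only [List.map_cons, List.prod_cons, hw, one_mul]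
        · have hu1 : 0 < hd.1.length := by
            rcases Nat.eq_zero_or_pos hd.1.length with h0 | h0
            · exact absurd (FreeMonoid.length_eq_zero.mp h0) hd1
            · exact h0
          simp only [List.map_cons, List.prod_cons, FreeMonoid.length_mul]
          have hexp : (hd.1.length + (List.map Prod.fst tl).prod.length) * (L + K)
              = hd.1.length * (L + K) + (List.map Prod.fst tl).prod.length * (L + K) := by ring
          rw [hexp]
          have : L + K ≤ hd.1.length * (L + K) := by nlinarith
          omega

/-- if the finite fiber quotient `M` is not a group (i.e. some element
of `M` is not invertible), then the fiber product of two free monoids over `M`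
is not finitely generated. -/
theorem stmt1 {A B M : Type} [Monoid M] [Finite M]
    (φ : FreeMonoid A →* M) (ψ : FreeMonoid B →* M)
    (hφ : Function.Surjective φ) (hψ : Function.Surjective ψ)
    (hM : ¬ ∀ m : M, IsUnit m) :
    ¬ (fiberSubmonoid φ ψ).FG := by
  intro hFG
  push_neg at hM
  obtain ⟨m, hm⟩ := hM
  obtain ⟨p, hp, hidem⟩ := idem_pow m
  set f := m ^ p with hfdef
  -- f is not a unit
  have hfu : ¬ IsUnit f := by
    intro hf
    apply hm
    obtain ⟨w, hw⟩ := hf.exists_right_inv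
    have h1 : m * (m ^ (p - 1) * w) = 1 := by
      rw [← mul_assoc, ← pow_succ']
      have : p - 1 + 1 = p := by omega
      rw [this, ← hfdef, hw]
    exact ⟨⟨m, m ^ (p-1) * w, h1, onesided h1⟩, rfl⟩
  -- 1 ∉ M f M
  have hMfM : ∀ a b : M, a * f * b ≠ 1 := by
    intro a b hab
    apply hfu
    have h1 : b * (a * f) = 1 := onesided hab
    have h2 : (b * a) * f = 1 := by rw [mul_assoc]; exact h1
    exact ⟨⟨f, b * a, onesided h2, h2⟩, rfl⟩
  have hf1 : f ≠ 1 := fun h => hfu (h ▸ isUnit_one)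
  obtain ⟨u, hu⟩ := hφ f
  obtain ⟨v, hv⟩ := hψ f
  have hk : 0 < v.length := by
    rcases Nat.eq_zero_or_pos v.length with h0 | h0
    · exact absurd (by rw [FreeMonoid.length_eq_zero.mp h0, map_one] at hv; exact hv.symm) hf1
    · exact h0
  obtain ⟨S, hS⟩ := hFG
  set L := S.sup (fun x => x.2.length) with hL
  set K := 2 * v.length with hK
  have hK0 : 0 < K := by omega
  set n := K + u.length * (L + K) with hn
  have hn1 : 1 ≤ n := by omega
  -- the element (u, v^n) belongs to the fiber product
  have hfn : ψ (v ^ n) = f := by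
    rw [map_pow, hv]
    have : n = (n - 1) + 1 := by omega
    rw [this]
    exact IsIdempotentElem.pow_succ_eq _ hidem
  have hmem : (u, v ^ n) ∈ fiberSubmonoid φ ψ := by
    show φ u = ψ (v ^ n)
    rw [hu, hfn]
  rw [← hS] at hmem
  obtain ⟨l, hlS, hlprod⟩ := Submonoid.exists_list_of_mem_closure hmem
  -- component products
  have hfst : (l.map Prod.fst).prod = u := by
    have h9 : l.prod.1 = u := congrArg Prod.fst hlprod
    rw [← h9]
    exact ((MonoidHom.fst (FreeMonoid A) (FreeMonoid B)).map_list_prod l).symm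
  have hsnd : (l.map Prod.snd).prod = v ^ n := by
    have h9 : l.prod.2 = v ^ n := congrArg Prod.snd hlprod
    rw [← h9]
    exact ((MonoidHom.snd (FreeMonoid A) (FreeMonoid B)).map_list_prod l).symm
  have hcond : ∀ x ∈ l, φ x.1 = ψ x.2 ∧ x.2.length ≤ L := by
    intro x hx
    have hxS : x ∈ S := hlS x hx
    constructor
    · have : x ∈ fiberSubmonoid φ ψ := by
        rw [← hS]
        exact Submonoid.subset_closure hxS
      exact this
    · exact Finset.le_sup (f := fun x => x.2.length) hxS
  rcases key φ ψ L K hK0 l hcond with ⟨x, c, y, hw, hc1, hcK⟩ | ⟨c, r, hw, _, hcK, hr⟩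
  · -- long factor mapping to 1 contains an aligned copy of v
    rw [hsnd] at hw
    obtain ⟨x2, y2, hceq⟩ := aligned v x c y n hk hw.symm (by omega)
    apply hMfM (ψ x2) (ψ y2)
    rw [← hv, ← map_mul, ← map_mul, ← hceq, hc1]
  · -- length contradiction
    rw [hsnd] at hw
    rw [hfst] at hr
    have hlen : n * v.length = c.length + r.length := by
      have := congrArg FreeMonoid.length hw
      simpa [fm_length_pow, FreeMonoid.length_mul] using this
    have : n * v.length < n := by omega
    have : n ≤ n * v.length := Nat.le_mul_of_pos_right n hk
    omega
end

section
/- Let A and B be alphabets, let G be a finite group that is not cyclic, and let φ : A* → G and ψ : B* → G be surjective monoid homomorphisms. Then the fiber product Π(φ,ψ) = {(u,v) ∈ A* × B* : φ(u) = ψ(v)} is not finitely generated as a monoid. -/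
open FreeMonoid in
lemma aux_toList_pow {α : Type*} (a : α) (n : ℕ) :
    toList ((of a) ^ n) = List.replicate n a := by
  induction n with
  | zero => rfl
  | succ n ih =>
    rw [pow_succ', toList_mul, ih]
    rfl

lemma aux_free_mul_eq_one {α : Type*} {u v : FreeMonoid α} (h : u * v = 1) :
    u = 1 ∧ v = 1 := by
  have h' : FreeMonoid.toList u ++ FreeMonoid.toList v = [] := congrArg FreeMonoid.toList h
  rcases List.append_eq_nil_iff.mp h' with ⟨h1, h2⟩
  exact ⟨FreeMonoid.toList.injective h1, FreeMonoid.toList.injective h2⟩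

/-- Splitting a concatenation against `replicate N a ++ z`. -/
lemma aux_split_rep {α : Type*} (a : α) :
    ∀ (N : ℕ) (z x y : List α), x ++ y = List.replicate N a ++ z →
      (∃ i ≤ N, x = List.replicate i a) ∨
      (∃ z' y', x = List.replicate N a ++ z' ∧ z' ++ y' = z) := by
  intro N
  induction N with
  | zero =>
    intro z x y h
    exact Or.inr ⟨x, y, by simp, by simpa using h⟩
  | succ N ih =>
    intro z x y h
    rw [List.replicate_succ, List.cons_append] at h
    cases x with
    | nil => exact Or.inl ⟨0, Nat.zero_le _, rfl⟩
    | cons c x' =>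
      rw [List.cons_append, List.cons.injEq] at h
      obtain ⟨rfl, h2⟩ := h
      rcases ih z x' y h2 with ⟨i, hi, rfl⟩ | ⟨z', y', rfl, hz⟩
      · exact Or.inl ⟨i + 1, Nat.succ_le_succ hi, by rw [List.replicate_succ]⟩
      · exact Or.inr ⟨z', y', by rw [List.replicate_succ, List.cons_append], hz⟩

/-- Homomorphic images of free-monoid elements lie in any submonoid containing
all letter images. -/
lemma aux_range_le {α G : Type*} [Monoid G] (φ : FreeMonoid α →* G)
    (H : Submonoid G) (h : ∀ c : α, φ (FreeMonoid.of c) ∈ H) (x : FreeMonoid α) :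
    φ x ∈ H := by
  have : ∀ l : List α, φ (FreeMonoid.ofList l) ∈ H := by
    intro l
    induction l with
    | nil =>
      have : FreeMonoid.ofList ([] : List α) = 1 := rfl
      rw [this, map_one]; exact H.one_mem
    | cons c l ih =>
      rw [FreeMonoid.ofList_cons, map_mul]
      exact H.mul_mem (h c) ih
  simpa [FreeMonoid.ofList_toList] using this (FreeMonoid.toList x)

/-- The kernel of a surjection from a free monoid onto a finite non-cyclic group
is not finitely generated. -/
lemma aux_ker_not_fg {A G : Type*} [Group G] [Finite G] (hG : ¬ IsCyclic G)
    (φ : FreeMonoid A →* G) (hφ : Function.Surjective φ)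
    (X : Finset (FreeMonoid A))
    (hX : Submonoid.closure (X : Set (FreeMonoid A)) = MonoidHom.mker φ) : False := by
  classical
  -- G is nontrivial
  have hnt : Nontrivial G := by
    by_contra h
    rw [not_nontrivial_iff_subsingleton] at h
    refine hG ?_
    constructor
    exact ⟨(1 : G), fun x => by rw [Subsingleton.elim x (1 : G)]; exact Subgroup.mem_zpowers (1 : G)⟩
  -- a letter with nontrivial image
  obtain ⟨a, ha⟩ : ∃ a : A, φ (FreeMonoid.of a) ≠ 1 := by
    by_contra h
    push_neg at h
    obtain ⟨g, hg⟩ := exists_ne (1 : G)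
    obtain ⟨x, rfl⟩ := hφ g
    have := aux_range_le φ ⊥ (fun c => by simp [h c]) x
    simp only [Submonoid.mem_bot] at this
    exact hg this
  set s : G := φ (FreeMonoid.of a) with hs
  -- a letter whose image is not a power of s
  obtain ⟨b, hb⟩ : ∃ b : A, φ (FreeMonoid.of b) ∉ Subgroup.zpowers s := by
    by_contra h
    push_neg at h
    refine hG ?_
    constructor
    refine ⟨s, fun g => ?_⟩
    obtain ⟨x, rfl⟩ := hφ g
    exact aux_range_le φ (Subgroup.zpowers s).toSubmonoid h x
  set t : G := φ (FreeMonoid.of b) with ht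
  have ht1 : t ≠ 1 := fun h => hb (h ▸ Subgroup.one_mem _)
  set k : ℕ := orderOf s with hk
  set l : ℕ := orderOf t with hl
  have hkpos : 0 < k := orderOf_pos s
  have hlpos : 0 < l := orderOf_pos t
  set L : ℕ := X.sup (fun x => (FreeMonoid.toList x).length) with hL
  set N : ℕ := k * (L + 1) with hN
  have hsN : s ^ N = 1 := by
    rw [hN, pow_mul, pow_orderOf_eq_one, one_pow]
  set w : FreeMonoid A :=
    FreeMonoid.of b * (FreeMonoid.of a) ^ N * (FreeMonoid.of b) ^ (l - 1) with hw
  have hwlist : FreeMonoid.toList w =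
      b :: (List.replicate N a ++ List.replicate (l - 1) b) := by
    rw [hw, FreeMonoid.toList_mul, FreeMonoid.toList_mul, aux_toList_pow,
      aux_toList_pow, FreeMonoid.toList_of]
    simp
  have hφw : φ w = 1 := by
    rw [hw, map_mul, map_mul, map_pow, map_pow, ← hs, ← ht, hsN, mul_one,
      ← pow_succ']
    rw [Nat.sub_add_cancel hlpos, hl, pow_orderOf_eq_one]
  have hwX : w ∈ Submonoid.closure (X : Set (FreeMonoid A)) := by
    rw [hX, MonoidHom.mem_mker]; exact hφw
  -- every nontrivial element of the closure has a generator as a left factor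
  have hdec : ∀ u ∈ Submonoid.closure (X : Set (FreeMonoid A)),
      u = 1 ∨ ∃ x ∈ X, x ≠ 1 ∧ ∃ y ∈ Submonoid.closure (X : Set (FreeMonoid A)),
        u = x * y := by
    intro u hu
    induction hu using Submonoid.closure_induction with
    | mem x hx =>
      by_cases h1 : x = 1
      · exact Or.inl h1
      · exact Or.inr ⟨x, hx, h1, 1, Submonoid.one_mem _, (mul_one x).symm⟩
    | one => exact Or.inl rfl
    | mul p q hp hq ihp ihq =>
      rcases ihp with rfl | ⟨x, hxX, hx1, y, hy, rfl⟩
      · rcases ihq with rfl | ⟨x, hxX, hx1, y, hy, rfl⟩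
        · exact Or.inl (mul_one 1)
        · exact Or.inr ⟨x, hxX, hx1, y, hy, one_mul _⟩
      · exact Or.inr ⟨x, hxX, hx1, y * q, Submonoid.mul_mem _ hy hq, mul_assoc x y q⟩
  -- w is an atom: any nontrivial left factor in the kernel is all of w
  have hatom : ∀ x y : FreeMonoid A, w = x * y → x ≠ 1 → φ x = 1 → x = w := by
    intro x y hxy hx1 hφx
    have hlist : FreeMonoid.toList x ++ FreeMonoid.toList y =
        b :: (List.replicate N a ++ List.replicate (l - 1) b) := by
      rw [← FreeMonoid.toList_mul, ← hxy, hwlist]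
    obtain ⟨c, x', hx'⟩ : ∃ c x', FreeMonoid.toList x = c :: x' := by
      cases hxl : FreeMonoid.toList x with
      | nil => exact absurd (FreeMonoid.toList.injective hxl) hx1
      | cons c x' => exact ⟨c, x', rfl⟩
    rw [hx', List.cons_append, List.cons.injEq] at hlist
    obtain ⟨hcb, hlist2⟩ := hlist
    rw [hcb] at hx'
    rcases aux_split_rep a N (List.replicate (l - 1) b) x' (FreeMonoid.toList y)
        hlist2 with ⟨i, hi, rfl⟩ | ⟨z', y', rfl, hz⟩
    · -- x = b · a^i : image t * s^i ≠ 1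
      exfalso
      have hxval : x = FreeMonoid.of b * (FreeMonoid.of a) ^ i := by
        apply FreeMonoid.toList.injective
        rw [hx', FreeMonoid.toList_mul, aux_toList_pow, FreeMonoid.toList_of]
        rfl
      rw [hxval, map_mul, map_pow, ← hs, ← ht] at hφx
      have : t = (s ^ i)⁻¹ := eq_inv_of_mul_eq_one_left hφx
      exact hb (this ▸ inv_mem (pow_mem (Subgroup.mem_zpowers s) i))
    · -- x = b · a^N · b^j
      have hz'rep : z' = List.replicate z'.length b := by
        rw [List.eq_replicate_length]
        intro c hc
        have : c ∈ List.replicate (l - 1) b := hz ▸ List.mem_append_left _ hc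
        exact List.eq_of_mem_replicate this
      set j : ℕ := z'.length with hj
      have hjle : j ≤ l - 1 := by
        have := congrArg List.length hz
        simp only [List.length_append, List.length_replicate] at this
        omega
      have hxval : x = FreeMonoid.of b * (FreeMonoid.of a) ^ N * (FreeMonoid.of b) ^ j := by
        apply FreeMonoid.toList.injective
        rw [hx', hz'rep, FreeMonoid.toList_mul, FreeMonoid.toList_mul, aux_toList_pow,
          aux_toList_pow, FreeMonoid.toList_of]
        simp
      rw [hxval, map_mul, map_mul, map_pow, map_pow, ← hs, ← ht, hsN, mul_one,
        ← pow_succ'] at hφx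
      have hdvd : l ∣ j + 1 := hl ▸ orderOf_dvd_of_pow_eq_one hφx
      have : l ≤ j + 1 := Nat.le_of_dvd (Nat.succ_pos j) hdvd
      have hjl : j = l - 1 := by omega
      rw [hxval, hjl, ← hw]
  -- conclude
  rcases hdec w hwX with h1 | ⟨x, hxX, hx1, y, hy, hxy⟩
  · have := congrArg FreeMonoid.toList h1
    rw [hwlist] at this
    exact List.cons_ne_nil _ _ this
  · have hφx : φ x = 1 := by
      have hxk : x ∈ MonoidHom.mker φ := by
        rw [← hX]; exact Submonoid.subset_closure hxX
      rwa [MonoidHom.mem_mker] at hxk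
    have hxw : x = w := hatom x y hxy hx1 hφx
    have hlen : (FreeMonoid.toList x).length ≤ L :=
      Finset.le_sup (f := fun x => (FreeMonoid.toList x).length) hxX
    rw [hxw, hwlist] at hlen
    simp only [List.length_cons, List.length_append, List.length_replicate] at hlen
    have : L + 1 ≤ N := by
      rw [hN]; exact Nat.le_mul_of_pos_left _ hkpos
    omega

/-- if `G` is a finite non-cyclic group, then the fiber product of
two free monoids over `G` is not finitely generated. -/
theorem stmt2 {A B G : Type} [Group G] [Finite G] (hG : ¬ IsCyclic G)
    (φ : FreeMonoid A →* G) (ψ : FreeMonoid B →* G)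
    (hφ : Function.Surjective φ) (hψ : Function.Surjective ψ) :
    ¬ (fiberSubmonoid φ ψ).FG := by
  classical
  rintro ⟨S, hS⟩
  refine aux_ker_not_fg hG φ hφ ((S.filter (fun p => p.2 = 1)).image Prod.fst) ?_
  apply le_antisymm
  · rw [Submonoid.closure_le]
    rintro u hu
    simp only [Finset.coe_image, Set.mem_image, Finset.mem_coe, Finset.mem_filter] at hu
    obtain ⟨p, ⟨hpS, hp2⟩, rfl⟩ := hu
    have hpmem : p ∈ fiberSubmonoid φ ψ := hS ▸ Submonoid.subset_closure hpS
    have : φ p.1 = ψ p.2 := hpmem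
    rw [SetLike.mem_coe, MonoidHom.mem_mker, this, hp2, map_one]
  · intro u hu
    rw [MonoidHom.mem_mker] at hu
    have hmem : (u, (1 : FreeMonoid B)) ∈ fiberSubmonoid φ ψ := by
      show φ u = ψ 1
      rw [hu, map_one]
    rw [← hS] at hmem
    have key : ∀ q ∈ Submonoid.closure (S : Set (FreeMonoid A × FreeMonoid B)),
        q.2 = 1 → q.1 ∈ Submonoid.closure
          (((S.filter (fun p => p.2 = 1)).image Prod.fst : Finset (FreeMonoid A)) :
            Set (FreeMonoid A)) := by
      intro q hq
      induction hq using Submonoid.closure_induction with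
      | mem p hp =>
        intro hp2
        apply Submonoid.subset_closure
        simp only [Finset.coe_image, Set.mem_image, Finset.mem_coe, Finset.mem_filter]
        exact ⟨p, ⟨hp, hp2⟩, rfl⟩
      | one => intro _; exact Submonoid.one_mem _
      | mul p q hp hq ihp ihq =>
        intro hpq
        obtain ⟨h1, h2⟩ := aux_free_mul_eq_one hpq
        exact Submonoid.mul_mem _ (ihp h1) (ihq h2)
    exact key (u, 1) hmem rfl
end

section
/- Let A and B be finite alphabets, let F be a finite monoid, and let φ : A* → F and ψ : B* → F be surjective monoid homomorphisms. Then the fiber product Π(φ,ψ) = {(u,v) ∈ A* × B* : φ(u) = ψ(v)} is finitely generated as a monoid if and only if the image sets φ(A) and ψ(B) each have exactly one element and F is a cyclic group. -/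
open FreeMonoid Function

section Helpers

variable {α : Type*} {F : Type*} [Monoid F]

lemma FM.mul_eq_one {u v : FreeMonoid α} (h : u * v = 1) : u = 1 ∧ v = 1 := by
  have h1 : FreeMonoid.length (u * v) = 0 := by rw [h]; rfl
  rw [FreeMonoid.length_mul] at h1
  constructor <;> rw [← FreeMonoid.length_eq_zero] <;> omega

lemma FM.prod_eq_one : ∀ {l : List (FreeMonoid α)}, l.prod = 1 → ∀ z ∈ l, z = 1 := by
  intro l
  induction l with
  | nil => intro _ z hz; exact absurd hz List.not_mem_nil
  | cons w t ih =>
    intro h z hz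
    rw [List.prod_cons] at h
    obtain ⟨h1, h2⟩ := FM.mul_eq_one h
    rcases List.mem_cons.mp hz with rfl | hz
    · exact h1
    · exact ih h2 z hz

lemma eval_const (φ : FreeMonoid α →* F) (x : F) :
    ∀ (u : FreeMonoid α), (∀ c ∈ FreeMonoid.toList u, φ (FreeMonoid.of c) = x) →
      φ u = x ^ (FreeMonoid.length u) := by
  intro u
  induction u using FreeMonoid.recOn with
  | one => intro _; simp
  | of_mul c w ih =>
    intro h
    rw [map_mul, FreeMonoid.length_mul, FreeMonoid.length_of,
      h c (by rw [FreeMonoid.toList_of_mul]; exact List.mem_cons_self),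
      ih (fun d hd => h d (by rw [FreeMonoid.toList_of_mul]; exact List.mem_cons_of_mem _ hd)),
      pow_add, pow_one]

lemma isUnit_eval (φ : FreeMonoid α →* F) (h : ∀ c : α, IsUnit (φ (FreeMonoid.of c)))
    (u : FreeMonoid α) : IsUnit (φ u) := by
  induction u using FreeMonoid.recOn with
  | one => simp
  | of_mul c w ih => rw [map_mul]; exact (h c).mul ih

lemma length_listProd (l : List (FreeMonoid α)) :
    FreeMonoid.length l.prod = (l.map FreeMonoid.length).sum := by
  induction l with
  | nil => rfl
  | cons w t ih => rw [List.prod_cons, FreeMonoid.length_mul, List.map_cons, List.sum_cons, ih]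

lemma exists_pow_eq_one [Finite F] {x : F} (hx : IsUnit x) : ∃ n, 0 < n ∧ x ^ n = 1 := by
  obtain ⟨i, j, hne, hij⟩ := Finite.exists_ne_map_eq_of_infinite (fun n : ℕ => x ^ n)
  have key : ∀ i j : ℕ, i < j → x ^ i = x ^ j → ∃ n, 0 < n ∧ x ^ n = 1 := by
    intro i j hlt h
    refine ⟨j - i, Nat.sub_pos_of_lt hlt, ?_⟩
    have h2 : x ^ i * x ^ (j - i) = x ^ i * 1 := by
      rw [mul_one, ← pow_add, Nat.add_sub_cancel' hlt.le]
      exact h.symm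
    exact ((hx.pow i).mul_left_cancel h2)
  rcases hne.lt_or_gt with h | h
  · exact key i j h hij
  · exact key j i h hij.symm

lemma eventually_periodic [Finite F] (x : F) :
    ∃ N d, 0 < d ∧ ∀ k, x ^ (N + 1 + k * d) = x ^ (N + 1) := by
  obtain ⟨i, j, hne, hij⟩ := Finite.exists_ne_map_eq_of_infinite (fun n : ℕ => x ^ (n + 1))
  have key : ∀ i j : ℕ, i < j → x ^ (i+1) = x ^ (j+1) →
      ∃ N d, 0 < d ∧ ∀ k, x ^ (N + 1 + k * d) = x ^ (N + 1) := by
    intro i j hlt h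
    refine ⟨i, j - i, Nat.sub_pos_of_lt hlt, ?_⟩
    intro k
    induction k with
    | zero => simp
    | succ k ih =>
      have : i + 1 + (k + 1) * (j - i) = (i + 1 + k * (j - i)) + (j - i) := by ring
      rw [this, pow_add, ih, ← pow_add]
      have h2 : i + 1 + (j - i) = j + 1 := by omega
      rw [h2, ← h]
  rcases hne.lt_or_gt with h | h
  · exact key i j h hij
  · exact key j i h hij.symm

lemma mem_toList_prod {l : List (FreeMonoid α)} {z : FreeMonoid α} (hz : z ∈ l) {c : α}
    (hc : c ∈ FreeMonoid.toList z) : c ∈ FreeMonoid.toList l.prod := by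
  induction l with
  | nil => exact absurd hz List.not_mem_nil
  | cons w t ih =>
    rw [List.prod_cons, FreeMonoid.toList_mul, List.mem_append]
    rcases List.mem_cons.mp hz with rfl | hz
    · exact Or.inl hc
    · exact Or.inr (ih hz)

lemma mem_toList_pow_of {a : α} : ∀ {E : ℕ} {c : α},
    c ∈ FreeMonoid.toList ((FreeMonoid.of a) ^ E) → c = a := by
  intro E
  induction E with
  | zero => intro c hc; exact absurd hc List.not_mem_nil
  | succ E ih =>
    intro c hc
    rw [pow_succ, FreeMonoid.toList_mul, List.mem_append] at hc
    rcases hc with hc | hc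
    · exact ih hc
    · rw [FreeMonoid.toList_of, List.mem_singleton] at hc; exact hc

lemma length_pow (u : FreeMonoid α) (n : ℕ) :
    FreeMonoid.length (u ^ n) = n * FreeMonoid.length u := by
  induction n with
  | zero => simp [pow_zero]
  | succ n ih => rw [pow_succ, FreeMonoid.length_mul, ih]; ring

lemma first_nonempty_prefix :
    ∀ (l : List (FreeMonoid α)), l.prod ≠ 1 →
      ∃ z ∈ l, z ≠ 1 ∧ (FreeMonoid.toList z) <+: (FreeMonoid.toList l.prod) := by
  intro l
  induction l with
  | nil => intro h; exact absurd rfl h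
  | cons w t ih =>
    intro h
    rw [List.prod_cons] at h ⊢
    by_cases hw : w = 1
    · subst hw
      rw [one_mul] at h ⊢
      obtain ⟨z, hz, hz1, hzp⟩ := ih h
      exact ⟨z, List.mem_cons_of_mem _ hz, hz1, hzp⟩
    · exact ⟨w, List.mem_cons_self, hw, by rw [FreeMonoid.toList_mul]; exact List.prefix_append _ _⟩

lemma sum_map_mul_left' {ι : Type*} (l : List ι) (f : ι → ℕ) (C : ℕ) :
    (l.map (fun i => C * f i)).sum = C * (l.map f).sum := by
  induction l with
  | nil => simp
  | cons w t ih => rw [List.map_cons, List.sum_cons, List.map_cons, List.sum_cons, ih, Nat.mul_add]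

end Helpers
section Core

variable {A B : Type} {F : Type} [Monoid F]

lemma mem_fiber (φ : FreeMonoid A →* F) (ψ : FreeMonoid B →* F)
    (p : FreeMonoid A × FreeMonoid B) :
    p ∈ fiberSubmonoid φ ψ ↔ φ p.1 = ψ p.2 := Iff.rfl

lemma decomp (φ : FreeMonoid A →* F) (ψ : FreeMonoid B →* F)
    (S : Finset (FreeMonoid A × FreeMonoid B))
    (hS : Submonoid.closure (S : Set (FreeMonoid A × FreeMonoid B)) = fiberSubmonoid φ ψ)
    {p : FreeMonoid A × FreeMonoid B} (hp : φ p.1 = ψ p.2) :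
    ∃ l : List (FreeMonoid A × FreeMonoid B),
      (∀ q ∈ l, q ∈ S ∧ φ q.1 = ψ q.2) ∧
      (l.map Prod.fst).prod = p.1 ∧ (l.map Prod.snd).prod = p.2 := by
  have hmem : p ∈ Submonoid.closure (S : Set (FreeMonoid A × FreeMonoid B)) := by
    rw [hS]; exact hp
  obtain ⟨l, hl, hprod⟩ := Submonoid.exists_list_of_mem_closure hmem
  refine ⟨l, ?_, ?_, ?_⟩
  · intro q hq
    refine ⟨hl q hq, ?_⟩
    have : q ∈ fiberSubmonoid φ ψ := by
      rw [← hS]; exact Submonoid.subset_closure (hl q hq)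
    exact this
  · have := map_list_prod (MonoidHom.fst (FreeMonoid A) (FreeMonoid B)) l
    rw [hprod] at this
    simpa using this.symm
  · have := map_list_prod (MonoidHom.snd (FreeMonoid A) (FreeMonoid B)) l
    rw [hprod] at this
    simpa using this.symm

lemma core_unit [Finite F] (φ : FreeMonoid A →* F) (ψ : FreeMonoid B →* F)
    (hψ : Function.Surjective ψ)
    (S : Finset (FreeMonoid A × FreeMonoid B))
    (hS : Submonoid.closure (S : Set (FreeMonoid A × FreeMonoid B)) = fiberSubmonoid φ ψ)
    (a : A) : IsUnit (φ (FreeMonoid.of a)) := by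
  by_contra hx
  set x := φ (FreeMonoid.of a) with hxdef
  obtain ⟨N, d, hd, hper⟩ := eventually_periodic x
  obtain ⟨v, hv⟩ := hψ (x ^ (N + 1))
  set C := S.sup (fun q => FreeMonoid.length q.1) with hC
  set E := N + 1 + ((C + 1) * (FreeMonoid.length v + 1)) * d with hE
  have hElarge : C * FreeMonoid.length v < E := by
    have h1 : (C + 1) * (FreeMonoid.length v + 1) ≤ (C + 1) * (FreeMonoid.length v + 1) * d :=
      Nat.le_mul_of_pos_right _ hd
    calc C * FreeMonoid.length v < (C + 1) * (FreeMonoid.length v + 1) := by nlinarith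
      _ ≤ (C + 1) * (FreeMonoid.length v + 1) * d := h1
      _ ≤ E := by omega
  have hmem : φ ((FreeMonoid.of a) ^ E) = ψ v := by
    rw [map_pow, ← hxdef, hE, hper, hv]
  obtain ⟨l, hl, hfst, hsnd⟩ := decomp φ ψ S hS (p := ((FreeMonoid.of a) ^ E, v)) hmem
  dsimp only at hfst hsnd
  -- each piece's first component is a power of a, so small if not x-power-trivial
  have hbound : ∀ q ∈ l, FreeMonoid.length q.1 ≤ C * FreeMonoid.length q.2 := by
    intro q hq
    have hlet : ∀ c ∈ FreeMonoid.toList q.1, φ (FreeMonoid.of c) = x := by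
      intro c hc
      have : c ∈ FreeMonoid.toList ((FreeMonoid.of a) ^ E) := by
        rw [← hfst]
        exact mem_toList_prod (List.mem_map_of_mem (f := Prod.fst) hq) hc
      rw [mem_toList_pow_of this]
    have hq1 : φ q.1 = x ^ FreeMonoid.length q.1 := eval_const φ x q.1 hlet
    rcases eq_or_ne q.2 1 with h2 | h2
    · -- then x ^ len = 1, so len = 0 (x is not a unit)
      have : x ^ FreeMonoid.length q.1 = 1 := by
        rw [← hq1, (hl q hq).2, h2, map_one]
      rcases Nat.eq_zero_or_pos (FreeMonoid.length q.1) with h0 | h0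
      · omega
      · exfalso
        apply hx
        have harith : FreeMonoid.length q.1 - 1 + 1 = FreeMonoid.length q.1 := by omega
        have hpow : x * x ^ (FreeMonoid.length q.1 - 1) = 1 := by
          rw [← pow_succ', harith]; assumption
        have hpow2 : x ^ (FreeMonoid.length q.1 - 1) * x = 1 := by
          rw [← pow_succ, harith]; assumption
        exact isUnit_iff_exists.mpr ⟨x ^ (FreeMonoid.length q.1 - 1), hpow, hpow2⟩
    · have hlen2 : 1 ≤ FreeMonoid.length q.2 := by
        rcases Nat.eq_zero_or_pos (FreeMonoid.length q.2) with h0 | h0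
        · exact absurd (FreeMonoid.length_eq_zero.mp h0) h2
        · exact h0
      calc FreeMonoid.length q.1 ≤ C := Finset.le_sup (f := fun q => FreeMonoid.length q.1) (hl q hq).1
        _ = C * 1 := (mul_one C).symm
        _ ≤ C * FreeMonoid.length q.2 := Nat.mul_le_mul_left C hlen2
  -- sum lengths
  have hsum1 : E = (l.map (fun q => FreeMonoid.length q.1)).sum := by
    have := length_listProd (l.map Prod.fst)
    rw [hfst, length_pow, FreeMonoid.length_of, mul_one, List.map_map] at this
    exact this
  have hsum2 : FreeMonoid.length v = (l.map (fun q => FreeMonoid.length q.2)).sum := by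
    have := length_listProd (l.map Prod.snd)
    rw [hsnd, List.map_map] at this
    exact this
  have hle : (l.map (fun q => FreeMonoid.length q.1)).sum
      ≤ (l.map (fun q => C * FreeMonoid.length q.2)).sum :=
    List.sum_le_sum hbound
  have heq : (l.map (fun q => C * FreeMonoid.length q.2)).sum
      = C * (l.map (fun q => FreeMonoid.length q.2)).sum :=
    sum_map_mul_left' l _ C
  rw [hsum2] at hElarge
  omega

lemma core_const [Finite F] (φ : FreeMonoid A →* F) (ψ : FreeMonoid B →* F)
    (hφ : Function.Surjective φ)
    (S : Finset (FreeMonoid A × FreeMonoid B))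
    (hS : Submonoid.closure (S : Set (FreeMonoid A × FreeMonoid B)) = fiberSubmonoid φ ψ)
    (hu : ∀ c : A, IsUnit (φ (FreeMonoid.of c)))
    (a a' : A) : φ (FreeMonoid.of a) = φ (FreeMonoid.of a') := by
  classical
  by_contra hne
  set x := φ (FreeMonoid.of a) with hxdef
  set x' := φ (FreeMonoid.of a') with hx'def
  set C := S.sup (fun q => FreeMonoid.length q.1) with hC
  -- greedy word construction
  set g : ℕ → List A := fun n => Nat.rec ([] : List A)
    (fun _ u => u ++ [if φ (FreeMonoid.ofList u) * x = 1 then a' else a]) n with hg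
  have gstep : ∀ n, g (n + 1)
      = g n ++ [if φ (FreeMonoid.ofList (g n)) * x = 1 then a' else a] := fun n => rfl
  have glen : ∀ n, (g n).length = n := by
    intro n
    induction n with
    | zero => rfl
    | succ n ih => rw [gstep, List.length_append, ih]; rfl
  have gval : ∀ n, φ (FreeMonoid.ofList (g (n + 1))) ≠ 1 := by
    intro n
    rw [gstep, FreeMonoid.ofList_append, map_mul, FreeMonoid.ofList_singleton]
    by_cases h : φ (FreeMonoid.ofList (g n)) * x = 1
    · rw [if_pos h]
      intro hbad
      exact hne ((isUnit_eval φ hu (FreeMonoid.ofList (g n))).mul_left_cancel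
        (h.trans hbad.symm))
    · rw [if_neg h]
      exact h
  have gtake : ∀ n, ∀ i, 0 < i → i ≤ n → φ (FreeMonoid.ofList ((g n).take i)) ≠ 1 := by
    intro n
    induction n with
    | zero => intro i h0 h1; omega
    | succ n ih =>
      intro i h0 h1
      rcases Nat.lt_or_ge i (n + 1) with h | h
      · have hi : i ≤ n := by omega
        rw [gstep, List.take_append_of_le_length (hi.trans (glen n).ge)]
        exact ih i h0 hi
      · have hi : i = n + 1 := by omega
        subst hi
        rw [List.take_of_length_le (glen (n + 1)).le]
        exact gval n
  set u := g (C + 1) with hu'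
  set v := φ (FreeMonoid.ofList u) with hv
  have hv1 : v ≠ 1 := by
    have h2 := gtake (C + 1) (C + 1) (by omega) le_rfl
    rw [List.take_of_length_le (glen (C + 1)).le] at h2
    rw [hv, hu']
    exact h2
  have hvu : IsUnit v := isUnit_eval φ hu _
  -- minimal completion to 1
  have hP : ∃ m : ℕ, ∃ s : List A, s.length = m ∧ v * φ (FreeMonoid.ofList s) = 1 := by
    obtain ⟨b, hb⟩ := hvu.exists_right_inv
    obtain ⟨w0, hw0⟩ := hφ b
    exact ⟨(FreeMonoid.toList w0).length, FreeMonoid.toList w0, rfl,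
      by rw [FreeMonoid.ofList_toList, hw0]; exact hb⟩
  set m := Nat.find hP with hm
  obtain ⟨s, hslen, hsval⟩ := Nat.find_spec hP
  have hm0 : 0 < m := by
    rcases Nat.eq_zero_or_pos m with h0 | h0
    · exfalso
      apply hv1
      have : s = [] := List.length_eq_zero_iff.mp (by omega)
      rw [this, FreeMonoid.ofList_nil, map_one, mul_one] at hsval
      exact hsval
    · exact h0
  set w := u ++ s with hw
  have hul : u.length = C + 1 := by rw [hu', glen (C + 1)]
  have hwlen : w.length = (C + 1) + m := by
    rw [hw, List.length_append]
    omega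
  have hw1 : φ (FreeMonoid.ofList w) = 1 := by
    rw [hw, FreeMonoid.ofList_append, map_mul]
    exact hsval
  have hwtake : ∀ i, 0 < i → i < w.length → φ (FreeMonoid.ofList (w.take i)) ≠ 1 := by
    intro i h0 hiw
    rcases Nat.lt_or_ge i (C + 2) with h | h
    · have hi : i ≤ C + 1 := by omega
      rw [hw, List.take_append_of_le_length (by omega), hu']
      exact gtake (C + 1) i h0 hi
    · have hj : i - (C + 1) ≤ s.length := by omega
      have htk : w.take i = u ++ s.take (i - (C + 1)) := by
        rw [hw, List.take_append, List.take_of_length_le (by omega), hul]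
      rw [htk, FreeMonoid.ofList_append, map_mul]
      intro hbad
      have hjlt : i - (C + 1) < m := by omega
      exact Nat.find_min hP hjlt ⟨s.take (i - (C + 1)),
        by rw [List.length_take]; omega, hbad⟩
  -- now decompose (ofList w, 1) over the generators
  have hmem : φ (FreeMonoid.ofList w) = ψ (1 : FreeMonoid B) := by rw [hw1, map_one]
  obtain ⟨l, hl, hfst, hsnd⟩ := decomp φ ψ S hS (p := (FreeMonoid.ofList w, 1)) hmem
  dsimp only at hfst hsnd
  have hall1 : ∀ q ∈ l, q.2 = (1 : FreeMonoid B) := by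
    intro q hq
    exact FM.prod_eq_one hsnd q.2 (List.mem_map_of_mem (f := Prod.snd) hq)
  have hprodne : (l.map Prod.fst).prod ≠ 1 := by
    rw [hfst]
    intro hbad
    have : w = [] := by
      have := congrArg FreeMonoid.toList hbad
      rwa [FreeMonoid.toList_ofList, FreeMonoid.toList_one] at this
    rw [this] at hwlen
    simp at hwlen
    omega
  obtain ⟨z, hz, hzne, hzpre⟩ := first_nonempty_prefix _ hprodne
  obtain ⟨q, hq, rfl⟩ := List.mem_map.mp hz
  have hq1 : φ q.1 = 1 := by
    rw [(hl q hq).2, hall1 q hq, map_one]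
  have hi0 : 0 < FreeMonoid.length q.1 := by
    rcases Nat.eq_zero_or_pos (FreeMonoid.length q.1) with h0 | h0
    · exact absurd (FreeMonoid.length_eq_zero.mp h0) hzne
    · exact h0
  have hiC : FreeMonoid.length q.1 ≤ C :=
    Finset.le_sup (f := fun q => FreeMonoid.length q.1) (hl q hq).1
  have hiw : FreeMonoid.length q.1 < w.length := by omega
  have htake : w.take (FreeMonoid.length q.1) = FreeMonoid.toList q.1 := by
    rw [hfst, FreeMonoid.toList_ofList] at hzpre
    exact (List.prefix_iff_eq_take.mp hzpre).symm
  apply hwtake (FreeMonoid.length q.1) hi0 hiw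
  rw [htake, FreeMonoid.ofList_toList, hq1]

lemma fg_swap (φ : FreeMonoid A →* F) (ψ : FreeMonoid B →* F)
    (h : (fiberSubmonoid φ ψ).FG) : (fiberSubmonoid ψ φ).FG := by
  have h2 := h.map (MulEquiv.prodComm (M := FreeMonoid A) (N := FreeMonoid B)).toMonoidHom
  have he : (fiberSubmonoid φ ψ).map
      (MulEquiv.prodComm (M := FreeMonoid A) (N := FreeMonoid B)).toMonoidHom
      = fiberSubmonoid ψ φ := by
    ext p
    constructor
    · rintro ⟨q, hq, rfl⟩
      exact (mem_fiber φ ψ q).mp hq |>.symm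
    · intro hp
      refine ⟨(p.2, p.1), ?_, ?_⟩
      · exact ((mem_fiber ψ φ p).mp hp).symm
      · exact Prod.ext rfl rfl
  rwa [he] at h2

lemma bwd [Finite A] [Finite B] [Finite F] (φ : FreeMonoid A →* F) (ψ : FreeMonoid B →* F)
    (x y : F) (hx : ∀ a : A, φ (FreeMonoid.of a) = x) (hy : ∀ b : B, ψ (FreeMonoid.of b) = y)
    (hux : IsUnit x) (huy : IsUnit y) : (fiberSubmonoid φ ψ).FG := by
  obtain ⟨n1, hn1, hx1⟩ := exists_pow_eq_one hux
  obtain ⟨n2, hn2, hy1⟩ := exists_pow_eq_one huy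
  set n := n1 * n2 with hn'
  have hn : 0 < n := Nat.mul_pos hn1 hn2
  have hxn : x ^ n = 1 := by rw [hn', pow_mul, hx1, one_pow]
  have hyn : y ^ n = 1 := by rw [hn', mul_comm n1 n2, pow_mul, hy1, one_pow]
  have hxcancel : ∀ k : ℕ, n ≤ k → x ^ (k - n) = x ^ k := by
    intro k hk
    conv_rhs => rw [← Nat.sub_add_cancel hk]
    rw [pow_add, hxn, mul_one]
  have hycancel : ∀ k : ℕ, n ≤ k → y ^ (k - n) = y ^ k := by
    intro k hk
    conv_rhs => rw [← Nat.sub_add_cancel hk]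
    rw [pow_add, hyn, mul_one]
  have hevalx : ∀ u : FreeMonoid A, φ u = x ^ FreeMonoid.length u :=
    fun u => eval_const φ x u (fun c _ => hx c)
  have hevaly : ∀ v : FreeMonoid B, ψ v = y ^ FreeMonoid.length v :=
    fun v => eval_const ψ y v (fun c _ => hy c)
  set G : Set (FreeMonoid A × FreeMonoid B) :=
    {p | φ p.1 = ψ p.2 ∧ FreeMonoid.length p.1 ≤ n ∧ FreeMonoid.length p.2 ≤ n} with hG
  rw [Submonoid.fg_iff]
  refine ⟨G, ?_, ?_⟩
  · apply le_antisymm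
    · rw [Submonoid.closure_le]
      intro p hp
      exact hp.1
    · intro p hp
      have hp' : φ p.1 = ψ p.2 := hp
      clear hp
      have key : ∀ (Nb : ℕ) (p : FreeMonoid A × FreeMonoid B),
          FreeMonoid.length p.1 + FreeMonoid.length p.2 ≤ Nb → φ p.1 = ψ p.2 →
          p ∈ Submonoid.closure G := by
        intro Nb
        induction Nb with
        | zero =>
          intro p hlen hfib
          exact Submonoid.subset_closure ⟨hfib, by omega, by omega⟩
        | succ Nb ih =>
          intro p hlen hfib
          by_cases h1 : FreeMonoid.length p.1 ≤ n ∧ FreeMonoid.length p.2 ≤ n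
          · exact Submonoid.subset_closure ⟨hfib, h1.1, h1.2⟩
          rcases Nat.lt_or_ge n (FreeMonoid.length p.1) with hbig | hsm
          · -- split the first coordinate
            set u := FreeMonoid.toList p.1 with hu
            have hul : u.length = FreeMonoid.length p.1 := rfl
            have hprod : FreeMonoid.ofList (u.take n) * FreeMonoid.ofList (u.drop n) = p.1 := by
              rw [← FreeMonoid.ofList_append, List.take_append_drop]
              exact FreeMonoid.ofList_toList p.1
            have hsplit : (FreeMonoid.ofList (u.take n), (1 : FreeMonoid B)) *
                (FreeMonoid.ofList (u.drop n), p.2) = p := Prod.ext hprod (one_mul p.2)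
            have hlt : FreeMonoid.length (FreeMonoid.ofList (u.take n)) = n := by
              show (u.take n).length = n
              rw [List.length_take]
              omega
            have hld : FreeMonoid.length (FreeMonoid.ofList (u.drop n)) =
                FreeMonoid.length p.1 - n := by
              show (u.drop n).length = _
              rw [List.length_drop, hul]
            have hg1 : (FreeMonoid.ofList (u.take n), (1 : FreeMonoid B)) ∈ G := by
              refine ⟨?_, ?_, ?_⟩
              · show φ _ = ψ 1
                rw [hevalx, hlt, hxn, map_one]
              · show FreeMonoid.length (FreeMonoid.ofList (u.take n)) ≤ n
                omega
              · show FreeMonoid.length (1 : FreeMonoid B) ≤ n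
                rw [FreeMonoid.length_one]
                omega
            have hfib2 : φ (FreeMonoid.ofList (u.drop n)) = ψ p.2 := by
              rw [hevalx, hld, hxcancel _ hbig.le, ← hevalx, hfib]
            have hsum : FreeMonoid.length (FreeMonoid.ofList (u.drop n)) +
                FreeMonoid.length p.2 ≤ Nb := by
              rw [hld]; omega
            rw [← hsplit]
            exact Submonoid.mul_mem _ (Submonoid.subset_closure hg1)
              (ih _ hsum hfib2)
          · have hbig2 : n < FreeMonoid.length p.2 := by
              rcases Nat.lt_or_ge n (FreeMonoid.length p.2) with h | h
              · exact h
              · exact absurd ⟨hsm, h⟩ h1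
            set v := FreeMonoid.toList p.2 with hv
            have hvl : v.length = FreeMonoid.length p.2 := rfl
            have hprod : FreeMonoid.ofList (v.take n) * FreeMonoid.ofList (v.drop n) = p.2 := by
              rw [← FreeMonoid.ofList_append, List.take_append_drop]
              exact FreeMonoid.ofList_toList p.2
            have hsplit : ((1 : FreeMonoid A), FreeMonoid.ofList (v.take n)) *
                (p.1, FreeMonoid.ofList (v.drop n)) = p := Prod.ext (one_mul p.1) hprod
            have hlt : FreeMonoid.length (FreeMonoid.ofList (v.take n)) = n := by
              show (v.take n).length = n
              rw [List.length_take]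
              omega
            have hld : FreeMonoid.length (FreeMonoid.ofList (v.drop n)) =
                FreeMonoid.length p.2 - n := by
              show (v.drop n).length = _
              rw [List.length_drop, hvl]
            have hg1 : ((1 : FreeMonoid A), FreeMonoid.ofList (v.take n)) ∈ G := by
              refine ⟨?_, ?_, ?_⟩
              · show φ 1 = ψ _
                rw [hevaly, hlt, hyn, map_one]
              · show FreeMonoid.length (1 : FreeMonoid A) ≤ n
                rw [FreeMonoid.length_one]
                omega
              · show FreeMonoid.length (FreeMonoid.ofList (v.take n)) ≤ n
                omega
            have hfib2 : φ p.1 = ψ (FreeMonoid.ofList (v.drop n)) := by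
              rw [hevaly, hld, hycancel _ hbig2.le, ← hevaly, ← hfib]
            have hsum : FreeMonoid.length p.1 +
                FreeMonoid.length (FreeMonoid.ofList (v.drop n)) ≤ Nb := by
              rw [hld]; omega
            rw [← hsplit]
            exact Submonoid.mul_mem _ (Submonoid.subset_closure hg1)
              (ih _ hsum hfib2)
      exact key _ p le_rfl hp'
  · have h1 : {l : List A | l.length ≤ n}.Finite := List.finite_length_le A n
    have h2 : {l : List B | l.length ≤ n}.Finite := List.finite_length_le B n
    refine Set.Finite.subset (Set.Finite.prod (h1.image FreeMonoid.ofList)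
      (h2.image FreeMonoid.ofList)) ?_
    rintro ⟨p1, p2⟩ ⟨_, hl1, hl2⟩
    constructor
    · exact ⟨FreeMonoid.toList p1, hl1, FreeMonoid.ofList_toList p1⟩
    · exact ⟨FreeMonoid.toList p2, hl2, FreeMonoid.ofList_toList p2⟩

end Core

/-- for finite (nonempty) alphabets `A, B` and a finite monoid `F`,
the fiber product of the free monoids `A*` and `B*` over `F` is finitely
generated if and only if the sets of images of the letters, `φ(A)` and `ψ(B)`,
are singletons and `F` is a cyclic group (every element is invertible and
`F` is generated by a single element). -/
theorem stmt3 {A B F : Type} [Finite A] [Finite B] [Nonempty A] [Nonempty B]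
    [Monoid F] [Finite F]
    (φ : FreeMonoid A →* F) (ψ : FreeMonoid B →* F)
    (hφ : Function.Surjective φ) (hψ : Function.Surjective ψ) :
    (fiberSubmonoid φ ψ).FG ↔
      ((∃ x : F, Set.range (fun a : A => φ (FreeMonoid.of a)) = {x}) ∧
       (∃ y : F, Set.range (fun b : B => ψ (FreeMonoid.of b)) = {y}) ∧
       (∀ m : F, IsUnit m) ∧ (∃ g : F, ∀ m : F, ∃ k : ℕ, g ^ k = m)) := by
  constructor
  · intro hFG
    obtain ⟨S, hS⟩ := hFG
    obtain ⟨T, hT⟩ := fg_swap φ ψ ⟨S, hS⟩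
    have hAunit : ∀ a : A, IsUnit (φ (FreeMonoid.of a)) :=
      fun a => core_unit φ ψ hψ S hS a
    have hBunit : ∀ b : B, IsUnit (ψ (FreeMonoid.of b)) :=
      fun b => core_unit ψ φ hφ T hT b
    have hAconst : ∀ a a' : A, φ (FreeMonoid.of a) = φ (FreeMonoid.of a') :=
      fun a a' => core_const φ ψ hφ S hS hAunit a a'
    have hBconst : ∀ b b' : B, ψ (FreeMonoid.of b) = ψ (FreeMonoid.of b') :=
      fun b b' => core_const ψ φ hψ T hT hBunit b b'
    have a₀ : A := Classical.arbitrary A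
    have b₀ : B := Classical.arbitrary B
    refine ⟨⟨φ (FreeMonoid.of a₀), ?_⟩, ⟨ψ (FreeMonoid.of b₀), ?_⟩, ?_, ⟨φ (FreeMonoid.of a₀), ?_⟩⟩
    · apply Set.eq_singleton_iff_unique_mem.mpr
      exact ⟨⟨a₀, rfl⟩, by rintro z ⟨a, rfl⟩; exact hAconst a a₀⟩
    · apply Set.eq_singleton_iff_unique_mem.mpr
      exact ⟨⟨b₀, rfl⟩, by rintro z ⟨b, rfl⟩; exact hBconst b b₀⟩
    · intro m
      obtain ⟨u, rfl⟩ := hφ m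
      exact isUnit_eval φ hAunit u
    · intro m
      obtain ⟨u, rfl⟩ := hφ m
      exact ⟨FreeMonoid.length u,
        (eval_const φ _ u (fun c _ => hAconst c a₀)).symm⟩
  · rintro ⟨⟨x, hx⟩, ⟨y, hy⟩, hun, -⟩
    have hx' : ∀ a : A, φ (FreeMonoid.of a) = x := by
      intro a
      have : φ (FreeMonoid.of a) ∈ Set.range (fun a : A => φ (FreeMonoid.of a)) := ⟨a, rfl⟩
      rw [hx] at this
      exact this
    have hy' : ∀ b : B, ψ (FreeMonoid.of b) = y := by
      intro b
      have : ψ (FreeMonoid.of b) ∈ Set.range (fun b : B => ψ (FreeMonoid.of b)) := ⟨b, rfl⟩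
      rw [hy] at this
      exact this
    exact bwd φ ψ x y hx' hy' (hun x) (hun y)
end

section
/- Let A and B be finite alphabets, let n ∈ ℕ, let F be the cyclic group of order n with generator x, and let φ : A* → F and ψ : B* → F be monoid homomorphisms such that φ(a) = x^p for every a ∈ A and ψ(b) = x^q for every b ∈ B, where 1 ≤ p,q ≤ n and gcd(p,n) = gcd(q,n) = 1. Then the fiber product Π(φ,ψ) equals {(u,v) ∈ A* × B* : p·|u| ≡ q·|v| (mod n)}, and it is generated as a monoid by the finite set X = {(u,v) ∈ A* × B* : p·|u| ≡ q·|v| (mod n), 0 ≤ |u|,|v| ≤ n} \ {(u,v) : |u| = |v| = n}. -/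
/-- The generating set `X` of Theorem 2.4: pairs of words `(u,v)` with
`p·|u| ≡ q·|v| (mod n)`, `0 ≤ |u|,|v| ≤ n`, excluding those with `|u| = |v| = n`. -/
def genSet (A B : Type) (n p q : ℕ) : Set (FreeMonoid A × FreeMonoid B) :=
  {uv | (p * uv.1.length ≡ q * uv.2.length [MOD n]) ∧
        uv.1.length ≤ n ∧ uv.2.length ≤ n ∧ ¬(uv.1.length = n ∧ uv.2.length = n)}

/-!
Since every letter maps to `x^p` (resp. `x^q`), a word `u` maps to `x^(p·|u|)`, so membership in
the fiber product is the congruence `p·|u| ≡ q·|v|` modulo the order `n` of `x`. A pair satisfying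
it but lying outside `X` has a component of length at least `n` and total length greater than `n`;
peeling off a prefix of length `n` of that component, paired with the empty word, gives an element
of `X` times a shorter pair that still satisfies the congruence.
-/

lemma orderOf_ne_zero_of_forall_exists_pow_eq {G : Type*} [Group G] {x : G}
    (h : ∀ y : G, ∃ k : ℕ, x ^ k = y) : orderOf x ≠ 0 := by
  obtain ⟨k, hk⟩ := h x⁻¹
  refine (orderOf_pos_iff.2 (isOfFinOrder_iff_pow_eq_one.2 ⟨k + 1, k.succ_pos, ?_⟩)).ne'
  rw [pow_succ', hk, mul_inv_cancel]

lemma FreeMonoid.exists_eq_mul_length_eq {α : Type*} (u : FreeMonoid α) {k : ℕ}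
    (hk : k ≤ u.length) : ∃ u₁ u₂ : FreeMonoid α, u = u₁ * u₂ ∧ u₁.length = k :=
  ⟨.ofList (u.toList.take k), .ofList (u.toList.drop k),
    by simp [← FreeMonoid.ofList_append], by simpa [FreeMonoid.length] using hk⟩

lemma map_eq_pow_mul_length {A M : Type*} [Monoid M] {φ : FreeMonoid A →* M} {x : M} {p : ℕ}
    (hφ : ∀ a, φ (FreeMonoid.of a) = x ^ p) (u : FreeMonoid A) :
    φ u = x ^ (p * u.length) := by
  induction u using FreeMonoid.inductionOn' with
  | one => simp
  | of_mul a u ih =>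
    rw [map_mul, hφ, ih, ← pow_add, FreeMonoid.length_mul, FreeMonoid.length_of]
    ring_nf

lemma mem_fiberSubmonoid_iff_modEq {A B G : Type*} [Group G] {φ : FreeMonoid A →* G}
    {ψ : FreeMonoid B →* G} {x : G} {p q : ℕ}
    (hφ : ∀ a, φ (FreeMonoid.of a) = x ^ p) (hψ : ∀ b, ψ (FreeMonoid.of b) = x ^ q)
    (uv : FreeMonoid A × FreeMonoid B) :
    uv ∈ fiberSubmonoid φ ψ ↔ p * uv.1.length ≡ q * uv.2.length [MOD orderOf x] := by
  change φ uv.1 = ψ uv.2 ↔ _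
  rw [map_eq_pow_mul_length hφ, map_eq_pow_mul_length hψ, pow_eq_pow_iff_modEq]

lemma Nat.mul_add_self_modEq (p n k : ℕ) : p * (n + k) ≡ p * k [MOD n] := by
  simp [Nat.ModEq, mul_add]

section genSet

variable {A B : Type} {n p q : ℕ}

lemma genSet_finite [Finite A] [Finite B] : (genSet A B n p q).Finite :=
  ((List.finite_length_le A n).prod (List.finite_length_le B n)).subset
    fun _ huv => ⟨huv.2.1, huv.2.2.1⟩

lemma mk_one_mem_genSet (hn : n ≠ 0) {u : FreeMonoid A} (hu : u.length = n) :
    (u, (1 : FreeMonoid B)) ∈ genSet A B n p q := by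
  refine ⟨?_, hu.le, by simp, fun h => hn (by simpa using h.2.symm)⟩
  simp [hu, Nat.ModEq]

lemma one_mk_mem_genSet (hn : n ≠ 0) {v : FreeMonoid B} (hv : v.length = n) :
    ((1 : FreeMonoid A), v) ∈ genSet A B n p q := by
  refine ⟨?_, by simp, hv.le, fun h => hn (by simpa using h.1.symm)⟩
  simp [hv, Nat.ModEq]

lemma mem_closure_genSet (hn : n ≠ 0) {u : FreeMonoid A} {v : FreeMonoid B}
    (h : p * u.length ≡ q * v.length [MOD n]) :
    (u, v) ∈ Submonoid.closure (genSet A B n p q) := by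
  induction hm : u.length + v.length using Nat.strong_induction_on generalizing u v with
  | _ m ih =>
    by_cases hX : (u, v) ∈ genSet A B n p q
    · exact Submonoid.subset_closure hX
    have hlong : (n ≤ u.length ∨ n ≤ v.length) ∧ n < u.length + v.length := by
      simp only [genSet, Set.mem_ofPred_eq, not_and] at hX
      have := hX h
      omega
    rcases hlong with ⟨hu | hv, hlt⟩
    · obtain ⟨u₁, u₂, rfl, hu₁⟩ := u.exists_eq_mul_length_eq hu
      rw [FreeMonoid.length_mul, hu₁] at h hm
      rw [show (u₁ * u₂, v) = (u₁, 1) * (u₂, v) by simp]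
      exact mul_mem (Submonoid.subset_closure (mk_one_mem_genSet hn hu₁))
        (ih _ (by omega) ((Nat.mul_add_self_modEq p n _).symm.trans h) rfl)
    · obtain ⟨v₁, v₂, rfl, hv₁⟩ := v.exists_eq_mul_length_eq hv
      rw [FreeMonoid.length_mul, hv₁] at h hm
      rw [show (u, v₁ * v₂) = (1, v₁) * (u, v₂) by simp]
      exact mul_mem (Submonoid.subset_closure (one_mk_mem_genSet hn hv₁))
        (ih _ (by omega) (h.trans (Nat.mul_add_self_modEq q n _)) rfl)

end genSet

theorem stmt4_general {A B F : Type} [Finite A] [Finite B] [Group F]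
    (n p q : ℕ) (x : F)
    (hgen : ∀ y : F, ∃ k : ℕ, x ^ k = y) (hord : orderOf x = n)
    (φ : FreeMonoid A →* F) (ψ : FreeMonoid B →* F)
    (hφ : ∀ a : A, φ (FreeMonoid.of a) = x ^ p)
    (hψ : ∀ b : B, ψ (FreeMonoid.of b) = x ^ q) :
    (∀ uv : FreeMonoid A × FreeMonoid B,
        uv ∈ fiberSubmonoid φ ψ ↔ p * uv.1.length ≡ q * uv.2.length [MOD n]) ∧
    (genSet A B n p q).Finite ∧
    Submonoid.closure (genSet A B n p q) = fiberSubmonoid φ ψ := by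
  have hmem := hord ▸ mem_fiberSubmonoid_iff_modEq hφ hψ
  have hn : n ≠ 0 := hord ▸ orderOf_ne_zero_of_forall_exists_pow_eq hgen
  refine ⟨hmem, genSet_finite, le_antisymm ?_ ?_⟩
  · exact Submonoid.closure_le.2 fun uv huv => (hmem uv).2 huv.1
  · exact fun uv huv => mem_closure_genSet hn ((hmem uv).1 huv)

/-- for the cyclic group `F` of order `n` with generator `x`, and
homomorphisms sending every letter of `A` to `x^p` and every letter of `B` to
`x^q` (with `1 ≤ p,q ≤ n` coprime to `n`), the fiber product is
`{(u,v) : p·|u| ≡ q·|v| (mod n)}` and it is generated by the finite set `genSet`. -/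
theorem stmt4 {A B F : Type} [Finite A] [Finite B] [Group F]
    (n p q : ℕ) (x : F)
    (hgen : ∀ y : F, ∃ k : ℕ, x ^ k = y) (hord : orderOf x = n)
    (hp1 : 1 ≤ p) (hpn : p ≤ n) (hq1 : 1 ≤ q) (hqn : q ≤ n)
    (hpcop : Nat.gcd p n = 1) (hqcop : Nat.gcd q n = 1)
    (φ : FreeMonoid A →* F) (ψ : FreeMonoid B →* F)
    (hφ : ∀ a : A, φ (FreeMonoid.of a) = x ^ p)
    (hψ : ∀ b : B, ψ (FreeMonoid.of b) = x ^ q) :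
    (∀ uv : FreeMonoid A × FreeMonoid B,
        uv ∈ fiberSubmonoid φ ψ ↔ p * uv.1.length ≡ q * uv.2.length [MOD n]) ∧
    (genSet A B n p q).Finite ∧
    Submonoid.closure (genSet A B n p q) = fiberSubmonoid φ ψ :=
  stmt4_general n p q x hgen hord φ ψ hφ hψ
end

section
/- Let A and B be finite alphabets, let F be a finite monoid, and let φ : A* → F and ψ : B* → F be surjective monoid homomorphisms. If the fiber product Π(φ,ψ) = {(u,v) ∈ A* × B* : φ(u) = ψ(v)} is finitely generated as a monoid, then it is finitely presented; that is, there exist a finite set Γ and a finite set R ⊆ Γ* × Γ* of pairs of words such that Π(φ,ψ) is isomorphic as a monoid to the quotient of the free monoid Γ* by the congruence generated by R. -/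
set_option linter.unusedSectionVars false
set_option maxHeartbeats 1000000

namespace Stmt5

open FreeMonoid

variable {F : Type} [Monoid F]

/-- comparability of two factorizations in a free monoid -/
lemma mul_eq_mul_cases {α : Type*} {a b c d : FreeMonoid α} (h : a * b = c * d) :
    (∃ s, c = a * s ∧ b = s * d) ∨ (∃ s, a = c * s ∧ d = s * b) := by
  have h' : a.toList ++ b.toList = c.toList ++ d.toList := by
    rw [← toList_mul, ← toList_mul, h]
  rcases List.append_eq_append_iff.1 h' with ⟨s, hs1, hs2⟩ | ⟨s, hs1, hs2⟩
  · left; exact ⟨ofList s, by apply toList.injective; simpa using hs1,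
      by apply toList.injective; simpa using hs2⟩
  · right; exact ⟨ofList s, by apply toList.injective; simpa using hs1,
      by apply toList.injective; simpa using hs2⟩

lemma freemonoid_mul_eq_one {α : Type*} {a b : FreeMonoid α} (h : a * b = 1) :
    a = 1 ∧ b = 1 := by
  have h' : a.toList ++ b.toList = [] := by rw [← toList_mul, h]; rfl
  rcases List.append_eq_nil_iff.1 h' with ⟨h1, h2⟩
  exact ⟨toList.injective h1, toList.injective h2⟩

lemma length_pos_of_ne_one {α : Type*} {a : FreeMonoid α} (h : a ≠ 1) : 0 < a.length := by
  rcases Nat.eq_zero_or_pos a.length with h0 | h0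
  · exact absurd (FreeMonoid.length_eq_zero.1 h0) h
  · exact h0

section FiniteMonoid

variable [Finite F]

lemma right_inv_of_left {x y : F} (h : x * y = 1) : y * x = 1 := by
  have hsurj : Function.Surjective (fun z : F => x * z) := by
    intro z
    exact ⟨y * z, by simp only []; rw [← mul_assoc, h, one_mul]⟩
  have hinj : Function.Injective (fun z : F => x * z) :=
    Finite.injective_iff_surjective.2 hsurj
  have : x * (y * x) = x * 1 := by rw [← mul_assoc, h, one_mul, mul_one]
  exact hinj this

lemma pow_stab {f : F} {i p : ℕ} (hip : f ^ (i + p) = f ^ i) :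
    ∀ t m, i ≤ m → f ^ (m + t * p) = f ^ m := by
  intro t
  induction t with
  | zero => intro m _; simp
  | succ t ih =>
    intro m hm
    have h1 : f ^ (m + p) = f ^ m := by
      have : f ^ (m + p) = f ^ (m - i) * f ^ (i + p) := by
        rw [← pow_add]
        congr 1
        omega
      rw [this, hip, ← pow_add]
      congr 1
      omega
    calc f ^ (m + (t + 1) * p) = f ^ (m + p + t * p) := by ring_nf
      _ = f ^ (m + p) := ih (m + p) (by omega)
      _ = f ^ m := h1

lemma exists_idem_pow (f : F) : ∃ n, 0 < n ∧ f ^ n * f ^ n = f ^ n := by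
  obtain ⟨i, j, hij, hfij⟩ := Finite.exists_ne_map_eq_of_infinite (fun n : ℕ => f ^ n)
  rcases Nat.lt_or_ge i j with hlt | hge
  · have hip : f ^ (i + (j - i)) = f ^ i := by
      rw [show i + (j - i) = j by omega]; exact hfij.symm
    set p := j - i with hp
    have hp0 : 0 < p := by omega
    refine ⟨(i + 1) * p, by positivity, ?_⟩
    rw [← pow_add]
    exact pow_stab hip (i + 1) ((i + 1) * p) (by nlinarith)
  · have hlt : j < i := by omega
    have hip : f ^ (j + (i - j)) = f ^ j := by
      rw [show j + (i - j) = i by omega]; exact hfij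
    set p := i - j with hp
    have hp0 : 0 < p := by omega
    refine ⟨(j + 1) * p, by positivity, ?_⟩
    rw [← pow_add]
    exact pow_stab hip (j + 1) ((j + 1) * p) (by nlinarith)

end FiniteMonoid

section Words

variable {C : Type} (χ : FreeMonoid C →* F)

/-- no nonempty prefix lies in the kernel -/
def NR (m : FreeMonoid C) : Prop := ∀ p q : FreeMonoid C, m = p * q → p ≠ 1 → χ p ≠ 1

/-- first-return words: kernel, nonempty, no proper nonempty kernel prefix -/
def FR (c : FreeMonoid C) : Prop :=
  χ c = 1 ∧ c ≠ 1 ∧ ∀ p q : FreeMonoid C, c = p * q → p ≠ 1 → q ≠ 1 → χ p ≠ 1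

lemma NR_one : NR χ (1 : FreeMonoid C) := by
  intro p q h hp
  rcases freemonoid_mul_eq_one h.symm with ⟨h1, _⟩
  exact absurd h1 hp

lemma exists_decomp (u : FreeMonoid C) : ∃ k m, u = k * m ∧ χ k = 1 ∧ NR χ m := by
  classical
  generalize hn : u.length = n
  induction n using Nat.strong_induction_on generalizing u with
  | _ n ih =>
    by_cases hu : NR χ u
    · exact ⟨1, u, (one_mul u).symm, map_one χ, hu⟩
    · simp only [NR, not_forall, not_not] at hu
      obtain ⟨p, q, hpq, hp, hχp⟩ := hu
      have hlt : q.length < n := by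
        have : u.length = p.length + q.length := by rw [hpq, length_mul]
        have := length_pos_of_ne_one hp
        omega
      obtain ⟨k, m, h1, h2, h3⟩ := ih q.length hlt q rfl
      exact ⟨p * k, m, by rw [hpq, h1, mul_assoc], by rw [map_mul, hχp, h2, one_mul], h3⟩

/-- head first-return factorization of a nonempty kernel word -/
lemma exists_FR_head {k : FreeMonoid C} (hk : χ k = 1) (hk1 : k ≠ 1) :
    ∃ c k', FR χ c ∧ k = c * k' ∧ χ k' = 1 := by
  classical
  generalize hn : k.length = n
  induction n using Nat.strong_induction_on generalizing k with
  | _ n ih =>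
    by_cases hall : ∀ p q : FreeMonoid C, k = p * q → p ≠ 1 → q ≠ 1 → χ p ≠ 1
    · exact ⟨k, 1, ⟨hk, hk1, hall⟩, (mul_one k).symm, map_one χ⟩
    · simp only [not_forall, not_not] at hall
      obtain ⟨p, q, hpq, hp, hq, hχp⟩ := hall
      have hχq : χ q = 1 := by
        have := hk
        rw [hpq, map_mul, hχp, one_mul] at this
        exact this
      have hlt : p.length < n := by
        have : k.length = p.length + q.length := by rw [hpq, length_mul]
        have := length_pos_of_ne_one hq
        omega
      obtain ⟨c, p', hc, h1, h2⟩ := ih p.length hlt hχp hp rfl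
      exact ⟨c, p' * q, hc, by rw [hpq, h1, mul_assoc],
        by rw [map_mul, h2, hχq, one_mul]⟩

/-- factorization of kernel words into first-return words -/
lemma exists_FR_list {k : FreeMonoid C} (hk : χ k = 1) :
    ∃ l : List {c : FreeMonoid C // FR χ c}, k = (l.map (·.val)).prod := by
  classical
  generalize hn : k.length = n
  induction n using Nat.strong_induction_on generalizing k with
  | _ n ih =>
    by_cases hk1 : k = 1
    · exact ⟨[], by simp [hk1]⟩
    · obtain ⟨c, k', hc, h1, h2⟩ := exists_FR_head χ hk hk1
      have hlt : k'.length < n := by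
        have : k.length = c.length + k'.length := by rw [h1, length_mul]
        have := length_pos_of_ne_one hc.2.1
        omega
      obtain ⟨l, hl⟩ := ih k'.length hlt h2 rfl
      refine ⟨⟨c, hc⟩ :: l, ?_⟩
      rw [List.map_cons, List.prod_cons, ← hl, h1]

/-- uniqueness of the kernel/non-returning decomposition -/
lemma decomp_unique {k m k' m' : FreeMonoid C} (h : k * m = k' * m')
    (hk : χ k = 1) (hk' : χ k' = 1) (hm : NR χ m) (hm' : NR χ m') :
    k = k' ∧ m = m' := by
  rcases mul_eq_mul_cases h with ⟨s, hs1, hs2⟩ | ⟨s, hs1, hs2⟩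
  · have hχs : χ s = 1 := by
      have := hk'; rw [hs1, map_mul, hk, one_mul] at this; exact this
    have : s = 1 := by
      by_contra hs
      exact hm s m' hs2 hs hχs
    subst this
    constructor
    · rw [hs1, mul_one]
    · rw [hs2, one_mul]
  · have hχs : χ s = 1 := by
      have := hk; rw [hs1, map_mul, hk', one_mul] at this; exact this
    have : s = 1 := by
      by_contra hs
      exact hm' s _ hs2 hs hχs
    subst this
    constructor
    · rw [hs1, mul_one]
    · rw [hs2, one_mul]

lemma FR_head_eq {c d : {c : FreeMonoid C // FR χ c}} {P Q : FreeMonoid C}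
    (h : c.val * P = d.val * Q) : c = d := by
  rcases mul_eq_mul_cases h with ⟨s, hs1, _⟩ | ⟨s, hs1, _⟩
  · have hχs : χ s = 1 := by
      have h1 := d.2.1
      rw [hs1, map_mul, c.2.1, one_mul] at h1
      exact h1
    have hs : s = 1 := by
      by_contra hs
      exact d.2.2.2 c.val s hs1 c.2.2.1 hs c.2.1
    apply Subtype.ext
    rw [hs1, hs, mul_one]
  · have hχs : χ s = 1 := by
      have h1 := c.2.1
      rw [hs1, map_mul, d.2.1, one_mul] at h1
      exact h1
    have hs : s = 1 := by
      by_contra hs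
      exact c.2.2.2 d.val s hs1 d.2.2.1 hs d.2.1
    apply Subtype.ext
    rw [hs1, hs, mul_one]

lemma FR_list_unique : ∀ (l l' : List {c : FreeMonoid C // FR χ c}),
    (l.map (·.val)).prod = (l'.map (·.val)).prod → l = l' := by
  intro l
  induction l with
  | nil =>
    intro l' h
    cases l' with
    | nil => rfl
    | cons d l'' =>
      exfalso
      simp only [List.map_nil, List.prod_nil, List.map_cons, List.prod_cons] at h
      rcases freemonoid_mul_eq_one h.symm with ⟨h1, _⟩
      exact d.2.2.1 h1
  | cons c l ih =>
    intro l' h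
    cases l' with
    | nil =>
      exfalso
      simp only [List.map_nil, List.prod_nil, List.map_cons, List.prod_cons] at h
      rcases freemonoid_mul_eq_one h with ⟨h1, _⟩
      exact c.2.2.1 h1
    | cons d l'' =>
      simp only [List.map_cons, List.prod_cons] at h
      have hcd : c = d := FR_head_eq χ h
      subst hcd
      have h2 := mul_left_cancel h
      rw [ih l'' h2]

end Words

section Presentation

variable {A B : Type} (φ : FreeMonoid A →* F) (ψ : FreeMonoid B →* F)

abbrev CA := {c : FreeMonoid A // FR φ c}
abbrev CB := {c : FreeMonoid B // FR ψ c}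
abbrev TT := {t : FreeMonoid A × FreeMonoid B // φ t.1 = ψ t.2 ∧ NR φ t.1 ∧ NR ψ t.2 ∧ t ≠ 1}
abbrev Gam := (CA φ ⊕ CB ψ) ⊕ TT φ ψ

def emb : Gam φ ψ → (fiberSubmonoid φ ψ) := fun γ =>
  match γ with
  | .inl (.inl c) => ⟨(c.val, 1), by
      show φ c.val = ψ 1
      rw [c.2.1, map_one]⟩
  | .inl (.inr c) => ⟨(1, c.val), by
      show φ 1 = ψ c.val
      rw [c.2.1, map_one]⟩
  | .inr t => ⟨t.val, t.2.1⟩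

def piG : FreeMonoid (Gam φ ψ) →* (fiberSubmonoid φ ψ) := FreeMonoid.lift (emb φ ψ)

def fCA (c : CA φ) : Gam φ ψ := Sum.inl (Sum.inl c)
def fCB (c : CB ψ) : Gam φ ψ := Sum.inl (Sum.inr c)
def fT (t : TT φ ψ) : Gam φ ψ := Sum.inr t
def fC (γ : CA φ ⊕ CB ψ) : Gam φ ψ := Sum.inl γ

def optW (tp : Option (TT φ ψ)) : FreeMonoid (Gam φ ψ) := ofList (tp.toList.map Sum.inr)

def wd (la : List (CA φ)) (lb : List (CB ψ)) (tp : Option (TT φ ψ)) : FreeMonoid (Gam φ ψ) :=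
  ofList (la.map (fCA φ ψ) ++ lb.map (fCB φ ψ)) * optW φ ψ tp

def pA (la : List (CA φ)) : FreeMonoid A := (la.map (·.val)).prod
def pB (lb : List (CB ψ)) : FreeMonoid B := (lb.map (·.val)).prod
def tval (tp : Option (TT φ ψ)) : FreeMonoid A × FreeMonoid B := (tp.map (·.val)).getD 1

lemma piG_laW (la : List (CA φ)) :
    (piG φ ψ (ofList (la.map (fCA φ ψ)))).val = (pA φ la, 1) := by
  induction la with
  | nil => simp [pA, ofList_nil, piG]; rfl
  | cons c la ih =>
    rw [List.map_cons, ofList_cons, map_mul]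
    have h1 : piG φ ψ (of (fCA φ ψ c)) = emb φ ψ (fCA φ ψ c) := FreeMonoid.lift_eval_of _ _
    rw [h1]
    have : (pA φ (c :: la)) = c.val * pA φ la := by
      simp [pA]
    rw [this]
    rw [Submonoid.coe_mul, ih]
    rfl

lemma piG_lbW (lb : List (CB ψ)) :
    (piG φ ψ (ofList (lb.map (fCB φ ψ)))).val = (1, pB ψ lb) := by
  induction lb with
  | nil => simp [pB, ofList_nil, piG]; rfl
  | cons c lb ih =>
    rw [List.map_cons, ofList_cons, map_mul]
    have h1 : piG φ ψ (of (fCB φ ψ c)) = emb φ ψ (fCB φ ψ c) := FreeMonoid.lift_eval_of _ _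
    rw [h1]
    have : (pB ψ (c :: lb)) = c.val * pB ψ lb := by
      simp [pB]
    rw [this]
    rw [Submonoid.coe_mul, ih]
    rfl

lemma piG_optW (tp : Option (TT φ ψ)) :
    (piG φ ψ (optW φ ψ tp)).val = tval φ ψ tp := by
  cases tp with
  | none => simp [optW, tval, ofList_nil, piG]
  | some t =>
    show (piG φ ψ (ofList [Sum.inr t])).val = _
    rw [ofList_singleton]
    have h1 : piG φ ψ (of (Sum.inr t)) = emb φ ψ (Sum.inr t) := FreeMonoid.lift_eval_of _ _
    rw [h1]
    rfl

lemma piG_wd (la : List (CA φ)) (lb : List (CB ψ)) (tp : Option (TT φ ψ)) :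
    (piG φ ψ (wd φ ψ la lb tp)).val
      = (pA φ la * (tval φ ψ tp).1, pB ψ lb * (tval φ ψ tp).2) := by
  rw [wd, ofList_append, map_mul, map_mul, Submonoid.coe_mul, Submonoid.coe_mul,
    piG_laW, piG_lbW, piG_optW]
  ext
  · show pA φ la * 1 * (tval φ ψ tp).1 = _
    rw [mul_one]
  · show 1 * pB ψ lb * (tval φ ψ tp).2 = _
    rw [one_mul]

lemma pA_ker (la : List (CA φ)) : φ (pA φ la) = 1 := by
  induction la with
  | nil => simp [pA]
  | cons c la ih =>
    have : (pA φ (c :: la)) = c.val * pA φ la := by simp [pA]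
    rw [this, map_mul, c.2.1, one_mul, ih]

lemma pB_ker (lb : List (CB ψ)) : ψ (pB ψ lb) = 1 := by
  induction lb with
  | nil => simp [pB]
  | cons c lb ih =>
    have : (pB ψ (c :: lb)) = c.val * pB ψ lb := by simp [pB]
    rw [this, map_mul, c.2.1, one_mul, ih]

lemma tval_NR1 (tp : Option (TT φ ψ)) : NR φ (tval φ ψ tp).1 := by
  cases tp with
  | none => exact NR_one φ
  | some t => exact t.2.2.1

lemma tval_NR2 (tp : Option (TT φ ψ)) : NR ψ (tval φ ψ tp).2 := by
  cases tp with
  | none => exact NR_one ψ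
  | some t => exact t.2.2.2.1

lemma exists_canonical (p : fiberSubmonoid φ ψ) :
    ∃ la lb tp, piG φ ψ (wd φ ψ la lb tp) = p := by
  classical
  obtain ⟨kA, mA, hu, hkA, hmA⟩ := exists_decomp φ (p.val.1)
  obtain ⟨kB, mB, hv, hkB, hmB⟩ := exists_decomp ψ (p.val.2)
  have hmemP : φ p.val.1 = ψ p.val.2 := p.2
  have hm : φ mA = ψ mB := by
    have h1 : φ p.val.1 = φ mA := by rw [hu, map_mul, hkA, one_mul]
    have h2 : ψ p.val.2 = ψ mB := by rw [hv, map_mul, hkB, one_mul]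
    rw [← h1, ← h2, hmemP]
  obtain ⟨la, hla⟩ := exists_FR_list φ hkA
  obtain ⟨lb, hlb⟩ := exists_FR_list ψ hkB
  by_cases hone : (mA, mB) = ((1 : FreeMonoid A), (1 : FreeMonoid B))
  · refine ⟨la, lb, none, ?_⟩
    apply Subtype.ext
    rw [piG_wd]
    have h1 : mA = 1 := congrArg Prod.fst hone
    have h2 : mB = 1 := congrArg Prod.snd hone
    show (pA φ la * 1, pB ψ lb * 1) = p.val
    rw [mul_one, mul_one]
    have : p.val = (p.val.1, p.val.2) := rfl
    rw [this, hu, hv, h1, h2, mul_one, mul_one, hla, hlb]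
    rfl
  · refine ⟨la, lb, some ⟨(mA, mB), hm, hmA, hmB, hone⟩, ?_⟩
    apply Subtype.ext
    rw [piG_wd]
    show (pA φ la * mA, pB ψ lb * mB) = p.val
    have : p.val = (p.val.1, p.val.2) := rfl
    rw [this, hu, hv, hla, hlb]
    rfl

lemma wd_inj {la la' : List (CA φ)} {lb lb' : List (CB ψ)} {tp tp' : Option (TT φ ψ)}
    (h : piG φ ψ (wd φ ψ la lb tp) = piG φ ψ (wd φ ψ la' lb' tp')) :
    la = la' ∧ lb = lb' ∧ tp = tp' := by
  have hval := congrArg Subtype.val h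
  rw [piG_wd, piG_wd] at hval
  have h1 : pA φ la * (tval φ ψ tp).1 = pA φ la' * (tval φ ψ tp').1 :=
    congrArg Prod.fst hval
  have h2 : pB ψ lb * (tval φ ψ tp).2 = pB ψ lb' * (tval φ ψ tp').2 :=
    congrArg Prod.snd hval
  obtain ⟨hA1, hA2⟩ := decomp_unique φ h1 (pA_ker φ la) (pA_ker φ la')
    (tval_NR1 φ ψ tp) (tval_NR1 φ ψ tp')
  obtain ⟨hB1, hB2⟩ := decomp_unique ψ h2 (pB_ker ψ lb) (pB_ker ψ lb')
    (tval_NR2 φ ψ tp) (tval_NR2 φ ψ tp')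
  refine ⟨FR_list_unique φ la la' hA1, FR_list_unique ψ lb lb' hB1, ?_⟩
  cases tp with
  | none =>
    cases tp' with
    | none => rfl
    | some t' =>
      exfalso
      apply t'.2.2.2.2
      have e1 : (1 : FreeMonoid A) = t'.val.1 := hA2
      have e2 : (1 : FreeMonoid B) = t'.val.2 := hB2
      have : t'.val = (t'.val.1, t'.val.2) := rfl
      rw [this, ← e1, ← e2]
      rfl
  | some t =>
    cases tp' with
    | none =>
      exfalso
      apply t.2.2.2.2
      have e1 : t.val.1 = (1 : FreeMonoid A) := hA2
      have e2 : t.val.2 = (1 : FreeMonoid B) := hB2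
      have : t.val = (t.val.1, t.val.2) := rfl
      rw [this, e1, e2]
      rfl
    | some t' =>
      congr 1
      apply Subtype.ext
      have : t.val = (t.val.1, t.val.2) := rfl
      rw [this]
      have e1 : t.val.1 = t'.val.1 := hA2
      have e2 : t.val.2 = t'.val.2 := hB2
      rw [e1, e2]

lemma exists_canonical' (p : fiberSubmonoid φ ψ) :
    ∃ w, (∃ la lb tp, w = wd φ ψ la lb tp) ∧ piG φ ψ w = p := by
  obtain ⟨la, lb, tp, h⟩ := exists_canonical φ ψ p
  exact ⟨wd φ ψ la lb tp, ⟨la, lb, tp, rfl⟩, h⟩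

noncomputable def nf (p : fiberSubmonoid φ ψ) : FreeMonoid (Gam φ ψ) :=
  Classical.choose (exists_canonical' φ ψ p)

lemma nf_canonical (p : fiberSubmonoid φ ψ) :
    ∃ la lb tp, nf φ ψ p = wd φ ψ la lb tp :=
  (Classical.choose_spec (exists_canonical' φ ψ p)).1

lemma piG_nf (p : fiberSubmonoid φ ψ) : piG φ ψ (nf φ ψ p) = p :=
  (Classical.choose_spec (exists_canonical' φ ψ p)).2

noncomputable def RS : Set (FreeMonoid (Gam φ ψ) × FreeMonoid (Gam φ ψ)) :=
  Set.range (fun q : Gam φ ψ × Gam φ ψ =>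
    (of q.1 * of q.2, nf φ ψ (piG φ ψ (of q.1 * of q.2))))

lemma rel_basic (γ₁ γ₂ : Gam φ ψ) :
    (conGen fun u v => (u, v) ∈ RS φ ψ)
      (of γ₁ * of γ₂) (nf φ ψ (piG φ ψ (of γ₁ * of γ₂))) :=
  ConGen.Rel.of _ _ ⟨(γ₁, γ₂), rfl⟩

lemma cg_le_ker : (conGen fun u v => (u, v) ∈ RS φ ψ) ≤ Con.ker (piG φ ψ) := by
  apply Con.conGen_le.2
  rintro x y ⟨q, hq⟩
  have hx : x = of q.1 * of q.2 := (congrArg Prod.fst hq).symm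
  have hy : y = nf φ ψ (piG φ ψ (of q.1 * of q.2)) := (congrArg Prod.snd hq).symm
  rw [Con.ker_rel, hx, hy, piG_nf]

lemma cg_piG {w w' : FreeMonoid (Gam φ ψ)}
    (h : (conGen fun u v => (u, v) ∈ RS φ ψ) w w') : piG φ ψ w = piG φ ψ w' :=
  (Con.ker_rel _).1 (Con.le_def.1 (cg_le_ker φ ψ) h)

lemma rel2 {w w' : FreeMonoid (Gam φ ψ)} (γ₁ γ₂ γ₁' γ₂' : Gam φ ψ)
    (hw : w = of γ₁ * of γ₂) (hw' : w' = of γ₁' * of γ₂')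
    (h : piG φ ψ w = piG φ ψ w') :
    (conGen fun u v => (u, v) ∈ RS φ ψ) w w' := by
  subst hw hw'
  have h1 := rel_basic φ ψ γ₁ γ₂
  have h2 := rel_basic φ ψ γ₁' γ₂'
  rw [h] at h1
  exact h1.trans h2.symm

def cW (L : List (CA φ ⊕ CB ψ)) : FreeMonoid (Gam φ ψ) := ofList (L.map Sum.inl)

lemma cW_append (L L' : List (CA φ ⊕ CB ψ)) :
    cW φ ψ (L ++ L') = cW φ ψ L * cW φ ψ L' := by
  rw [cW, cW, cW, List.map_append, ofList_append]

lemma wd_eq (la : List (CA φ)) (lb : List (CB ψ)) (tp : Option (TT φ ψ)) :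
    wd φ ψ la lb tp = cW φ ψ (la.map Sum.inl ++ lb.map Sum.inr) * optW φ ψ tp := by
  rw [wd, cW, List.map_append, List.map_map, List.map_map]
  rfl

lemma piG_emb_comm (c : CA φ) (c' : CB ψ) :
    piG φ ψ (of (fCB φ ψ c') * of (fCA φ ψ c))
      = piG φ ψ (of (fCA φ ψ c) * of (fCB φ ψ c')) := by
  apply Subtype.ext
  rw [map_mul, map_mul, Submonoid.coe_mul, Submonoid.coe_mul]
  have e1 : piG φ ψ (of (fCB φ ψ c')) = emb φ ψ (fCB φ ψ c') := FreeMonoid.lift_eval_of _ _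
  have e2 : piG φ ψ (of (fCA φ ψ c)) = emb φ ψ (fCA φ ψ c) := FreeMonoid.lift_eval_of _ _
  rw [e1, e2]
  show ((1, c'.val) * (c.val, 1) : FreeMonoid A × FreeMonoid B)
      = (c.val, 1) * (1, c'.val)
  ext
  · show 1 * c.val = c.val * 1
    rw [one_mul, mul_one]
  · show c'.val * 1 = 1 * c'.val
    rw [one_mul, mul_one]

lemma swapBA (c' : CB ψ) (la : List (CA φ)) :
    (conGen fun u v => (u, v) ∈ RS φ ψ)
      (of (fCB φ ψ c') * ofList (la.map (fCA φ ψ)))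
      (ofList (la.map (fCA φ ψ)) * of (fCB φ ψ c')) := by
  set c := conGen fun u v : FreeMonoid (Gam φ ψ) => (u, v) ∈ RS φ ψ with hc
  induction la with
  | nil =>
    show c (of (fCB φ ψ c') * 1) (1 * of (fCB φ ψ c'))
    rw [mul_one, one_mul]
    exact c.refl _
  | cons a la ih =>
    rw [List.map_cons, ofList_cons]
    have h1 : c (of (fCB φ ψ c') * of (fCA φ ψ a)) (of (fCA φ ψ a) * of (fCB φ ψ c')) :=
      rel2 φ ψ _ _ _ _ rfl rfl (piG_emb_comm φ ψ a c')
    set L := ofList (la.map (fCA φ ψ)) with hL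
    show c (of (fCB φ ψ c') * (of (fCA φ ψ a) * L)) (of (fCA φ ψ a) * L * of (fCB φ ψ c'))
    have h2 : c ((of (fCB φ ψ c') * of (fCA φ ψ a)) * L)
        ((of (fCA φ ψ a) * of (fCB φ ψ c')) * L) := c.mul h1 (c.refl _)
    have h3 : c (of (fCA φ ψ a) * (of (fCB φ ψ c') * L))
        (of (fCA φ ψ a) * (L * of (fCB φ ψ c'))) := c.mul (c.refl _) ih
    have h3' : c ((of (fCA φ ψ a) * of (fCB φ ψ c')) * L)
        (of (fCA φ ψ a) * (L * of (fCB φ ψ c'))) := by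
      rw [mul_assoc]; exact h3
    have e1 : of (fCB φ ψ c') * (of (fCA φ ψ a) * L)
        = (of (fCB φ ψ c') * of (fCA φ ψ a)) * L := (mul_assoc _ _ _).symm
    have e3 : of (fCA φ ψ a) * L * of (fCB φ ψ c')
        = of (fCA φ ψ a) * (L * of (fCB φ ψ c')) := mul_assoc _ _ _
    rw [e1, e3]
    exact h2.trans h3'

lemma sortCodes (L : List (CA φ ⊕ CB ψ)) :
    ∃ (la : List (CA φ)) (lb : List (CB ψ)), (conGen fun u v => (u, v) ∈ RS φ ψ)
      (cW φ ψ L) (cW φ ψ (la.map Sum.inl ++ lb.map Sum.inr)) := by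
  set c := conGen fun u v : FreeMonoid (Gam φ ψ) => (u, v) ∈ RS φ ψ with hc
  induction L with
  | nil => exact ⟨[], [], c.refl _⟩
  | cons γ L ih =>
    obtain ⟨la, lb, ih⟩ := ih
    cases γ with
    | inl a =>
      refine ⟨a :: la, lb, ?_⟩
      have : cW φ ψ (Sum.inl a :: L) = of (fCA φ ψ a) * cW φ ψ L := by
        rw [cW, cW, List.map_cons, ofList_cons]; rfl
      rw [this]
      have h2 : cW φ ψ ((a :: la).map Sum.inl ++ lb.map Sum.inr)
          = of (fCA φ ψ a) * cW φ ψ (la.map Sum.inl ++ lb.map Sum.inr) := by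
        rw [cW, cW, List.map_cons, List.cons_append, List.map_cons, ofList_cons]; rfl
      rw [h2]
      exact c.mul (c.refl _) ih
    | inr b =>
      refine ⟨la, b :: lb, ?_⟩
      have h0 : cW φ ψ (Sum.inr b :: L) = of (fCB φ ψ b) * cW φ ψ L := by
        rw [cW, cW, List.map_cons, ofList_cons]; rfl
      rw [h0]
      have h1 : c (of (fCB φ ψ b) * cW φ ψ L)
          (of (fCB φ ψ b) * cW φ ψ (la.map Sum.inl ++ lb.map Sum.inr)) :=
        c.mul (c.refl _) ih
      have h2 : cW φ ψ (la.map Sum.inl ++ lb.map Sum.inr)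
          = ofList (la.map (fCA φ ψ)) * cW φ ψ (lb.map Sum.inr) := by
        rw [cW_append]
        congr 1
        rw [cW, List.map_map]
        rfl
      have h3 : c (of (fCB φ ψ b) * cW φ ψ (la.map Sum.inl ++ lb.map Sum.inr))
          (ofList (la.map (fCA φ ψ)) * (of (fCB φ ψ b) * cW φ ψ (lb.map Sum.inr))) := by
        rw [h2, ← mul_assoc, ← mul_assoc]
        exact c.mul (swapBA φ ψ b la) (c.refl _)
      have h4a : cW φ ψ (la.map Sum.inl) = ofList (la.map (fCA φ ψ)) := by
        rw [cW, List.map_map]; rfl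
      have h4b : cW φ ψ ((b :: lb).map Sum.inr)
          = of (fCB φ ψ b) * cW φ ψ (lb.map Sum.inr) := by
        rw [cW, List.map_cons, List.map_cons, ofList_cons]; rfl
      have h4 : cW φ ψ (la.map Sum.inl ++ (b :: lb).map Sum.inr)
          = ofList (la.map (fCA φ ψ)) * (of (fCB φ ψ b) * cW φ ψ (lb.map Sum.inr)) := by
        rw [cW_append, h4a, h4b]
      rw [h4]
      exact h1.trans h3

lemma optW_none : optW φ ψ none = 1 := rfl

lemma optW_some (t : TT φ ψ) : optW φ ψ (some t) = of (fT φ ψ t) := rfl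

lemma cW_nil : cW φ ψ [] = 1 := rfl

lemma cW_cons (γ : CA φ ⊕ CB ψ) (V : List (CA φ ⊕ CB ψ)) :
    cW φ ψ (γ :: V) = of (fC φ ψ γ) * cW φ ψ V := by
  rw [cW, cW, List.map_cons, ofList_cons]
  rfl

lemma push (t : TT φ ψ) (V : List (CA φ ⊕ CB ψ)) :
    ∃ (C : List (CA φ ⊕ CB ψ)) (tp : Option (TT φ ψ)),
      (conGen fun u v => (u, v) ∈ RS φ ψ)
        (of (fT φ ψ t) * cW φ ψ V) (cW φ ψ C * optW φ ψ tp) := by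
  set c := conGen fun u v : FreeMonoid (Gam φ ψ) => (u, v) ∈ RS φ ψ with hc
  induction V generalizing t with
  | nil =>
    refine ⟨[], some t, ?_⟩
    rw [cW_nil, optW_some, mul_one, one_mul]
    exact c.refl _
  | cons γ V ih =>
    obtain ⟨la2, lb2, tp2, hnf⟩ :=
      nf_canonical φ ψ (piG φ ψ (of (fT φ ψ t) * of (fC φ ψ γ)))
    have hrel := rel_basic φ ψ (fT φ ψ t) (fC φ ψ γ)
    rw [hnf, wd_eq] at hrel
    rw [cW_cons]
    cases tp2 with
    | none =>
      refine ⟨(la2.map Sum.inl ++ lb2.map Sum.inr) ++ V, none, ?_⟩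
      rw [optW_none] at hrel ⊢
      rw [mul_one] at hrel
      rw [cW_append, mul_one, ← mul_assoc]
      exact c.mul hrel (c.refl _)
    | some t2 =>
      obtain ⟨C', tp', h'⟩ := ih t2
      refine ⟨(la2.map Sum.inl ++ lb2.map Sum.inr) ++ C', tp', ?_⟩
      rw [optW_some] at hrel
      have s1 : c (of (fT φ ψ t) * (of (fC φ ψ γ) * cW φ ψ V))
          ((cW φ ψ (la2.map Sum.inl ++ lb2.map Sum.inr) * of (fT φ ψ t2)) * cW φ ψ V) := by
        rw [← mul_assoc]
        exact c.mul hrel (c.refl _)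
      have s2 : c ((cW φ ψ (la2.map Sum.inl ++ lb2.map Sum.inr) * of (fT φ ψ t2)) * cW φ ψ V)
          (cW φ ψ (la2.map Sum.inl ++ lb2.map Sum.inr) * (cW φ ψ C' * optW φ ψ tp')) := by
        rw [mul_assoc]
        exact c.mul (c.refl _) h'
      have e : cW φ ψ ((la2.map Sum.inl ++ lb2.map Sum.inr) ++ C') * optW φ ψ tp'
          = cW φ ψ (la2.map Sum.inl ++ lb2.map Sum.inr) * (cW φ ψ C' * optW φ ψ tp') := by
        rw [cW_append, mul_assoc]
      rw [e]
      exact s1.trans s2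

lemma toCanonical (L : List (Gam φ ψ)) :
    ∃ (la : List (CA φ)) (lb : List (CB ψ)) (tp : Option (TT φ ψ)),
      (conGen fun u v => (u, v) ∈ RS φ ψ) (ofList L) (wd φ ψ la lb tp) := by
  set c := conGen fun u v : FreeMonoid (Gam φ ψ) => (u, v) ∈ RS φ ψ with hc
  induction L with
  | nil =>
    refine ⟨[], [], none, ?_⟩
    have : wd φ ψ [] [] none = 1 := rfl
    rw [this]
    exact c.refl _
  | cons γ L ih =>
    obtain ⟨la, lb, tp, ih⟩ := ih
    have e0 : ofList (γ :: L) = of γ * ofList L := ofList_cons γ L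
    have step1 : c (ofList (γ :: L)) (of γ * wd φ ψ la lb tp) := by
      rw [e0]
      exact c.mul (c.refl _) ih
    rcases γ with (a | b) | t
    · refine ⟨a :: la, lb, tp, ?_⟩
      have e1 : wd φ ψ (a :: la) lb tp = of (fCA φ ψ a) * wd φ ψ la lb tp := by
        rw [wd, wd, List.map_cons, List.cons_append, ofList_cons, mul_assoc]
      rw [e1]
      exact step1
    · refine ⟨la, b :: lb, tp, ?_⟩
      have e1 : wd φ ψ la lb tp
          = (ofList (la.map (fCA φ ψ)) * ofList (lb.map (fCB φ ψ))) * optW φ ψ tp := by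
        rw [wd, ofList_append]
      have s2 : c (of (fCB φ ψ b) * wd φ ψ la lb tp)
          (((ofList (la.map (fCA φ ψ)) * of (fCB φ ψ b)) * ofList (lb.map (fCB φ ψ)))
            * optW φ ψ tp) := by
        rw [e1, ← mul_assoc, ← mul_assoc]
        exact c.mul (c.mul (swapBA φ ψ b la) (c.refl _)) (c.refl _)
      have e2 : wd φ ψ la (b :: lb) tp
          = ((ofList (la.map (fCA φ ψ)) * of (fCB φ ψ b)) * ofList (lb.map (fCB φ ψ)))
            * optW φ ψ tp := by
        rw [wd, List.map_cons, ofList_append, ofList_cons, ← mul_assoc]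
      rw [e2]
      exact step1.trans s2
    · have ewd := wd_eq φ ψ la lb tp
      obtain ⟨C1, tp1, hp⟩ := push φ ψ t (la.map Sum.inl ++ lb.map Sum.inr)
      have s2 : c (of (fT φ ψ t) * wd φ ψ la lb tp)
          ((cW φ ψ C1 * optW φ ψ tp1) * optW φ ψ tp) := by
        rw [ewd, ← mul_assoc]
        exact c.mul hp (c.refl _)
      cases tp1 with
      | none =>
        obtain ⟨la2, lb2, hs⟩ := sortCodes φ ψ C1
        refine ⟨la2, lb2, tp, ?_⟩
        have s3 : c ((cW φ ψ C1 * optW φ ψ none) * optW φ ψ tp)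
            (wd φ ψ la2 lb2 tp) := by
          rw [optW_none, mul_one, wd_eq]
          exact c.mul hs (c.refl _)
        exact (step1.trans s2).trans s3
      | some t1 =>
        cases tp with
        | none =>
          obtain ⟨la2, lb2, hs⟩ := sortCodes φ ψ C1
          refine ⟨la2, lb2, some t1, ?_⟩
          have s3 : c ((cW φ ψ C1 * optW φ ψ (some t1)) * optW φ ψ none)
              (wd φ ψ la2 lb2 (some t1)) := by
            rw [optW_none, mul_one, wd_eq]
            exact c.mul hs (c.refl _)
          exact (step1.trans s2).trans s3
        | some t0 =>
          obtain ⟨la3, lb3, tp3, hnf⟩ :=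
            nf_canonical φ ψ (piG φ ψ (of (fT φ ψ t1) * of (fT φ ψ t0)))
          have hrel := rel_basic φ ψ (fT φ ψ t1) (fT φ ψ t0)
          rw [hnf, wd_eq] at hrel
          obtain ⟨la2, lb2, hs⟩ := sortCodes φ ψ (C1 ++ (la3.map Sum.inl ++ lb3.map Sum.inr))
          refine ⟨la2, lb2, tp3, ?_⟩
          have s3 : c ((cW φ ψ C1 * optW φ ψ (some t1)) * optW φ ψ (some t0))
              (cW φ ψ C1 * (cW φ ψ (la3.map Sum.inl ++ lb3.map Sum.inr) * optW φ ψ tp3)) := by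
            rw [optW_some, optW_some, mul_assoc]
            exact c.mul (c.refl _) hrel
          have s4 : c (cW φ ψ C1 * (cW φ ψ (la3.map Sum.inl ++ lb3.map Sum.inr) * optW φ ψ tp3))
              (wd φ ψ la2 lb2 tp3) := by
            rw [wd_eq, ← mul_assoc, ← cW_append]
            exact c.mul hs (c.refl _)
          exact ((step1.trans s2).trans s3).trans s4

noncomputable def theIso :
    (conGen fun u v : FreeMonoid (Gam φ ψ) => (u, v) ∈ RS φ ψ).Quotient
      ≃* fiberSubmonoid φ ψ := by
  apply MulEquiv.ofBijective
    ((conGen fun u v : FreeMonoid (Gam φ ψ) => (u, v) ∈ RS φ ψ).lift (piG φ ψ) (cg_le_ker φ ψ))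
  constructor
  · intro x y h
    obtain ⟨w, rfl⟩ := Con.mk'_surjective x
    obtain ⟨w', rfl⟩ := Con.mk'_surjective y
    rw [Con.lift_mk', Con.lift_mk'] at h
    obtain ⟨la, lb, tp, h1⟩ := toCanonical φ ψ w.toList
    obtain ⟨la', lb', tp', h2⟩ := toCanonical φ ψ w'.toList
    rw [ofList_toList] at h1 h2
    have hpi : piG φ ψ (wd φ ψ la lb tp) = piG φ ψ (wd φ ψ la' lb' tp') := by
      rw [← cg_piG φ ψ h1, ← cg_piG φ ψ h2, h]
    obtain ⟨e1, e2, e3⟩ := wd_inj φ ψ hpi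
    subst e1; subst e2; subst e3
    have : (conGen fun u v : FreeMonoid (Gam φ ψ) => (u, v) ∈ RS φ ψ) w w' :=
      h1.trans h2.symm
    exact (Con.eq _).2 this
  · intro p
    obtain ⟨la, lb, tp, h⟩ := exists_canonical φ ψ p
    exact ⟨(conGen fun u v : FreeMonoid (Gam φ ψ) => (u, v) ∈ RS φ ψ).mk' (wd φ ψ la lb tp),
      by rw [Con.lift_mk']; exact h⟩

section Finiteness

variable [Finite F]
variable (S : Finset (FreeMonoid A × FreeMonoid B))

/-- the common length bound on generators -/
def DD : ℕ := S.sup fun p => max p.1.length p.2.length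

lemma mem_S_len1 {p : FreeMonoid A × FreeMonoid B} (hp : p ∈ S) : p.1.length ≤ DD S :=
  le_trans (le_max_left _ _) (Finset.le_sup (f := fun p => max p.1.length p.2.length) hp)

lemma mem_S_len2 {p : FreeMonoid A × FreeMonoid B} (hp : p ∈ S) : p.2.length ≤ DD S :=
  le_trans (le_max_right _ _) (Finset.le_sup (f := fun p => max p.1.length p.2.length) hp)

lemma mem_S_fiber (hS : Submonoid.closure (S : Set (FreeMonoid A × FreeMonoid B)) = fiberSubmonoid φ ψ)
    {p : FreeMonoid A × FreeMonoid B} (hp : p ∈ S) : φ p.1 = ψ p.2 := by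
  have : p ∈ fiberSubmonoid φ ψ := by
    rw [← hS]
    exact Submonoid.subset_closure hp
  exact this

/-- every first-return word for `φ` appears as a generator -/
lemma FRA_in_S (hS : Submonoid.closure (S : Set (FreeMonoid A × FreeMonoid B)) = fiberSubmonoid φ ψ)
    {c : FreeMonoid A} (hc : FR φ c) : (c, (1 : FreeMonoid B)) ∈ S := by
  have hmem : (c, (1 : FreeMonoid B)) ∈ fiberSubmonoid φ ψ := by
    show φ c = ψ 1
    rw [hc.1, map_one]
  rw [← hS] at hmem
  obtain ⟨l, hl, hprod⟩ := Submonoid.exists_list_of_mem_closure hmem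
  clear hmem
  induction l generalizing c with
  | nil =>
    exfalso
    apply hc.2.1
    have : ((1 : FreeMonoid A), (1 : FreeMonoid B)) = (c, (1 : FreeMonoid B)) := hprod
    exact (congrArg Prod.fst this).symm
  | cons p l ih =>
    rw [List.prod_cons] at hprod
    have h2 : p.2 * (l.prod).2 = 1 := congrArg Prod.snd hprod
    obtain ⟨hp2, hl2⟩ := freemonoid_mul_eq_one h2
    have h1 : p.1 * (l.prod).1 = c := congrArg Prod.fst hprod
    have hpS : p ∈ (S : Set (FreeMonoid A × FreeMonoid B)) := hl p (List.mem_cons_self)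
    have hφp : φ p.1 = 1 := by
      have := mem_S_fiber φ ψ S hS hpS
      rw [hp2, map_one] at this
      exact this
    by_cases hp1 : p.1 = 1
    · refine ih hc (fun q hq => hl q (List.mem_cons_of_mem p hq)) ?_
      rw [hp1, one_mul] at h1
      have h3 : l.prod = ((l.prod).1, (l.prod).2) := rfl
      rw [h3, hl2, h1]
    · by_cases hq1 : (l.prod).1 = 1
      · have hpc : p = (c, (1 : FreeMonoid B)) := by
          have : p = (p.1, p.2) := rfl
          rw [this, hp2]
          rw [hq1, mul_one] at h1
          rw [h1]
        rw [← hpc]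
        exact hpS
      · exfalso
        exact hc.2.2 p.1 (l.prod).1 h1.symm hp1 hq1 hφp

lemma FRB_in_S (hS : Submonoid.closure (S : Set (FreeMonoid A × FreeMonoid B)) = fiberSubmonoid φ ψ)
    {c : FreeMonoid B} (hc : FR ψ c) : ((1 : FreeMonoid A), c) ∈ S := by
  have hmem : ((1 : FreeMonoid A), c) ∈ fiberSubmonoid φ ψ := by
    show φ 1 = ψ c
    rw [hc.1, map_one]
  rw [← hS] at hmem
  obtain ⟨l, hl, hprod⟩ := Submonoid.exists_list_of_mem_closure hmem
  clear hmem
  induction l generalizing c with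
  | nil =>
    exfalso
    apply hc.2.1
    have : ((1 : FreeMonoid A), (1 : FreeMonoid B)) = ((1 : FreeMonoid A), c) := hprod
    exact (congrArg Prod.snd this).symm
  | cons p l ih =>
    rw [List.prod_cons] at hprod
    have h2 : p.1 * (l.prod).1 = 1 := congrArg Prod.fst hprod
    obtain ⟨hp2, hl2⟩ := freemonoid_mul_eq_one h2
    have h1 : p.2 * (l.prod).2 = c := congrArg Prod.snd hprod
    have hpS : p ∈ (S : Set (FreeMonoid A × FreeMonoid B)) := hl p (List.mem_cons_self)
    have hφp : ψ p.2 = 1 := by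
      have := mem_S_fiber φ ψ S hS hpS
      rw [hp2, map_one] at this
      exact this.symm
    by_cases hp1 : p.2 = 1
    · refine ih hc (fun q hq => hl q (List.mem_cons_of_mem p hq)) ?_
      rw [hp1, one_mul] at h1
      have h3 : l.prod = ((l.prod).1, (l.prod).2) := rfl
      rw [h3, hl2, h1]
    · by_cases hq1 : (l.prod).2 = 1
      · have hpc : p = ((1 : FreeMonoid A), c) := by
          have : p = (p.1, p.2) := rfl
          rw [this, hp2]
          rw [hq1, mul_one] at h1
          rw [h1]
        rw [← hpc]
        exact hpS
      · exfalso
        exact hc.2.2 p.2 (l.prod).2 h1.symm hp1 hq1 hφp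

lemma prefix_of_prefix_le {α : Type*} {l1 l2 l3 : List α} (h1 : l1 <+: l3) (h2 : l2 <+: l3)
    (h : l1.length ≤ l2.length) : l1 <+: l2 := by
  have e1 := List.prefix_iff_eq_take.mp h1
  have e2 := List.prefix_iff_eq_take.mp h2
  rw [List.prefix_iff_eq_take]
  conv_rhs => rw [e2]
  rw [List.take_take, min_eq_left h]
  exact e1

lemma length_list_prod {α : Type*} (L : List (FreeMonoid α)) :
    L.prod.length = (L.map FreeMonoid.length).sum := by
  induction L with
  | nil => rfl
  | cons x L ih =>
    rw [List.prod_cons, length_mul, List.map_cons, List.sum_cons, ih]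

lemma length_pow {α : Type*} (u : FreeMonoid α) (n : ℕ) : (u ^ n).length = n * u.length := by
  induction n with
  | zero => simp
  | succ n ih =>
    rw [pow_succ, length_mul, ih]
    ring

lemma contains_period {α : Type*} {u : FreeMonoid α} (hu : u ≠ 1) :
    ∀ (n : ℕ) (z : FreeMonoid α), z.toList <:+: (u ^ n).toList →
      2 * u.length ≤ z.length → ∃ a b, z = a * (u * b) := by
  have hul : 0 < u.length := length_pos_of_ne_one hu
  intro n
  induction n with
  | zero =>
    intro z hinf hlen
    exfalso
    have h0 : (u ^ 0 : FreeMonoid α).toList = [] := rfl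
    rw [h0] at hinf
    have := List.eq_nil_of_infix_nil hinf
    have hz : z.length = 0 := by
      have : z.toList.length = 0 := by rw [this]; rfl
      exact this
    omega
  | succ n ih =>
    intro z hinf hlen
    obtain ⟨s, t, hst⟩ := hinf
    have hpow : (u ^ (n + 1)).toList = u.toList ++ (u ^ n).toList := by
      rw [pow_succ']
      rfl
    by_cases hs : u.length ≤ s.length
    · have hpre_s : s <+: (u ^ (n + 1)).toList :=
        ⟨z.toList ++ t, by rw [← List.append_assoc, hst]⟩
      have hpre_u : u.toList <+: (u ^ (n + 1)).toList := ⟨(u ^ n).toList, hpow.symm⟩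
      have husps : u.toList <+: s := prefix_of_prefix_le hpre_u hpre_s hs
      obtain ⟨s', rfl⟩ := husps
      apply ih z _ hlen
      refine ⟨s', t, ?_⟩
      rw [hpow] at hst
      have hst' : u.toList ++ (s' ++ z.toList ++ t) = u.toList ++ (u ^ n).toList := by
        rw [← hst]
        simp [List.append_assoc]
      exact List.append_cancel_left hst'
    · push_neg at hs
      have hpre_s : s <+: (u ^ (n + 1)).toList :=
        ⟨z.toList ++ t, by rw [← List.append_assoc, hst]⟩
      have hpre_u : u.toList <+: (u ^ (n + 1)).toList := ⟨(u ^ n).toList, hpow.symm⟩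
      have hsu : s <+: u.toList := prefix_of_prefix_le hpre_s hpre_u (le_of_lt hs)
      obtain ⟨a0, ha0⟩ := hsu
      cases n with
      | zero =>
        exfalso
        have hlen2 := congrArg List.length hst
        rw [hpow] at hlen2
        simp only [List.length_append] at hlen2
        have h1 : ((u ^ 0 : FreeMonoid α)).toList.length = 0 := rfl
        rw [h1] at hlen2
        have hz : z.toList.length = z.length := rfl
        have huu : u.toList.length = u.length := rfl
        omega
      | succ m =>
        have hpow2 : (u ^ (m + 1)).toList = u.toList ++ (u ^ m).toList := by
          rw [pow_succ']
          rfl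
        have hzt : z.toList ++ t = a0 ++ (u.toList ++ (u ^ m).toList) := by
          have hst' : s ++ (z.toList ++ t) = s ++ (a0 ++ (u.toList ++ (u ^ m).toList)) := by
            rw [← List.append_assoc, hst, hpow, hpow2, ← ha0]
            simp [List.append_assoc]
          exact List.append_cancel_left hst'
        have h1 : a0 ++ u.toList <+: z.toList ++ t :=
          ⟨(u ^ m).toList, by rw [hzt]; simp [List.append_assoc]⟩
        have h2 : z.toList <+: z.toList ++ t := List.prefix_append _ _
        have hla0 : a0.length ≤ u.length := by
          have := congrArg List.length ha0
          simp only [List.length_append] at this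
          have huu : u.toList.length = u.length := rfl
          omega
        have h3 : a0 ++ u.toList <+: z.toList := by
          apply prefix_of_prefix_le h1 h2
          simp only [List.length_append]
          have huu : u.toList.length = u.length := rfl
          have hz : z.toList.length = z.length := rfl
          omega
        obtain ⟨b0, hb0⟩ := h3
        refine ⟨ofList a0, ofList b0, ?_⟩
        apply toList.injective
        rw [← hb0]
        simp [toList_mul, List.append_assoc]

lemma block_infix {α : Type*} :
    ∀ (m : List (FreeMonoid α × FreeMonoid α)) (kk : FreeMonoid α),
      (∀ q ∈ m, q.1.toList <:+: ((m.map fun q => q.1 * q.2).prod * kk).toList) ∧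
      kk.toList <:+: ((m.map fun q => q.1 * q.2).prod * kk).toList := by
  intro m
  induction m with
  | nil =>
    intro kk
    constructor
    · intro q hq
      exact absurd hq (List.not_mem_nil)
    · simp
  | cons q0 m ih =>
    intro kk
    have e : ((q0 :: m).map fun q => q.1 * q.2).prod * kk
        = (q0.1 * q0.2) * ((m.map fun q => q.1 * q.2).prod * kk) := by
      rw [List.map_cons, List.prod_cons, mul_assoc]
    have hsuf : ((m.map fun q => q.1 * q.2).prod * kk).toList
        <:+ (((q0 :: m).map fun q => q.1 * q.2).prod * kk).toList := by
      rw [e, toList_mul]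
      exact List.suffix_append _ _
    constructor
    · intro q hq
      rcases List.mem_cons.1 hq with rfl | hq'
      · refine ⟨[], (q.2 * ((m.map fun q => q.1 * q.2).prod * kk)).toList, ?_⟩
        rw [e, toList_mul, toList_mul]
        simp [List.append_assoc]
      · exact ((ih kk).1 q hq').trans hsuf.isInfix
    · exact ((ih kk).2).trans hsuf.isInfix

lemma alt_decomp (DD' : ℕ) :
    ∀ (l : List (FreeMonoid A × FreeMonoid B)),
      (∀ p ∈ l, (p.2 = 1 → φ p.1 = 1) ∧ p.1.length ≤ DD') →
      ∃ (m : List (FreeMonoid A × FreeMonoid A)) (kk : FreeMonoid A),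
        (l.map Prod.fst).prod = (m.map fun q => q.1 * q.2).prod * kk ∧
        φ kk = 1 ∧
        (∀ q ∈ m, φ q.1 = 1 ∧ q.2.length ≤ DD') ∧
        m.length ≤ ((l.map Prod.snd).prod).length := by
  intro l
  induction l with
  | nil =>
    intro _
    refine ⟨[], 1, ?_, map_one φ, ?_, ?_⟩
    · simp
    · intro q hq
      exact absurd hq (List.not_mem_nil)
    · simp
  | cons p l ih =>
    intro hl
    obtain ⟨m, kk, he, hkk, hm, hlen⟩ := ih (fun q hq => hl q (List.mem_cons_of_mem p hq))
    have hp := hl p (List.mem_cons_self)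
    by_cases hp2 : p.2 = 1
    · have hφp : φ p.1 = 1 := hp.1 hp2
      cases m with
      | nil =>
        refine ⟨[], p.1 * kk, ?_, ?_, ?_, ?_⟩
        · rw [List.map_cons, List.prod_cons, he]
          simp [mul_assoc]
        · rw [map_mul, hφp, hkk, one_mul]
        · intro q hq
          exact absurd hq (List.not_mem_nil)
        · simp
      | cons q0 m' =>
        refine ⟨(p.1 * q0.1, q0.2) :: m', kk, ?_, hkk, ?_, ?_⟩
        · rw [List.map_cons, List.prod_cons, he, List.map_cons, List.prod_cons,
            List.map_cons, List.prod_cons]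
          simp [mul_assoc]
        · intro q hq
          rcases List.mem_cons.1 hq with rfl | hq'
          · constructor
            · show φ (p.1 * q0.1) = 1
              rw [map_mul, hφp, one_mul]
              exact (hm q0 (List.mem_cons_self)).1
            · exact (hm q0 (List.mem_cons_self)).2
          · exact hm q (List.mem_cons_of_mem q0 hq')
        · have : ((p :: l).map Prod.snd).prod = p.2 * (l.map Prod.snd).prod := by
            rw [List.map_cons, List.prod_cons]
          rw [this, hp2, one_mul]
          simpa using hlen
    · refine ⟨(1, p.1) :: m, kk, ?_, hkk, ?_, ?_⟩
      · rw [List.map_cons, List.prod_cons, he, List.map_cons, List.prod_cons]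
        simp [mul_assoc]
      · intro q hq
        rcases List.mem_cons.1 hq with rfl | hq'
        · exact ⟨map_one φ, hp.2⟩
        · exact hm q hq'
      · have e2 : ((p :: l).map Prod.snd).prod = p.2 * (l.map Prod.snd).prod := by
          rw [List.map_cons, List.prod_cons]
        rw [e2, length_mul, List.length_cons]
        have := length_pos_of_ne_one hp2
        omega

lemma idem_pow_succ {e : F} (he : e * e = e) : ∀ k, e ^ (k + 1) = e := by
  intro k
  induction k with
  | zero => rw [pow_one]
  | succ k ih => rw [pow_succ, ih, he]

lemma idem_one (hφs : Function.Surjective φ) (hψs : Function.Surjective ψ)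
    (hS : Submonoid.closure (S : Set (FreeMonoid A × FreeMonoid B)) = fiberSubmonoid φ ψ)
    (e : F) (he : e * e = e) : e = 1 := by
  by_contra hne
  obtain ⟨u₀, hu₀⟩ := hφs e
  obtain ⟨v₀, hv₀⟩ := hψs e
  have hu₀1 : u₀ ≠ 1 := by
    rintro rfl
    rw [map_one] at hu₀
    exact hne hu₀.symm
  have hU : 0 < u₀.length := length_pos_of_ne_one hu₀1
  set r := v₀.length with hr
  set n := 2 * (r + 1) + r * DD S + 1 with hn
  have hn1 : n = (n - 1) + 1 := by omega
  have hpow_e : φ (u₀ ^ n) = e := by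
    rw [map_pow, hu₀, hn1]
    exact idem_pow_succ he (n - 1)
  have hmem : (u₀ ^ n, v₀) ∈ fiberSubmonoid φ ψ := by
    show φ (u₀ ^ n) = ψ v₀
    rw [hpow_e, hv₀]
  rw [← hS] at hmem
  obtain ⟨l, hl, hprod⟩ := Submonoid.exists_list_of_mem_closure hmem
  have hl' : ∀ p ∈ l, (p.2 = 1 → φ p.1 = 1) ∧ p.1.length ≤ DD S := by
    intro p hp
    constructor
    · intro h2
      have := mem_S_fiber φ ψ S hS (hl p hp)
      rw [h2, map_one] at this
      exact this
    · exact mem_S_len1 S (hl p hp)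
  obtain ⟨m, kk, he2, hkk, hm, hlen⟩ := alt_decomp φ (DD S) l hl'
  have hfst : (l.map Prod.fst).prod = u₀ ^ n := by
    have h1 := congrArg Prod.fst hprod
    have hx : (MonoidHom.fst (FreeMonoid A) (FreeMonoid B)) l.prod
        = (l.map (MonoidHom.fst (FreeMonoid A) (FreeMonoid B))).prod := map_list_prod _ l
    have hx' : (l.map Prod.fst).prod = (l.prod).1 := by
      rw [show (l.map Prod.fst) = l.map (MonoidHom.fst (FreeMonoid A) (FreeMonoid B)) from rfl,
        ← hx]
      rfl
    rw [hx', h1]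
  have hsnd : (l.map Prod.snd).prod = v₀ := by
    have h1 := congrArg Prod.snd hprod
    have hx : (MonoidHom.snd (FreeMonoid A) (FreeMonoid B)) l.prod
        = (l.map (MonoidHom.snd (FreeMonoid A) (FreeMonoid B))).prod := map_list_prod _ l
    have hx' : (l.map Prod.snd).prod = (l.prod).2 := by
      rw [show (l.map Prod.snd) = l.map (MonoidHom.snd (FreeMonoid A) (FreeMonoid B)) from rfl,
        ← hx]
      rfl
    rw [hx', h1]
  have hblock : ∀ z : FreeMonoid A, φ z = 1 →
      z.toList <:+: (u₀ ^ n).toList → z.length ≤ 2 * u₀.length := by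
    intro z hz hinf
    by_contra hcon
    push_neg at hcon
    obtain ⟨a, b, hab⟩ := contains_period hu₀1 n z hinf (by omega)
    apply hne
    have h1 : φ a * (e * φ b) = 1 := by
      rw [← hu₀, ← map_mul, ← map_mul, ← hab]
      exact hz
    have h2 := right_inv_of_left h1
    have h3 : e * (φ b * φ a) = 1 := by rw [← mul_assoc]; exact h2
    have h4 : (1 : F) = e := by
      calc (1 : F) = e * (φ b * φ a) := h3.symm
        _ = (e * e) * (φ b * φ a) := by rw [he]
        _ = e * (e * (φ b * φ a)) := by rw [mul_assoc]
        _ = e * 1 := by rw [h3]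
        _ = e := mul_one e
    exact h4.symm
  have hq1 : ∀ q ∈ m, q.1.length ≤ 2 * u₀.length := by
    intro q hq
    apply hblock q.1 (hm q hq).1
    have hinf := (block_infix m kk).1 q hq
    rw [← he2, hfst] at hinf
    exact hinf
  have hkk2 : kk.length ≤ 2 * u₀.length := by
    apply hblock kk hkk
    have hinf := (block_infix m kk).2
    rw [← he2, hfst] at hinf
    exact hinf
  have hsum : (u₀ ^ n).length
      = ((m.map fun q => q.1 * q.2).map FreeMonoid.length).sum + kk.length := by
    rw [← hfst, he2, length_mul, length_list_prod]
  have hsum_le : ((m.map fun q => q.1 * q.2).map FreeMonoid.length).sum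
      ≤ m.length * (2 * u₀.length + DD S) := by
    have hb : ∀ x ∈ (m.map fun q => q.1 * q.2).map FreeMonoid.length,
        x ≤ 2 * u₀.length + DD S := by
      intro x hx
      obtain ⟨w, hw, hwx⟩ := List.mem_map.1 hx
      obtain ⟨q, hq, hqw⟩ := List.mem_map.1 hw
      have h1 : w.length = q.1.length + q.2.length := by
        rw [← hqw, length_mul]
      rw [← hwx]
      have := hq1 q hq
      have := (hm q hq).2
      omega
    have := List.sum_le_card_nsmul _ _ hb
    simpa [List.length_map, smul_eq_mul] using this
  have hmr : m.length ≤ r := by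
    rw [hsnd] at hlen
    exact hlen
  have hNlen : (u₀ ^ n).length = n * u₀.length := length_pow u₀ n
  have hfin : n * u₀.length ≤ m.length * (2 * u₀.length + DD S) + 2 * u₀.length := by
    rw [← hNlen, hsum]
    omega
  have h5 : n * u₀.length ≤ r * (2 * u₀.length + DD S) + 2 * u₀.length := by
    have h7 := Nat.mul_le_mul_right (2 * u₀.length + DD S) hmr
    omega
  rw [hn] at h5
  have expand : (2 * (r + 1) + r * DD S + 1) * u₀.length
      = 2 * (r * u₀.length) + 2 * u₀.length + r * DD S * u₀.length + u₀.length := by ring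
  have expand2 : r * (2 * u₀.length + DD S) + 2 * u₀.length
      = 2 * (r * u₀.length) + r * DD S + 2 * u₀.length := by ring
  rw [expand, expand2] at h5
  have h6 : r * DD S ≤ r * DD S * u₀.length := Nat.le_mul_of_pos_right _ hU
  omega

lemma Finv (hφs : Function.Surjective φ) (hψs : Function.Surjective ψ)
    (hS : Submonoid.closure (S : Set (FreeMonoid A × FreeMonoid B)) = fiberSubmonoid φ ψ)
    (f : F) : ∃ g, f * g = 1 ∧ g * f = 1 := by
  obtain ⟨n, hn, hidem⟩ := exists_idem_pow f
  have h1 : f ^ n = 1 := idem_one φ ψ S hφs hψs hS _ hidem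
  refine ⟨f ^ (n - 1), ?_, ?_⟩
  · have : f * f ^ (n - 1) = f ^ ((n - 1) + 1) := (pow_succ' f (n - 1)).symm
    rw [this, Nat.sub_add_cancel hn, h1]
  · have : f ^ (n - 1) * f = f ^ ((n - 1) + 1) := (pow_succ f (n - 1)).symm
    rw [this, Nat.sub_add_cancel hn, h1]

lemma NRA_len (hφs : Function.Surjective φ) (hψs : Function.Surjective ψ)
    (hS : Submonoid.closure (S : Set (FreeMonoid A × FreeMonoid B)) = fiberSubmonoid φ ψ)
    {m : FreeMonoid A} (hm : NR φ m) : m.length ≤ DD S := by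
  by_cases hm1 : m = 1
  · rw [hm1]
    exact Nat.zero_le _
  · have hφm : φ m ≠ 1 := hm m 1 (mul_one m).symm hm1
    obtain ⟨g, hg1, hg2⟩ := Finv φ ψ S hφs hψs hS (φ m)
    obtain ⟨s, hs⟩ := hφs g
    have hks : φ (m * s) = 1 := by rw [map_mul, hs, hg1]
    have hne1 : m * s ≠ 1 := fun h => hm1 (freemonoid_mul_eq_one h).1
    obtain ⟨cc, k', hcc, heq, _⟩ := exists_FR_head φ hks hne1
    rcases mul_eq_mul_cases heq with ⟨w, hw1, _⟩ | ⟨w, hw1, _⟩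
    · have hccD : cc.length ≤ DD S := mem_S_len1 S (FRA_in_S φ ψ S hS hcc)
      have : cc.length = m.length + w.length := by rw [hw1, length_mul]
      omega
    · exact absurd hcc.1 (hm cc w hw1 hcc.2.1)

lemma NRB_len (hφs : Function.Surjective φ) (hψs : Function.Surjective ψ)
    (hS : Submonoid.closure (S : Set (FreeMonoid A × FreeMonoid B)) = fiberSubmonoid φ ψ)
    {m : FreeMonoid B} (hm : NR ψ m) : m.length ≤ DD S := by
  by_cases hm1 : m = 1
  · rw [hm1]
    exact Nat.zero_le _
  · have hφm : ψ m ≠ 1 := hm m 1 (mul_one m).symm hm1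
    obtain ⟨g, hg1, hg2⟩ := Finv φ ψ S hφs hψs hS (ψ m)
    obtain ⟨s, hs⟩ := hψs g
    have hks : ψ (m * s) = 1 := by rw [map_mul, hs, hg1]
    have hne1 : m * s ≠ 1 := fun h => hm1 (freemonoid_mul_eq_one h).1
    obtain ⟨cc, k', hcc, heq, _⟩ := exists_FR_head ψ hks hne1
    rcases mul_eq_mul_cases heq with ⟨w, hw1, _⟩ | ⟨w, hw1, _⟩
    · have hccD : cc.length ≤ DD S := mem_S_len2 S (FRB_in_S φ ψ S hS hcc)
      have : cc.length = m.length + w.length := by rw [hw1, length_mul]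
      omega
    · exact absurd hcc.1 (hm cc w hw1 hcc.2.1)

lemma finite_CA (hφs : Function.Surjective φ) (hψs : Function.Surjective ψ)
    [Finite A]
    (hS : Submonoid.closure (S : Set (FreeMonoid A × FreeMonoid B)) = fiberSubmonoid φ ψ) :
    Finite (CA φ) := by
  have hfin : {w : FreeMonoid A | w.length ≤ DD S}.Finite := List.finite_length_le A (DD S)
  have hsub : {w : FreeMonoid A | FR φ w} ⊆ {w : FreeMonoid A | w.length ≤ DD S} := by
    intro w hw
    exact mem_S_len1 S (FRA_in_S φ ψ S hS hw)
  exact (hfin.subset hsub).to_subtype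

lemma finite_CB (hφs : Function.Surjective φ) (hψs : Function.Surjective ψ)
    [Finite B]
    (hS : Submonoid.closure (S : Set (FreeMonoid A × FreeMonoid B)) = fiberSubmonoid φ ψ) :
    Finite (CB ψ) := by
  have hfin : {w : FreeMonoid B | w.length ≤ DD S}.Finite := List.finite_length_le B (DD S)
  have hsub : {w : FreeMonoid B | FR ψ w} ⊆ {w : FreeMonoid B | w.length ≤ DD S} := by
    intro w hw
    exact mem_S_len2 S (FRB_in_S φ ψ S hS hw)
  exact (hfin.subset hsub).to_subtype

lemma finite_TT (hφs : Function.Surjective φ) (hψs : Function.Surjective ψ)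
    [Finite A] [Finite B]
    (hS : Submonoid.closure (S : Set (FreeMonoid A × FreeMonoid B)) = fiberSubmonoid φ ψ) :
    Finite (TT φ ψ) := by
  have hfinA : {w : FreeMonoid A | w.length ≤ DD S}.Finite := List.finite_length_le A (DD S)
  have hfinB : {w : FreeMonoid B | w.length ≤ DD S}.Finite := List.finite_length_le B (DD S)
  have hfinP := hfinA.prod hfinB
  have hsub : {t : FreeMonoid A × FreeMonoid B |
      φ t.1 = ψ t.2 ∧ NR φ t.1 ∧ NR ψ t.2 ∧ t ≠ 1}
      ⊆ {w : FreeMonoid A | w.length ≤ DD S} ×ˢ {w : FreeMonoid B | w.length ≤ DD S} := by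
    rintro ⟨t1, t2⟩ ⟨_, h1, h2, _⟩
    exact ⟨NRA_len φ ψ S hφs hψs hS h1, NRB_len φ ψ S hφs hψs hS h2⟩
  exact ((hfinP.subset hsub)).to_subtype

end Finiteness

end Presentation
end Stmt5

/-- if a fiber product of two finitely generated free monoids over a
finite monoid is finitely generated, then it is finitely presented: it is
isomorphic to a quotient of a free monoid on a finite alphabet `Γ` by the
congruence generated by a finite set `R` of pairs of words over `Γ`. -/
theorem stmt5 {A B F : Type} [Finite A] [Finite B] [Monoid F] [Finite F]
    (φ : FreeMonoid A →* F) (ψ : FreeMonoid B →* F)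
    (hφ : Function.Surjective φ) (hψ : Function.Surjective ψ)
    (hfg : (fiberSubmonoid φ ψ).FG) :
    ∃ (Γ : Type) (_ : Finite Γ) (R : Set (FreeMonoid Γ × FreeMonoid Γ)),
      R.Finite ∧
      Nonempty ((conGen fun u v : FreeMonoid Γ => (u, v) ∈ R).Quotient ≃*
        fiberSubmonoid φ ψ) := by
  classical
  obtain ⟨S, hS⟩ := hfg
  haveI hCA : Finite (Stmt5.CA φ) := Stmt5.finite_CA φ ψ S hφ hψ hS
  haveI hCB : Finite (Stmt5.CB ψ) := Stmt5.finite_CB φ ψ S hφ hψ hS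
  haveI hTT : Finite (Stmt5.TT φ ψ) := Stmt5.finite_TT φ ψ S hφ hψ hS
  haveI hG : Finite (Stmt5.Gam φ ψ) := by
    have : Finite ((Stmt5.CA φ ⊕ Stmt5.CB ψ) ⊕ Stmt5.TT φ ψ) := inferInstance
    exact this
  refine ⟨Stmt5.Gam φ ψ, hG, Stmt5.RS φ ψ, ?_, ⟨Stmt5.theIso φ ψ⟩⟩
  exact Set.finite_range _
end

section
/- Let A and B be alphabets, let S be a semigroup, and let φ : A⁺ → S and ψ : B⁺ → S be surjective semigroup homomorphisms. If the fiber product Π(φ,ψ) = {(u,v) ∈ A⁺ × B⁺ : φ(u) = ψ(v)} is finitely generated as a semigroup, then S is idempotent-free, i.e. there is no e ∈ S with e·e = e. -/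
namespace FreeSemigroup

variable {A B S : Type*}

theorem length_pos (x : FreeSemigroup A) : 0 < x.length :=
  Nat.succ_pos _

theorem exists_length_snd_le_mul_length_fst {X : Set (FreeSemigroup A × FreeSemigroup B)}
    (hX : X.Finite) : ∃ L : ℕ, ∀ p ∈ Subsemigroup.closure X, p.2.length ≤ L * p.1.length := by
  obtain ⟨L, hL⟩ := (hX.image fun x => x.2.length).bddAbove
  refine ⟨L, fun p hp => ?_⟩
  induction hp using Subsemigroup.closure_induction with
  | mem x hx =>
    calc x.2.length ≤ L := hL (Set.mem_image_of_mem _ hx)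
      _ = L * 1 := (mul_one L).symm
      _ ≤ L * x.1.length := Nat.mul_le_mul_left L x.1.length_pos
  | mul x y _ _ hx hy =>
    simp only [Prod.snd_mul, Prod.fst_mul, length_mul, Nat.mul_add]
    omega

theorem exists_length_ge_of_map_eq_mul_self [Semigroup S] (ψ : FreeSemigroup B →ₙ* S)
    {e : S} (he : e * e = e) {v : FreeSemigroup B} (hv : ψ v = e) (n : ℕ) :
    ∃ w : FreeSemigroup B, ψ w = e ∧ n ≤ w.length := by
  induction n with
  | zero => exact ⟨v, hv, Nat.zero_le _⟩
  | succ k ih =>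
    obtain ⟨w, hw, hlen⟩ := ih
    refine ⟨w * v, by rw [map_mul, hw, hv, he], ?_⟩
    rw [length_mul]
    have := v.length_pos
    omega

end FreeSemigroup

/-- if the fiber product of two free semigroups over a semigroup
`S` is finitely generated, then `S` is idempotent-free. -/
theorem stmt9 {A B S : Type} [Semigroup S]
    (φ : FreeSemigroup A →ₙ* S) (ψ : FreeSemigroup B →ₙ* S)
    (hφ : Function.Surjective φ) (hψ : Function.Surjective ψ)
    (h : SubsemigroupFG (fiberSubsemigroup φ ψ)) :
    ∀ e : S, e * e ≠ e := by
  rintro e he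
  obtain ⟨X, hXfin, hXcl⟩ := h
  obtain ⟨L, hL⟩ := FreeSemigroup.exists_length_snd_le_mul_length_fst hXfin
  obtain ⟨u, hu⟩ := hφ e
  obtain ⟨v, hv⟩ := hψ e
  obtain ⟨w, hw, hlen⟩ :=
    FreeSemigroup.exists_length_ge_of_map_eq_mul_self ψ he hv (L * u.length + 1)
  have hmem : (u, w) ∈ Subsemigroup.closure X := by
    rw [hXcl]
    exact hu.trans hw.symm
  have : w.length ≤ L * u.length := hL (u, w) hmem
  omega
end

section
/- Let A and B be finite alphabets and let φ : A⁺ → ℕ and ψ : B⁺ → ℕ be surjective semigroup homomorphisms onto the additive semigroup of positive integers. Then the fiber product Π(φ,ψ) = {(u,v) ∈ A⁺ × B⁺ : φ(u) = ψ(v)} is finitely generated as a semigroup if and only if φ(A) has exactly one element or ψ(B) has exactly one element. -/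
namespace Stmt11Helper

open FreeSemigroup

variable {A B : Type}

lemma mem_fiber {S T F : Type*} [Semigroup S] [Semigroup T] [Semigroup F]
    (φ : S →ₙ* F) (ψ : T →ₙ* F) (p : S × T) :
    p ∈ fiberSubsemigroup φ ψ ↔ φ p.1 = ψ p.2 := Iff.rfl

/-- The list of letters of an element of the free semigroup. -/
def toL (u : FreeSemigroup A) : List A := u.head :: u.tail

lemma toL_mul (u v : FreeSemigroup A) : toL (u * v) = toL u ++ toL v := by
  simp [toL]

lemma toL_ne_nil (u : FreeSemigroup A) : toL u ≠ [] := List.cons_ne_nil _ _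

lemma toL_injective : Function.Injective (toL (A := A)) := by
  intro u v h
  simp only [toL, List.cons.injEq] at h
  exact FreeSemigroup.ext h.1 h.2

lemma length_toL (u : FreeSemigroup A) : (toL u).length = u.length := by
  simp [toL, FreeSemigroup.length, Nat.add_comm]

/-- Additive natural value of an element under a hom to `Multiplicative ℕ+`. -/
def val (φ : FreeSemigroup A →ₙ* Multiplicative ℕ+) (u : FreeSemigroup A) : ℕ :=
  ((Multiplicative.toAdd (φ u) : ℕ+) : ℕ)

lemma val_mul (φ : FreeSemigroup A →ₙ* Multiplicative ℕ+) (u v : FreeSemigroup A) :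
    val φ (u * v) = val φ u + val φ v := by
  simp [val, map_mul]

lemma val_pos (φ : FreeSemigroup A →ₙ* Multiplicative ℕ+) (u : FreeSemigroup A) :
    1 ≤ val φ u := (Multiplicative.toAdd (φ u)).property

lemma mulpnat_eq_iff (x y : Multiplicative ℕ+) :
    x = y ↔ ((Multiplicative.toAdd x : ℕ+) : ℕ) = ((Multiplicative.toAdd y : ℕ+) : ℕ) := by
  constructor
  · intro h; rw [h]
  · intro h; exact Multiplicative.toAdd.injective (PNat.coe_inj.mp h)

lemma phi_eq_iff (φ : FreeSemigroup A →ₙ* Multiplicative ℕ+)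
    (ψ : FreeSemigroup B →ₙ* Multiplicative ℕ+) (u : FreeSemigroup A) (v : FreeSemigroup B) :
    φ u = ψ v ↔ val φ u = val ψ v := mulpnat_eq_iff _ _

lemma val_eq_sum (φ : FreeSemigroup A →ₙ* Multiplicative ℕ+) (u : FreeSemigroup A) :
    val φ u = ((toL u).map (fun a => val φ (of a))).sum := by
  induction u using FreeSemigroup.recOnMul with
  | ih1 a => simp [toL, of]
  | ih2 x y hx hy =>
    rw [toL_mul, List.map_append, List.sum_append, val_mul, ← hx, ← hy]

lemma length_le_val (φ : FreeSemigroup A →ₙ* Multiplicative ℕ+) (u : FreeSemigroup A) :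
    u.length ≤ val φ u := by
  induction u using FreeSemigroup.recOnMul with
  | ih1 a => simpa using val_pos φ (of a)
  | ih2 x y hx hy =>
    rw [length_mul, val_mul]
    exact Nat.add_le_add hx hy

lemma exists_val_one {φ : FreeSemigroup A →ₙ* Multiplicative ℕ+}
    (hφ : Function.Surjective φ) : ∃ a : A, val φ (of a) = 1 := by
  obtain ⟨u, hu⟩ := hφ (Multiplicative.ofAdd 1)
  have hv : val φ u = 1 := by simp [val, hu]
  have hl : u.length = 1 := by
    have h1 := length_le_val φ u
    have h2 : 1 ≤ u.length := by simp [FreeSemigroup.length]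
    omega
  obtain ⟨h, t⟩ := u
  have ht : t = [] := by
    simpa [FreeSemigroup.length] using hl
  subst ht
  exact ⟨h, hv⟩

lemma exists_split (u : FreeSemigroup A) (l : ℕ) (h1 : 1 ≤ l) (h2 : l < u.length) :
    ∃ w₁ w₂ : FreeSemigroup A, u = w₁ * w₂ ∧ w₁.length = l := by
  obtain ⟨h, t⟩ := u
  have ht : l - 1 < t.length := by
    simp [FreeSemigroup.length] at h2; omega
  refine ⟨⟨h, t.take (l - 1)⟩, ⟨t[l-1], t.drop l⟩, ?_, ?_⟩
  · have htt : t = t.take (l - 1) ++ t[l-1] :: t.drop l := by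
      conv_lhs => rw [← List.take_append_drop (l - 1) t]
      rw [List.drop_eq_getElem_cons ht, show l - 1 + 1 = l by omega]
    exact FreeSemigroup.ext rfl htt
  · simp [FreeSemigroup.length, List.length_take]
    omega

section Easy

variable (φ : FreeSemigroup A →ₙ* Multiplicative ℕ+)
variable (ψ : FreeSemigroup B →ₙ* Multiplicative ℕ+)

lemma fg_of_singleton [Finite A] [Finite B] (hφ : Function.Surjective φ)
    (h : ∃ x, Set.range (fun a : A => φ (of a)) = {x}) :
    SubsemigroupFG (fiberSubsemigroup φ ψ) := by
  obtain ⟨x, hx⟩ := h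
  have hconst : ∀ a : A, φ (of a) = x := by
    intro a
    have : φ (of a) ∈ Set.range (fun a : A => φ (of a)) := Set.mem_range_self a
    rw [hx] at this
    exact this
  obtain ⟨a₁, ha₁⟩ := exists_val_one hφ
  have hall : ∀ a : A, val φ (of a) = 1 := by
    intro a
    have : val φ (of a) = val φ (of a₁) := by
      unfold val; rw [hconst a, hconst a₁]
    rw [this]; exact ha₁
  have hlen : ∀ u : FreeSemigroup A, val φ u = u.length := by
    intro u
    rw [val_eq_sum]
    have hmap : (toL u).map (fun a => val φ (of a)) = (toL u).map (fun _ => (1 : ℕ)) :=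
      List.map_congr_left (fun a _ => hall a)
    rw [hmap, List.map_const', List.sum_replicate, smul_eq_mul, mul_one, length_toL]
  refine ⟨⋃ (b : B), (fun u => (u, of b)) '' {u : FreeSemigroup A | u.length = val ψ (of b)},
    ?_, ?_⟩
  · apply Set.finite_iUnion
    intro b
    apply Set.Finite.image
    have heq : {u : FreeSemigroup A | u.length = val ψ (of b)}
        = toL ⁻¹' {l : List A | l.length = val ψ (of b)} := by
      ext u; simp [length_toL]
    rw [heq]
    exact (List.finite_length_eq A _).preimage (toL_injective.injOn)
  · apply le_antisymm
    · rw [Subsemigroup.closure_le]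
      rintro p hp
      simp only [Set.mem_iUnion, Set.mem_image, Set.mem_setOf_eq] at hp
      obtain ⟨b, u, hu, rfl⟩ := hp
      show φ u = ψ (of b)
      rw [phi_eq_iff, hlen]
      exact hu
    · rintro ⟨u, v⟩ hp
      have hp' : φ u = ψ v := hp
      have claim : ∀ (v : FreeSemigroup B) (u : FreeSemigroup A),
          u.length = val ψ v → (u, v) ∈ Subsemigroup.closure
            (⋃ (b : B), (fun u => (u, of b)) ''
              {u : FreeSemigroup A | u.length = val ψ (of b)}) := by
        intro v
        induction v using FreeSemigroup.recOnMul with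
        | ih1 b =>
          intro u hu
          exact Subsemigroup.subset_closure
            (Set.mem_iUnion.mpr ⟨b, ⟨u, hu, rfl⟩⟩)
        | ih2 x y hxih hyih =>
          intro u hu
          rw [val_mul] at hu
          obtain ⟨w₁, w₂, rfl, hw₁⟩ := exists_split u (val ψ (of x)) (val_pos _ _)
            (by have := val_pos ψ y; omega)
          have h2 : w₂.length = val ψ y := by
            rw [length_mul] at hu; omega
          exact Subsemigroup.mul_mem _ (hxih w₁ hw₁) (hyih w₂ h2)
      exact claim v u (by rw [← hlen u]; rw [phi_eq_iff] at hp'; exact hp')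

end Easy

section Swap

/-- The swap homomorphism on a product of semigroups. -/
def swapHom (S T : Type*) [Semigroup S] [Semigroup T] : (S × T) →ₙ* (T × S) :=
  ⟨Prod.swap, fun _ _ => rfl⟩

lemma map_swap_fiber (φ : FreeSemigroup A →ₙ* Multiplicative ℕ+)
    (ψ : FreeSemigroup B →ₙ* Multiplicative ℕ+) :
    (fiberSubsemigroup φ ψ).map (swapHom _ _) = fiberSubsemigroup ψ φ := by
  ext ⟨v, u⟩
  simp only [Subsemigroup.mem_map, mem_fiber]
  constructor
  · rintro ⟨⟨u', v'⟩, h, heq⟩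
    have h1 : v' = v := congrArg Prod.fst heq
    have h2 : u' = u := congrArg Prod.snd heq
    subst h1; subst h2
    exact h.symm
  · intro h
    exact ⟨(u, v), h.symm, rfl⟩

lemma fg_map {M N : Type*} [Mul M] [Mul N] (f : M →ₙ* N) {P : Subsemigroup M}
    (h : SubsemigroupFG P) : SubsemigroupFG (P.map f) := by
  obtain ⟨X, hfin, hcl⟩ := h
  exact ⟨f '' X, hfin.image f, by rw [← MulHom.map_mclosure, hcl]⟩

end Swap

section Hard

variable (b0 b1 : B)

/-- Building blocks of the second component of the witnessing elements. -/
def Cw (t : ℕ) : ℕ → List B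
  | 0 => [b0]
  | s + 1 => b1 :: (List.replicate t b0 ++ Cw t s)

lemma Cw_length (t s : ℕ) : (Cw b0 b1 t s).length = 1 + s * (1 + t) := by
  induction s with
  | zero => simp [Cw]
  | succ s ih =>
    simp only [Cw, List.length_cons, List.length_append, List.length_replicate, ih]
    ring

lemma Cw_sum (t s k : ℕ) (F : B → ℕ) (h0 : F b0 = 1) (h1 : F b1 = k) :
    ((Cw b0 b1 t s).map F).sum = 1 + s * (k + t) := by
  induction s with
  | zero => simp [Cw, h0]
  | succ s ih =>
    simp only [Cw, List.map_cons, List.map_append, List.map_replicate, List.sum_cons,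
      List.sum_append, List.sum_replicate, smul_eq_mul, mul_one, h0, h1, ih]
    ring

lemma key_arith {m k i : ℕ} (h2 : 2 ≤ m) (hr : k % m ≠ 1) (hi : i ≤ (m - k % m) % m) :
    (m - 1 + (k + i)) % m ≠ 0 := by
  have hlt : k % m < m := Nat.mod_lt _ (by omega)
  have heq : m - 1 + (k + i) = (m - 1 + i) + k := by omega
  rw [heq, ← Nat.add_mod_mod]
  by_cases h0 : k % m = 0
  · have hi0 : i = 0 := by
      rw [h0, Nat.sub_zero, Nat.mod_self] at hi; omega
    simp only [h0, hi0, Nat.add_zero]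
    rw [Nat.mod_eq_of_lt (by omega)]
    omega
  · have h2r : 2 ≤ k % m := by omega
    have hti : i ≤ m - k % m := by rwa [Nat.mod_eq_of_lt (by omega)] at hi
    rw [Nat.mod_eq_sub_mod (by omega), Nat.mod_eq_of_lt (by omega)]
    omega

lemma Cw_take (t s k m c : ℕ) (F : B → ℕ) (h0 : F b0 = 1) (h1 : F b1 = k)
    (h2m : 2 ≤ m) (hr : k % m ≠ 1) (ht : t = (m - k % m) % m) (hc : k + t = m * c) :
    ∀ j, 1 ≤ j → j < (Cw b0 b1 t s).length →
      (m - 1 + (((Cw b0 b1 t s).take j).map F).sum) % m ≠ 0 := by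
  induction s with
  | zero =>
    intro j hj1 hjlen
    simp [Cw] at hjlen
    omega
  | succ s ih =>
    intro j hj1 hjlen
    obtain ⟨j', rfl⟩ : ∃ j', j = j' + 1 := ⟨j - 1, by omega⟩
    have hlen : (Cw b0 b1 t (s+1)).length = 1 + (t + (Cw b0 b1 t s).length) := by
      simp [Cw]; omega
    show (m - 1 + (((b1 :: (List.replicate t b0 ++ Cw b0 b1 t s)).take (j' + 1)).map F).sum)
      % m ≠ 0
    rw [List.take_succ_cons, List.map_cons, List.sum_cons, h1]
    by_cases hjt : j' ≤ t
    · rw [List.take_append_of_le_length (by simpa using hjt), List.take_replicate,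
        show j' ⊓ t = j' from min_eq_left hjt, List.map_replicate, h0, List.sum_replicate,
        smul_eq_mul, mul_one]
      exact key_arith h2m hr (ht ▸ hjt)
    · rw [List.take_append, List.take_of_length_le (by simpa using by omega),
        List.length_replicate, List.map_append, List.map_replicate, h0, List.sum_append,
        List.sum_replicate, smul_eq_mul, mul_one]
      have hb : j' - t < (Cw b0 b1 t s).length := by
        rw [hlen] at hjlen; omega
      have heq : m - 1 + (k + (t + (((Cw b0 b1 t s).take (j' - t)).map F).sum))
          = (m - 1 + (((Cw b0 b1 t s).take (j' - t)).map F).sum) + (k + t) := by omega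
      rw [heq, hc, Nat.add_mul_mod_self_left]
      exact ih (j' - t) (by omega) hb

/-- The full letter list of the second component. -/
def WL (m t s : ℕ) : List B := List.replicate (m - 1) b0 ++ Cw b0 b1 t s

lemma WL_length (m t s : ℕ) : (WL b0 b1 m t s).length = (m - 1) + (1 + s * (1 + t)) := by
  simp [WL, Cw_length]

lemma WL_sum (m t s k : ℕ) (F : B → ℕ) (h0 : F b0 = 1) (h1 : F b1 = k) :
    ((WL b0 b1 m t s).map F).sum = (m - 1) + (1 + s * (k + t)) := by
  simp [WL, List.map_append, List.sum_append, List.map_replicate, h0,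
    List.sum_replicate, Cw_sum b0 b1 t s k F h0 h1]

lemma WL_take (m t s k c : ℕ) (F : B → ℕ) (h0 : F b0 = 1) (h1 : F b1 = k)
    (h2m : 2 ≤ m) (hr : k % m ≠ 1) (ht : t = (m - k % m) % m) (hc : k + t = m * c) :
    ∀ j, 1 ≤ j → j < (WL b0 b1 m t s).length →
      ((((WL b0 b1 m t s).take j).map F).sum) % m ≠ 0 := by
  intro j hj1 hjlen
  unfold WL
  by_cases hjm : j ≤ m - 1
  · rw [List.take_append_of_le_length (by simpa using hjm), List.take_replicate,
      show j ⊓ (m-1) = j from min_eq_left hjm, List.map_replicate, h0, List.sum_replicate,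
      smul_eq_mul, mul_one, Nat.mod_eq_of_lt (by omega)]
    omega
  · rw [List.take_append, List.take_of_length_le (by simpa using by omega),
      List.length_replicate, List.map_append, List.map_replicate, h0, List.sum_append,
      List.sum_replicate, smul_eq_mul, mul_one]
    have hb : j - (m - 1) < (Cw b0 b1 t s).length := by
      rw [WL_length] at hjlen
      have := Cw_length b0 b1 t s
      omega
    exact Cw_take b0 b1 t s k m c F h0 h1 h2m hr ht hc (j - (m-1)) (by omega) hb

/-- Powers of a single letter. -/
def Upow (a : A) (i : ℕ) : FreeSemigroup A := ⟨a, List.replicate i a⟩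

lemma toL_Upow (a : A) (i : ℕ) : toL (Upow a i) = List.replicate (i + 1) a := by
  simp [toL, Upow, List.replicate_succ]

/-- Make a free semigroup element from a nonempty list. -/
def ofL (l : List B) (h : l ≠ []) : FreeSemigroup B := ⟨l.head h, l.tail⟩

lemma toL_ofL (l : List B) (h : l ≠ []) : toL (ofL l h) = l := List.cons_head_tail h

variable {φ : FreeSemigroup A →ₙ* Multiplicative ℕ+}
variable {ψ : FreeSemigroup B →ₙ* Multiplicative ℕ+}

lemma not_fg_core (φ : FreeSemigroup A →ₙ* Multiplicative ℕ+)
    (ψ : FreeSemigroup B →ₙ* Multiplicative ℕ+)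
    (a1 : A) (b0 b1 : B) (m k : ℕ)
    (hm : val φ (of a1) = m) (h2m : 2 ≤ m)
    (hb0 : val ψ (of b0) = 1) (hb1 : val ψ (of b1) = k)
    (hr : k % m ≠ 1) : ¬ SubsemigroupFG (fiberSubsemigroup φ ψ) := by
  rintro ⟨X, hXfin, hXcl⟩
  have hk1 : 1 ≤ k := hb1 ▸ val_pos ψ (of b1)
  have hkm : k % m < m := Nat.mod_lt _ (by omega)
  set t := (m - k % m) % m with ht
  have hdvd : ∃ c, k + t = m * c := by
    by_cases h0 : k % m = 0
    · have ht0 : t = 0 := by rw [ht, h0, Nat.sub_zero, Nat.mod_self]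
      obtain ⟨c, hcc⟩ := Nat.dvd_of_mod_eq_zero h0
      exact ⟨c, by rw [ht0, Nat.add_zero]; exact hcc⟩
    · refine ⟨k / m + 1, ?_⟩
      have hq : m * (k / m) + k % m = k := Nat.div_add_mod k m
      have htv : t = m - k % m := by rw [ht, Nat.mod_eq_of_lt (by omega)]
      rw [Nat.mul_succ]
      omega
  obtain ⟨c, hc⟩ := hdvd
  have hcpos : 1 ≤ c := by
    rcases Nat.eq_zero_or_pos c with h | h
    · rw [h, Nat.mul_zero] at hc; omega
    · exact h
  have hWLne : ∀ s, WL b0 b1 m t s ≠ [] := by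
    intro s
    apply List.ne_nil_of_length_pos
    rw [WL_length]; omega
  set F : B → ℕ := fun b => val ψ (of b) with hF
  have hF0 : F b0 = 1 := hb0
  have hF1 : F b1 = k := hb1
  set E : ℕ → FreeSemigroup A × FreeSemigroup B :=
    fun s => (Upow a1 (s * c), ofL (WL b0 b1 m t s) (hWLne s)) with hE
  -- value computations
  have valU : ∀ s, val φ (Upow a1 (s * c)) = (s * c + 1) * m := by
    intro s
    rw [val_eq_sum, toL_Upow, List.map_replicate, hm, List.sum_replicate, smul_eq_mul]
  have valW : ∀ s, val ψ (ofL (WL b0 b1 m t s) (hWLne s)) = (m - 1) + (1 + s * (k + t)) := by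
    intro s
    rw [val_eq_sum, toL_ofL]
    exact WL_sum b0 b1 m t s k F hF0 hF1
  have hvals : ∀ s, val φ (Upow a1 (s * c)) = val ψ (ofL (WL b0 b1 m t s) (hWLne s)) := by
    intro s
    rw [valU, valW]
    have h1 : (s * c + 1) * m = m + s * (m * c) := by ring
    have h2 : m + s * (m * c) = m + s * (k + t) := by rw [hc]
    have h3 : ∀ y : ℕ, m + y = (m - 1) + (1 + y) := fun y => by omega
    rw [h1, h2, h3]
  have memE : ∀ s, E s ∈ fiberSubsemigroup φ ψ := by
    intro s
    rw [hE]
    show φ _ = ψ _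
    rw [phi_eq_iff]
    exact hvals s
  -- every E s is in X
  have hEX : ∀ s, E s ∈ X := by
    intro s
    have hmem : E s ∈ Subsemigroup.closure X := by rw [hXcl]; exact memE s
    have hdec := Subsemigroup.closure_induction
      (p := fun z _ => z ∈ X ∨ ∃ x, x ∈ fiberSubsemigroup φ ψ ∧
        ∃ y, y ∈ fiberSubsemigroup φ ψ ∧ z = x * y)
      (fun x h => Or.inl h)
      (fun x y hx hy _ _ => Or.inr ⟨x, by rw [← hXcl]; exact hx,
        y, by rw [← hXcl]; exact hy, rfl⟩) hmem
    rcases hdec with h | ⟨⟨x₁, y₁⟩, hxy₁, ⟨x₂, y₂⟩, hxy₂, heq⟩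
    · exact h
    · exfalso
      have hU : Upow a1 (s * c) = x₁ * x₂ := congrArg Prod.fst heq
      have hW : ofL (WL b0 b1 m t s) (hWLne s) = y₁ * y₂ := congrArg Prod.snd heq
      -- first component: every proper prefix has value divisible by m
      have hrep : toL x₁ ++ toL x₂ = List.replicate (s * c + 1) a1 := by
        rw [← toL_mul, ← hU, toL_Upow]
      have hx1rep : toL x₁ = List.replicate (toL x₁).length a1 := by
        apply List.eq_replicate_length.mpr
        intro b hb
        exact List.eq_of_mem_replicate (hrep ▸ List.mem_append_left (toL x₂) hb)
      have hvx1 : val φ x₁ % m = 0 := by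
        rw [val_eq_sum, hx1rep, List.map_replicate, hm, List.sum_replicate, smul_eq_mul,
          Nat.mul_mod_left]
      -- second component: no proper prefix has value divisible by m
      have hWlist : toL y₁ ++ toL y₂ = WL b0 b1 m t s := by
        rw [← toL_mul, ← hW, toL_ofL]
      have hy1 : toL y₁ = (WL b0 b1 m t s).take (toL y₁).length := by
        rw [← hWlist, List.take_left]
      have hlb : 1 ≤ (toL y₁).length := by
        have := List.length_pos_iff.mpr (toL_ne_nil y₁); omega
      have hub : (toL y₁).length < (WL b0 b1 m t s).length := by
        rw [← hWlist, List.length_append]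
        have := List.length_pos_iff.mpr (toL_ne_nil y₂); omega
      have hvy1 : val ψ y₁ % m ≠ 0 := by
        rw [val_eq_sum, hy1]
        exact WL_take b0 b1 m t s k c F hF0 hF1 h2m hr ht hc (toL y₁).length hlb hub
      have hfx : val φ x₁ = val ψ y₁ := by
        rw [← phi_eq_iff]; exact hxy₁
      rw [hfx] at hvx1
      exact hvy1 hvx1
  -- injectivity of E
  have hinj : Function.Injective E := by
    intro s s' h
    have h2 : (toL (E s).2).length = (toL (E s').2).length := by rw [h]
    rw [hE] at h2
    simp only [toL_ofL] at h2
    rw [WL_length, WL_length] at h2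
    have h3 : 1 + s * (1 + t) = 1 + s' * (1 + t) := by omega
    have h4 : s * (1 + t) = s' * (1 + t) := by omega
    exact Nat.eq_of_mul_eq_mul_right (by omega) h4
  exact (Set.infinite_of_injective_forall_mem hinj hEX) hXfin

end Hard

end Stmt11Helper

open Stmt11Helper FreeSemigroup in
/-- for surjective homomorphisms `φ : A⁺ → ℕ`, `ψ : B⁺ → ℕ` onto
the additive semigroup of positive integers (`Multiplicative ℕ+`), the fiber
product is finitely generated if and only if `φ(A)` is a singleton or `ψ(B)`
is a singleton. -/
theorem stmt11 {A B : Type} [Finite A] [Finite B]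
    (φ : FreeSemigroup A →ₙ* Multiplicative ℕ+)
    (ψ : FreeSemigroup B →ₙ* Multiplicative ℕ+)
    (hφ : Function.Surjective φ) (hψ : Function.Surjective ψ) :
    SubsemigroupFG (fiberSubsemigroup φ ψ) ↔
      ((∃ x, Set.range (fun a : A => φ (FreeSemigroup.of a)) = {x}) ∨
       (∃ y, Set.range (fun b : B => ψ (FreeSemigroup.of b)) = {y})) := by
  constructor
  · intro hFG
    by_contra hcon
    push_neg at hcon
    obtain ⟨hA, hB⟩ := hcon
    obtain ⟨a0, ha0⟩ := exists_val_one hφ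
    obtain ⟨b0, hb0⟩ := exists_val_one hψ
    have hA2 : ∃ a1 : A, val φ (of a1) ≠ 1 := by
      by_contra h
      push_neg at h
      have hall : ∀ a : A, φ (of a) = Multiplicative.ofAdd 1 := by
        intro a
        rw [mulpnat_eq_iff]
        simpa [val] using h a
      exact hA (Multiplicative.ofAdd 1) (Set.eq_singleton_iff_unique_mem.mpr
        ⟨⟨a0, hall a0⟩, by rintro z ⟨a, rfl⟩; exact hall a⟩)
    have hB2 : ∃ b1 : B, val ψ (of b1) ≠ 1 := by
      by_contra h
      push_neg at h
      have hall : ∀ b : B, ψ (of b) = Multiplicative.ofAdd 1 := by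
        intro b
        rw [mulpnat_eq_iff]
        simpa [val] using h b
      exact hB (Multiplicative.ofAdd 1) (Set.eq_singleton_iff_unique_mem.mpr
        ⟨⟨b0, hall b0⟩, by rintro z ⟨b, rfl⟩; exact hall b⟩)
    obtain ⟨a1, ha1⟩ := hA2
    obtain ⟨b1, hb1⟩ := hB2
    have hm2 : 2 ≤ val φ (of a1) := by have := val_pos φ (of a1); omega
    have hk2 : 2 ≤ val ψ (of b1) := by have := val_pos ψ (of b1); omega
    by_cases hcase : val ψ (of b1) % val φ (of a1) = 1
    · have hmk : val φ (of a1) % val ψ (of b1) ≠ 1 := by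
        rcases lt_trichotomy (val ψ (of b1)) (val φ (of a1)) with h | h | h
        · exfalso; rw [Nat.mod_eq_of_lt h] at hcase; omega
        · exfalso; rw [h, Nat.mod_self] at hcase; omega
        · rw [Nat.mod_eq_of_lt h]; omega
      refine not_fg_core ψ φ b1 a0 a1 (val ψ (of b1)) (val φ (of a1))
        rfl hk2 ha0 rfl hmk ?_
      have := fg_map (swapHom _ _) hFG
      rwa [map_swap_fiber] at this
    · exact not_fg_core φ ψ a1 b0 b1 (val φ (of a1)) (val ψ (of b1))
        rfl hm2 hb0 rfl hcase hFG
  · rintro (h | h)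
    · exact fg_of_singleton φ ψ hφ h
    · have h1 := fg_of_singleton ψ φ hψ h
      have h2 := fg_map (swapHom _ _) h1
      rwa [map_swap_fiber] at h2
end

section
/- Let A and B be alphabets, let r ≥ 2, let F be the free commutative semigroup of rank r (the additive semigroup of nonzero functions Fin r → ℕ under pointwise addition), and let φ : A⁺ → F and ψ : B⁺ → F be surjective semigroup homomorphisms. Then the fiber product Π(φ,ψ) = {(u,v) ∈ A⁺ × B⁺ : φ(u) = ψ(v)} is not finitely generated as a semigroup. -/
/-- The free commutative semigroup of rank `r`: nonzero functions `Fin r → ℕ`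
under pointwise addition. -/
instance freeCommSemigroupAdd (r : ℕ) : AddSemigroup {f : Fin r → ℕ // f ≠ 0} where
  add a b := ⟨a.1 + b.1, by
    intro h
    apply a.2
    funext i
    have := congrFun h i
    simp only [Pi.add_apply, Pi.zero_apply] at this ⊢
    omega⟩
  add_assoc a b c := Subtype.ext (add_assoc a.1 b.1 c.1)

namespace Stmt12Aux

variable {A : Type} {r : ℕ}

/-- The `j`-th "atom" of the free commutative semigroup. -/
def unit (r : ℕ) (j : Fin r) : {f : Fin r → ℕ // f ≠ 0} :=
  ⟨fun i => if i = j then 1 else 0, by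
    intro h
    simpa using congrFun h j⟩

theorem unit_apply (j i : Fin r) : (unit r j).1 i = if i = j then 1 else 0 := rfl

/-- The value of a word under a hom, as a function `Fin r → ℕ`. -/
def sval (φ : FreeSemigroup A →ₙ* Multiplicative {f : Fin r → ℕ // f ≠ 0})
    (x : FreeSemigroup A) : Fin r → ℕ := (Multiplicative.toAdd (φ x)).1

variable (φ : FreeSemigroup A →ₙ* Multiplicative {f : Fin r → ℕ // f ≠ 0})

theorem sval_mul (x y : FreeSemigroup A) :
    sval φ (x * y) = sval φ x + sval φ y := by
  unfold sval
  rw [map_mul]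
  rfl

theorem sval_ne_zero (x : FreeSemigroup A) : sval φ x ≠ 0 :=
  (Multiplicative.toAdd (φ x)).2

theorem sval_of_eq {a : A} {v : {f : Fin r → ℕ // f ≠ 0}}
    (h : φ (.of a) = Multiplicative.ofAdd v) : sval φ (.of a) = v.1 := by
  unfold sval
  rw [h, toAdd_ofAdd]

theorem sval_mk_apply (h : A) (l : List A) (j : Fin r) :
    sval φ ⟨h, l⟩ j = sval φ (.of h) j + (l.map (fun x => sval φ (.of x) j)).sum := by
  induction l generalizing h with
  | nil => simp [FreeSemigroup.of]
  | cons x l ih =>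
      have hsplit : (⟨h, x :: l⟩ : FreeSemigroup A) = .of h * ⟨x, l⟩ := rfl
      have := congrFun (sval_mul φ (.of h) ⟨x, l⟩) j
      rw [hsplit, this, Pi.add_apply, ih]
      simp [add_assoc]

theorem eq_of_sval_eq {B : Type} (ψ : FreeSemigroup B →ₙ* Multiplicative {f : Fin r → ℕ // f ≠ 0})
    (x : FreeSemigroup A) (y : FreeSemigroup B) (h : sval φ x = sval ψ y) : φ x = ψ y :=
  Multiplicative.toAdd.injective (Subtype.ext h)

theorem exists_of_sum_eq_one (x : FreeSemigroup A) (h : ∑ i, sval φ x i = 1) :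
    ∃ a, x = .of a := by
  induction x with
  | ih1 a => exact ⟨a, rfl⟩
  | ih2 x y _ _ =>
      exfalso
      have hpos : ∀ z : FreeSemigroup A, 1 ≤ ∑ i, sval φ z i := by
        intro z
        by_contra hz
        push_neg at hz
        have h0 : ∑ i, sval φ z i = 0 := by omega
        exact sval_ne_zero φ z (funext fun i =>
          (Finset.sum_eq_zero_iff.mp h0) i (Finset.mem_univ i))
      rw [sval_mul] at h
      have h1 := hpos (.of x)
      have h2 := hpos y
      simp only [Pi.add_apply, Finset.sum_add_distrib] at h
      omega

/-- Elements of a proper prefix of `replicate n d ++ [c]` are all `d`. -/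
theorem mem_prefix_eq {B : Type} (d c : B) : ∀ (l1 l2 : List B) (n : ℕ),
    l1 ++ l2 = List.replicate n d ++ [c] → l2 ≠ [] → ∀ x ∈ l1, x = d := by
  intro l1
  induction l1 with
  | nil => intro l2 n _ _ x hx; exact absurd hx (List.not_mem_nil (a := x))
  | cons y l ih =>
      intro l2 n heq hne x hx
      cases n with
      | zero =>
          simp only [List.replicate, List.nil_append] at heq
          have hlen := congrArg List.length heq
          simp only [List.length_append, List.length_cons, List.cons_append,
            List.length_nil] at hlen
          exact absurd (List.length_eq_zero_iff.mp (by omega)) hne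
      | succ n =>
          rw [List.replicate_succ, List.cons_append, List.cons_append] at heq
          obtain ⟨hy, htl⟩ := List.cons_eq_cons.mp heq
          rcases List.mem_cons.mp hx with h | h
          · exact h.trans hy
          · exact ih l2 n htl hne x h

end Stmt12Aux

open Stmt12Aux in
/-- the fiber product of two free semigroups over the free
commutative semigroup of rank `r ≥ 2` (nonzero functions `Fin r → ℕ` under
pointwise addition, regarded multiplicatively via `Multiplicative`) is not
finitely generated. -/
theorem stmt12 {A B : Type} (r : ℕ) (hr : 2 ≤ r)
    (φ : FreeSemigroup A →ₙ* Multiplicative {f : Fin r → ℕ // f ≠ 0})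
    (ψ : FreeSemigroup B →ₙ* Multiplicative {f : Fin r → ℕ // f ≠ 0})
    (hφ : Function.Surjective φ) (hψ : Function.Surjective ψ) :
    ¬ SubsemigroupFG (fiberSubsemigroup φ ψ) := by
  rintro ⟨X, hXfin, hXcl⟩
  set i0 : Fin r := ⟨0, by omega⟩ with hi0
  set i1 : Fin r := ⟨1, by omega⟩ with hi1
  have hne01 : i0 ≠ i1 := by
    intro h
    have := congrArg Fin.val h
    simp [hi0, hi1] at this
  -- get single letters mapping to atoms
  have sum_unit : ∀ j : Fin r, ∑ i, (unit r j).1 i = 1 := by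
    intro j
    simp [unit_apply]
  have getLetter : ∀ (C : Type) (χ : FreeSemigroup C →ₙ* Multiplicative {f : Fin r → ℕ // f ≠ 0})
      (hχ : Function.Surjective χ) (j : Fin r),
      ∃ a : C, χ (.of a) = Multiplicative.ofAdd (unit r j) := by
    intro C χ hχ j
    obtain ⟨x, hx⟩ := hχ (Multiplicative.ofAdd (unit r j))
    have hv : sval χ x = (unit r j).1 := by
      unfold sval
      rw [hx, toAdd_ofAdd]
    obtain ⟨a, rfl⟩ := exists_of_sum_eq_one χ x (by rw [hv]; exact sum_unit j)
    exact ⟨a, hx⟩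
  obtain ⟨a, ha⟩ := getLetter A φ hφ i0
  obtain ⟨b, hb⟩ := getLetter A φ hφ i1
  obtain ⟨c, hc⟩ := getLetter B ψ hψ i0
  obtain ⟨d, hd⟩ := getLetter B ψ hψ i1
  have hsa := sval_of_eq φ ha
  have hsb := sval_of_eq φ hb
  have hsc := sval_of_eq ψ hc
  have hsd := sval_of_eq ψ hd
  -- the family of indecomposable elements
  set s : ℕ → FreeSemigroup A × FreeSemigroup B :=
    fun n => (⟨a, List.replicate (n + 1) b⟩, ⟨d, List.replicate n d ++ [c]⟩) with hs
  have hmem : ∀ n, s n ∈ fiberSubsemigroup φ ψ := by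
    intro n
    show φ (s n).1 = ψ (s n).2
    apply eq_of_sval_eq
    funext i
    have h1 := sval_mk_apply φ a (List.replicate (n + 1) b) i
    have h2 := sval_mk_apply ψ d (List.replicate n d ++ [c]) i
    simp only [hs] at h1 h2 ⊢
    rw [h1, h2]
    simp only [List.map_append, List.map_replicate, List.sum_append,
      List.sum_replicate, List.map_cons, List.map_nil, List.sum_cons,
      List.sum_nil, smul_eq_mul] at *
    rw [hsa, hsb, hsc, hsd]
    ring
  -- each `s n` lies in `X`
  have hX : ∀ n, s n ∈ X := by
    intro n
    have hmcl : s n ∈ Subsemigroup.closure X := by rw [hXcl]; exact hmem n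
    have key := Subsemigroup.closure_induction
      (p := fun z _ => z ∈ X ∨ ∃ p, p ∈ fiberSubsemigroup φ ψ ∧
        ∃ q, q ∈ fiberSubsemigroup φ ψ ∧ z = p * q)
      (fun x h => Or.inl h)
      (fun x y hx hy _ _ => Or.inr ⟨x, by rw [← hXcl]; exact hx, y,
        by rw [← hXcl]; exact hy, rfl⟩) hmcl
    rcases key with h | ⟨p, hp, q, hq, heq⟩
    · exact h
    · exfalso
      obtain ⟨⟨ph, pt⟩, ⟨pv, pvt⟩⟩ := p
      obtain ⟨⟨qh, qt⟩, ⟨qv, qvt⟩⟩ := q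
      have h1 : (⟨a, List.replicate (n + 1) b⟩ : FreeSemigroup A)
          = ⟨ph, pt ++ qh :: qt⟩ := congrArg Prod.fst heq
      have h2 : (⟨d, List.replicate n d ++ [c]⟩ : FreeSemigroup B)
          = ⟨pv, pvt ++ qv :: qvt⟩ := congrArg Prod.snd heq
      obtain ⟨hph, hpt⟩ := FreeSemigroup.mk.injEq .. ▸ h1
      obtain ⟨hpv, hpvt⟩ := FreeSemigroup.mk.injEq .. ▸ h2
      -- all letters of pt are b
      have hallb : ∀ x ∈ pt, x = b := by
        intro x hx
        have hx2 : x ∈ List.replicate (n + 1) b := by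
          rw [hpt]; exact List.mem_append_left _ hx
        exact List.eq_of_mem_replicate hx2
      -- all letters of pvt are d
      have halld : ∀ x ∈ pvt, x = d :=
        mem_prefix_eq d c pvt (qv :: qvt) n hpvt.symm (List.cons_ne_nil _ _)
      -- coordinate 0 of the two sides disagree
      have hu : sval φ ⟨ph, pt⟩ i0 = 1 := by
        rw [sval_mk_apply, ← hph, hsa]
        have : ∀ x ∈ pt.map (fun x => sval φ (.of x) i0), x = 0 := by
          intro x hx
          obtain ⟨y, hy, rfl⟩ := List.mem_map.mp hx
          rw [hallb y hy, hsb, unit_apply, if_neg hne01]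
        rw [List.sum_eq_zero this, unit_apply, if_pos rfl]
        omega
      have hv : sval ψ ⟨pv, pvt⟩ i0 = 0 := by
        rw [sval_mk_apply, ← hpv, hsd]
        have : ∀ x ∈ pvt.map (fun x => sval ψ (.of x) i0), x = 0 := by
          intro x hx
          obtain ⟨y, hy, rfl⟩ := List.mem_map.mp hx
          rw [halld y hy, hsd, unit_apply, if_neg hne01]
        rw [List.sum_eq_zero this, unit_apply, if_neg hne01]
        omega
      have hpeq : φ ⟨ph, pt⟩ = ψ ⟨pv, pvt⟩ := hp
      have hvals : sval φ ⟨ph, pt⟩ i0 = sval ψ ⟨pv, pvt⟩ i0 := by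
        unfold sval
        rw [hpeq]
      rw [hu, hv] at hvals
      exact one_ne_zero hvals
  -- injectivity of `s`, hence infinitely many elements in `X`
  have hinj : Function.Injective s := by
    intro n m h
    have := congrArg (fun p => p.1.tail.length) h
    simpa [hs] using this
  have hsub : Set.range s ⊆ X := by
    rintro _ ⟨n, rfl⟩
    exact hX n
  exact Set.infinite_range_of_injective hinj (hXfin.subset hsub)
end

section
/- Let A and B be finite sets. Then the number of subsets X ⊆ A × B such that both coordinate projections X → A and X → B are surjective equals ∑_{i=0}^{|A|} (-1)^i · C(|A|, i) · (2^{|A|-i} − 1)^{|B|}, where C(n,k) denotes the binomial coefficient. -/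
/-!
Reading `X ⊆ A × B` column by column identifies it with a family `(X_b)_{b ∈ B}` of subsets of
`A`: surjectivity onto `B` says that every column is nonempty, surjectivity onto `A` that the
columns cover `A`. Inclusion–exclusion over the set `t ⊆ A` of points left uncovered counts the
covering families as `∑_t (-1)^|t|` times the number of families of nonempty subsets of `A \ t`,
and there are `(2^(|A| - |t|) - 1)^|B|` of those.
-/

open Finset

theorem Finset.inclusion_exclusion_card_filter_eq_univ {α ι : Type*} [Fintype ι]
    [DecidableEq ι] (s : Finset α) (c : α → Finset ι) :
    (#{x ∈ s | c x = univ} : ℤ) =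
      ∑ t : Finset ι, (-1 : ℤ) ^ #t * #{x ∈ s | Disjoint t (c x)} := by
  calc (#{x ∈ s | c x = univ} : ℤ)
      = ∑ x ∈ s, ∑ t ∈ (c x)ᶜ.powerset, (-1 : ℤ) ^ #t := by
        simp only [sum_powerset_neg_one_pow_card, compl_eq_empty_iff, ← sum_boole]
    _ = ∑ x ∈ s, ∑ t : Finset ι, if Disjoint t (c x) then (-1 : ℤ) ^ #t else 0 := by
        simp only [← sum_filter, ← subset_compl_iff_disjoint_right, filter_subset_univ]
    _ = _ := by
        rw [sum_comm]
        simp only [← sum_filter, sum_const, nsmul_eq_mul, mul_comm]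

theorem Finset.card_filter_forall_nonempty_and_subset {ι α : Type*} [Fintype ι] [DecidableEq ι]
    [Fintype α] [DecidableEq α] (T : Finset α) :
    #{f : ι → Finset α | ∀ i, (f i).Nonempty ∧ f i ⊆ T} = (2 ^ #T - 1) ^ Fintype.card ι := by
  have hpi : ({f : ι → Finset α | ∀ i, (f i).Nonempty ∧ f i ⊆ T} : Finset _) =
      Fintype.piFinset fun _ => T.powerset.erase ∅ := by
    ext f
    simp [nonempty_iff_ne_empty]
  rw [hpi, Fintype.card_piFinset, prod_const, card_erase_of_mem (empty_mem_powerset T),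
    card_powerset, card_univ]

open Classical in
noncomputable def Set.prodEquivColumns (α β : Type*) [Fintype α] :
    Set (α × β) ≃ (β → Finset α) where
  toFun X b := {a | (a, b) ∈ X}.toFinset
  invFun f := {p | p.1 ∈ f p.2}
  left_inv X := by ext; simp
  right_inv f := by ext; simp

@[simp]
theorem Set.mem_prodEquivColumns {α β : Type*} [Fintype α] {X : Set (α × β)} {a : α} {b : β} :
    a ∈ prodEquivColumns α β X b ↔ (a, b) ∈ X := by
  simp [prodEquivColumns]

/-- the number of subsets `X ⊆ A × B` with both coordinate
projections surjective equals
`∑_{i=0}^{|A|} (-1)^i · C(|A|,i) · (2^{|A|-i} − 1)^{|B|}`. -/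
theorem stmt13 {A B : Type} [Fintype A] [Fintype B] :
    (Nat.card {X : Set (A × B) //
        (∀ a : A, ∃ b : B, (a, b) ∈ X) ∧ (∀ b : B, ∃ a : A, (a, b) ∈ X)} : ℤ) =
      ∑ i ∈ Finset.range (Fintype.card A + 1),
        (-1 : ℤ) ^ i * ((Fintype.card A).choose i : ℤ) *
          ((2 : ℤ) ^ (Fintype.card A - i) - 1) ^ (Fintype.card B) := by
  classical
  have hcolumns : Nat.card {X : Set (A × B) //
        (∀ a : A, ∃ b : B, (a, b) ∈ X) ∧ (∀ b : B, ∃ a : A, (a, b) ∈ X)} =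
      #{f ∈ {f : B → Finset A | ∀ b, (f b).Nonempty} | univ.biUnion f = univ} := by
    rw [filter_filter, ← Fintype.card_subtype, ← Nat.card_eq_fintype_card]
    refine Nat.card_congr ((Set.prodEquivColumns A B).subtypeEquiv fun X => ?_)
    simp [Finset.Nonempty, eq_univ_iff_forall, and_comm]
  have huncovered (t : Finset A) :
      #{f ∈ {f : B → Finset A | ∀ b, (f b).Nonempty} | Disjoint t (univ.biUnion f)} =
        (2 ^ (Fintype.card A - #t) - 1) ^ Fintype.card B := by
    rw [filter_filter, ← card_compl, ← card_filter_forall_nonempty_and_subset]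
    congr 1
    ext f
    simp [disjoint_biUnion_right, subset_compl_iff_disjoint_left, forall_and]
  rw [hcolumns, inclusion_exclusion_card_filter_eq_univ]
  simp_rw [huncovered]
  rw [← powerset_univ, sum_powerset_apply_card
    fun k => (-1 : ℤ) ^ k * ((2 ^ (Fintype.card A - k) - 1) ^ Fintype.card B : ℕ), card_univ]
  refine sum_congr rfl fun i _ => ?_
  push_cast [Nat.one_le_two_pow]
  ring
end

section
/- Let A and B be finite alphabets and let X ⊆ A × B be a subset whose coordinate projections onto A and onto B are both surjective. Let U = ⟨X⟩ be the subsemigroup of A⁺ × B⁺ generated by X, and let ker π_{A⁺} and ker π_{B⁺} be the kernel congruences on U of the projections to A⁺ and B⁺. Then ker π_{A⁺} ∘ ker π_{B⁺} = ker π_{B⁺} ∘ ker π_{A⁺} if and only if X is closed under completing rectangles: for all a, a' ∈ A and b, b' ∈ B, if (a,b), (a,b'), (a',b) ∈ X then (a',b') ∈ X. -/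
/-- The embedding of a pair of letters into the product of free semigroups. -/
def embedPair {A B : Type*} (p : A × B) : FreeSemigroup A × FreeSemigroup B :=
  (FreeSemigroup.of p.1, FreeSemigroup.of p.2)

/-- The subsemigroup `⟨X⟩` of `A⁺ × B⁺` generated by a set `X ⊆ A × B` of
pairs of letters. -/
def genSubsemigroup {A B : Type*} (X : Set (A × B)) :
    Subsemigroup (FreeSemigroup A × FreeSemigroup B) :=
  Subsemigroup.closure (embedPair '' X)

/-- The kernel congruence of the projection of `⟨X⟩` onto `A⁺`, as a relation. -/
def kerFst {A B : Type*} (X : Set (A × B)) (u v : genSubsemigroup X) : Prop :=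
  (u : FreeSemigroup A × FreeSemigroup B).1 = (v : FreeSemigroup A × FreeSemigroup B).1

/-- The kernel congruence of the projection of `⟨X⟩` onto `B⁺`, as a relation. -/
def kerSnd {A B : Type*} (X : Set (A × B)) (u v : genSubsemigroup X) : Prop :=
  (u : FreeSemigroup A × FreeSemigroup B).2 = (v : FreeSemigroup A × FreeSemigroup B).2

/-!
A pair of words lies in `⟨X⟩` exactly when the words have the same length and are letterwise
related by `X`. Hence `u (ker π_{A⁺} ∘ ker π_{B⁺}) v` says that `(π_{A⁺} u, π_{B⁺} v) ∈ ⟨X⟩`,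
and the two compositions are converse to each other, so they commute iff this relation is
symmetric. For one-letter words that is precisely rectangle completion; conversely rectangle
completion applied letter by letter makes the relation symmetric.
-/

theorem List.Forall₂.of_rectangle {α β : Type*} {R : α → β → Prop}
    (hR : ∀ a a' b b', R a b → R a b' → R a' b → R a' b')
    {l l' : List α} {m m' : List β} (h : Forall₂ R l m) (h₁ : Forall₂ R l m')
    (h₂ : Forall₂ R l' m) : Forall₂ R l' m' := by
  induction h generalizing l' m' with
  | nil =>
    cases h₁
    cases h₂
    exact .nil
  | cons hab _ ih =>
    obtain _ | ⟨hab', h₁⟩ := h₁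
    obtain _ | ⟨ha'b, h₂⟩ := h₂
    exact .cons (hR _ _ _ _ hab hab' ha'b) (ih h₁ h₂)

theorem FreeSemigroup.toList_toFreeMonoid_mk {α : Type*} (a : α) (l : List α) :
    (toFreeMonoid ⟨a, l⟩).toList = a :: l := by
  rw [toFreeMonoid_mk_eq_cons, FreeMonoid.toList_ofList]

open FreeSemigroup

section

variable {A B : Type*} (X : Set (A × B))

theorem mk_mem_genSubsemigroup {a : A} {b : B} {l : List A} {m : List B} (hab : (a, b) ∈ X)
    (h : List.Forall₂ (fun a b => (a, b) ∈ X) l m) :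
    ((⟨a, l⟩, ⟨b, m⟩) : FreeSemigroup A × FreeSemigroup B) ∈ genSubsemigroup X := by
  induction h generalizing a b with
  | nil => exact Subsemigroup.subset_closure (Set.mem_image_of_mem embedPair hab)
  | cons ha'b' _ ih =>
    exact Subsemigroup.mul_mem _ (x := embedPair (a, b))
      (Subsemigroup.subset_closure (Set.mem_image_of_mem embedPair hab)) (ih ha'b')

theorem mem_genSubsemigroup_iff (p : FreeSemigroup A × FreeSemigroup B) :
    p ∈ genSubsemigroup X ↔
      List.Forall₂ (fun a b => (a, b) ∈ X) (toFreeMonoid p.1).toList (toFreeMonoid p.2).toList := by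
  constructor
  · intro hp
    induction hp using Subsemigroup.closure_induction with
    | mem q hq =>
      obtain ⟨⟨a, b⟩, hab, rfl⟩ := hq
      exact .cons hab .nil
    | mul x y _ _ hx hy =>
      simpa only [Prod.fst_mul, Prod.snd_mul, map_mul, FreeMonoid.toList_mul] using
        List.rel_append hx hy
  · obtain ⟨⟨a, l⟩, ⟨b, m⟩⟩ := p
    rw [toList_toFreeMonoid_mk, toList_toFreeMonoid_mk, List.forall₂_cons]
    exact fun h => mk_mem_genSubsemigroup X h.1 h.2

theorem embedPair_mem_genSubsemigroup_iff (p : A × B) :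
    embedPair p ∈ genSubsemigroup X ↔ p ∈ X := by
  simp [mem_genSubsemigroup_iff, embedPair]

theorem comp_kerFst_kerSnd_iff (u v : genSubsemigroup X) :
    Relation.Comp (kerFst X) (kerSnd X) u v ↔
      ((u : FreeSemigroup A × FreeSemigroup B).1, (v : FreeSemigroup A × FreeSemigroup B).2) ∈
        genSubsemigroup X := by
  constructor
  · rintro ⟨w, huw, hwv⟩
    have hw : (w : FreeSemigroup A × FreeSemigroup B) =
        ((u : FreeSemigroup A × FreeSemigroup B).1, (v : FreeSemigroup A × FreeSemigroup B).2) :=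
      Prod.ext huw.symm hwv
    exact hw ▸ w.2
  · exact fun h => ⟨⟨_, h⟩, rfl, rfl⟩

theorem comp_kerSnd_kerFst_iff (u v : genSubsemigroup X) :
    Relation.Comp (kerSnd X) (kerFst X) u v ↔ Relation.Comp (kerFst X) (kerSnd X) v u :=
  ⟨fun ⟨w, huw, hwv⟩ => ⟨w, hwv.symm, huw.symm⟩, fun ⟨w, hvw, hwu⟩ => ⟨w, hwu.symm, hvw.symm⟩⟩

theorem comp_kerFst_kerSnd_symm
    (hX : ∀ (a a' : A) (b b' : B), (a, b) ∈ X → (a, b') ∈ X → (a', b) ∈ X → (a', b') ∈ X)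
    {u v : genSubsemigroup X} (h : Relation.Comp (kerFst X) (kerSnd X) u v) :
    Relation.Comp (kerFst X) (kerSnd X) v u := by
  rw [comp_kerFst_kerSnd_iff, mem_genSubsemigroup_iff] at h ⊢
  exact h.of_rectangle hX ((mem_genSubsemigroup_iff X _).1 u.2)
    ((mem_genSubsemigroup_iff X _).1 v.2)

end

theorem stmt15_general {A B : Type} (X : Set (A × B)) :
    Relation.Comp (kerFst X) (kerSnd X) = Relation.Comp (kerSnd X) (kerFst X) ↔
      ∀ (a a' : A) (b b' : B),
        (a, b) ∈ X → (a, b') ∈ X → (a', b) ∈ X → (a', b') ∈ X := by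
  constructor
  · intro hcomm a a' b b' hab hab' ha'b
    let u : genSubsemigroup X := ⟨embedPair (a, b'), (embedPair_mem_genSubsemigroup_iff X _).2 hab'⟩
    let v : genSubsemigroup X := ⟨embedPair (a', b), (embedPair_mem_genSubsemigroup_iff X _).2 ha'b⟩
    have huv : Relation.Comp (kerFst X) (kerSnd X) u v :=
      (comp_kerFst_kerSnd_iff X u v).2 ((embedPair_mem_genSubsemigroup_iff X (a, b)).2 hab)
    rw [hcomm, comp_kerSnd_kerFst_iff, comp_kerFst_kerSnd_iff] at huv
    exact (embedPair_mem_genSubsemigroup_iff X (a', b')).1 huv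
  · intro hX
    ext u v
    rw [comp_kerSnd_kerFst_iff]
    exact ⟨comp_kerFst_kerSnd_symm X hX, comp_kerFst_kerSnd_symm X hX⟩

/-- for `X ⊆ A × B` with surjective coordinate projections, the
kernel congruences of the projections of `⟨X⟩ ≤ A⁺ × B⁺` commute under
relational composition if and only if `X` is closed under completing rectangles. -/
theorem stmt15 {A B : Type} [Finite A] [Finite B] (X : Set (A × B))
    (hA : ∀ a : A, ∃ b : B, (a, b) ∈ X) (hB : ∀ b : B, ∃ a : A, (a, b) ∈ X) :
    Relation.Comp (kerFst X) (kerSnd X) = Relation.Comp (kerSnd X) (kerFst X) ↔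
      ∀ (a a' : A) (b b' : B),
        (a, b) ∈ X → (a, b') ∈ X → (a', b) ∈ X → (a', b') ∈ X :=
  stmt15_general X
end

section
/- For each n ∈ ℕ, let g(n) be the number of subsets X ⊆ Fin n × Fin n whose coordinate projections are both surjective and for which the kernel congruences of the projections of ⟨X⟩ ≤ (Fin n)⁺ × (Fin n)⁺ commute, and let f(n) be the number of subsets X ⊆ Fin n × Fin n whose coordinate projections are both surjective. Then g(n) / f(n) tends to 0 as n → ∞. -/
/-- `f n`: the number of subsets `X ⊆ Fin n × Fin n` whose coordinate
projections are both surjective. -/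
noncomputable def subdirectCount (n : ℕ) : ℕ :=
  Nat.card {X : Set (Fin n × Fin n) //
    (∀ a : Fin n, ∃ b : Fin n, (a, b) ∈ X) ∧ (∀ b : Fin n, ∃ a : Fin n, (a, b) ∈ X)}

/-- `g n`: the number of subsets `X ⊆ Fin n × Fin n` whose coordinate
projections are both surjective and whose kernel congruences on
`⟨X⟩ ≤ (Fin n)⁺ × (Fin n)⁺` commute. -/
noncomputable def fiberCount (n : ℕ) : ℕ :=
  Nat.card {X : Set (Fin n × Fin n) //
    ((∀ a : Fin n, ∃ b : Fin n, (a, b) ∈ X) ∧ (∀ b : Fin n, ∃ a : Fin n, (a, b) ∈ X)) ∧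
    Relation.Comp (kerFst X) (kerSnd X) = Relation.Comp (kerSnd X) (kerFst X)}

section Relations

variable {A B : Type*}

def IsSubdirect (X : Set (A × B)) : Prop :=
  (∀ a, ∃ b, (a, b) ∈ X) ∧ (∀ b, ∃ a, (a, b) ∈ X)

def IsDifunctional (X : Set (A × B)) : Prop :=
  ∀ ⦃a a' b b'⦄, (a, b) ∈ X → (a, b') ∈ X → (a', b') ∈ X → (a', b) ∈ X

/-- `Classical.epsilon` sees only the row `{b | (a, b) ∈ X}`, so equal rows get equal
representatives. -/
noncomputable def rowRep [Nonempty B] (X : Set (A × B)) (a : A) : B :=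
  Classical.epsilon fun b => (a, b) ∈ X

noncomputable def colRep [Nonempty A] (X : Set (A × B)) (b : B) : A :=
  Classical.epsilon fun a => (a, b) ∈ X

variable {X : Set (A × B)}

lemma rowRep_mem [Nonempty B] {a : A} (h : ∃ b, (a, b) ∈ X) : (a, rowRep X a) ∈ X :=
  Classical.epsilon_spec h

lemma colRep_mem [Nonempty A] {b : B} (h : ∃ a, (a, b) ∈ X) : (colRep X b, b) ∈ X :=
  Classical.epsilon_spec h

lemma IsDifunctional.rowRep_eq [Nonempty B] (hX : IsDifunctional X) {a a' : A} {b : B}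
    (h : (a, b) ∈ X) (h' : (a', b) ∈ X) : rowRep X a = rowRep X a' :=
  congrArg Classical.epsilon <| funext fun _ => propext
    ⟨fun hc => hX hc h h', fun hc => hX hc h' h⟩

lemma IsDifunctional.mem_iff_rowRep_eq [Nonempty B] (hX : IsDifunctional X)
    (hrow : ∀ a, ∃ b, (a, b) ∈ X) {a a' : A} {b : B} (h' : (a', b) ∈ X) :
    (a, b) ∈ X ↔ rowRep X a' = rowRep X a := by
  refine ⟨fun h => hX.rowRep_eq h' h, fun hrep => hX h' ?_ (rowRep_mem (hrow a))⟩
  exact hrep ▸ rowRep_mem (hrow a')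

lemma injective_rowRep_colRep [Nonempty A] [Nonempty B] :
    Function.Injective fun X : {X : Set (A × B) // IsSubdirect X ∧ IsDifunctional X} =>
      (rowRep X.1, colRep X.1) := by
  rintro ⟨X, ⟨hXrow, hXcol⟩, hX⟩ ⟨Y, ⟨hYrow, hYcol⟩, hY⟩ hXY
  obtain ⟨hrow, hcol⟩ := Prod.ext_iff.mp hXY
  ext ⟨a, b⟩
  rw [hX.mem_iff_rowRep_eq hXrow (colRep_mem (hXcol b)),
    hY.mem_iff_rowRep_eq hYrow (colRep_mem (hYcol b))]
  simp only at hrow hcol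
  rw [hrow, hcol]

lemma card_subdirect_difunctional_le [Finite A] [Finite B] [Nonempty A] [Nonempty B] :
    Nat.card {X : Set (A × B) // IsSubdirect X ∧ IsDifunctional X} ≤
      Nat.card B ^ Nat.card A * Nat.card A ^ Nat.card B := by
  simpa only [Nat.card_prod, Nat.card_fun] using
    Nat.card_le_card_of_injective _ (injective_rowRep_colRep (A := A) (B := B))

end Relations

/-- Every relation containing the diagonal is subdirect. -/
lemma card_set_offDiag_le_card_subdirect {A : Type*} [Finite A] :
    Nat.card (Set {p : A × A // p.1 ≠ p.2}) ≤ Nat.card {X : Set (A × A) // IsSubdirect X} := by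
  refine Nat.card_le_card_of_injective
    (fun Y => ⟨Set.diagonal A ∪ Subtype.val '' Y, fun a => ⟨a, .inl rfl⟩, fun b => ⟨b, .inl rfl⟩⟩)
    fun Y Z hYZ => ?_
  have hval (W : Set {p : A × A // p.1 ≠ p.2}) :
      Subtype.val ⁻¹' (Set.diagonal A ∪ Subtype.val '' W) = W := by
    ext ⟨p, hp⟩
    simp [hp]
  rw [← hval Y, ← hval Z]
  exact congrArg (Subtype.val ⁻¹' ·.1) hYZ

lemma card_fst_ne_snd {A : Type*} [Fintype A] [DecidableEq A] :
    Nat.card {p : A × A // p.1 ≠ p.2} = Nat.card A * (Nat.card A - 1) := by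
  rw [Nat.card_eq_fintype_card, Fintype.card_subtype, Nat.card_eq_fintype_card, Nat.mul_sub_one,
    ← Finset.card_univ, ← Finset.offDiag_card]
  congr 1
  ext p
  simp [Finset.mem_offDiag]

lemma mem_embedPair_image_of_length_fst_eq_one {A B : Type*} {X : Set (A × B)}
    {w : FreeSemigroup A × FreeSemigroup B} (hw : w ∈ genSubsemigroup X)
    (h1 : w.1.length = 1) : w ∈ embedPair '' X := by
  induction hw using Subsemigroup.closure_induction with
  | mem x hx => exact hx
  | mul x y _ _ _ _ =>
    rw [Prod.fst_mul, FreeSemigroup.length_mul] at h1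
    have hpos : 0 < x.1.length ∧ 0 < y.1.length := ⟨Nat.succ_pos _, Nat.succ_pos _⟩
    omega

/-- `(a, b) ker₁ (a, b') ker₂ (a', b')`; commuting gives `w` with `(a, b) ker₂ w ker₁ (a', b')`,
and an element of `⟨X⟩` with one-letter coordinates is a generator, so `w = (a', b) ∈ X`. -/
lemma isDifunctional_of_comp_comm {A B : Type*} {X : Set (A × B)}
    (h : Relation.Comp (kerFst X) (kerSnd X) = Relation.Comp (kerSnd X) (kerFst X)) :
    IsDifunctional X := by
  intro a a' b b' hab hab' ha'b'
  have gen {p : A × B} (hp : p ∈ X) : embedPair p ∈ genSubsemigroup X :=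
    Subsemigroup.subset_closure ⟨p, hp, rfl⟩
  have hcomp : Relation.Comp (kerFst X) (kerSnd X) ⟨_, gen hab⟩ ⟨_, gen ha'b'⟩ :=
    ⟨⟨_, gen hab'⟩, rfl, rfl⟩
  rw [h] at hcomp
  obtain ⟨⟨w, hw⟩, hw2, hw1⟩ := hcomp
  change FreeSemigroup.of b = w.2 at hw2
  change w.1 = FreeSemigroup.of a' at hw1
  obtain ⟨⟨x, y⟩, hxy, rfl⟩ :=
    mem_embedPair_image_of_length_fst_eq_one hw (by rw [hw1, FreeSemigroup.length_of])
  obtain rfl : x = a' := congrArg FreeSemigroup.head hw1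
  obtain rfl : y = b := (congrArg FreeSemigroup.head hw2).symm
  exact hxy

lemma fiberCount_le {n : ℕ} (hn : 0 < n) : fiberCount n ≤ n ^ n * n ^ n := by
  have : Nonempty (Fin n) := ⟨⟨0, hn⟩⟩
  calc fiberCount n
      ≤ Nat.card {X : Set (Fin n × Fin n) // IsSubdirect X ∧ IsDifunctional X} :=
        Nat.card_le_card_of_injective _ (Subtype.impEmbedding _ _
          fun X hX => ⟨hX.1, isDifunctional_of_comp_comm hX.2⟩).injective
    _ ≤ n ^ n * n ^ n := by simpa using card_subdirect_difunctional_le (A := Fin n) (B := Fin n)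

lemma two_pow_le_subdirectCount (n : ℕ) : 2 ^ (n * (n - 1)) ≤ subdirectCount n := by
  calc 2 ^ (n * (n - 1)) = Nat.card (Set {p : Fin n × Fin n // p.1 ≠ p.2}) := by
        rw [Nat.card_eq_fintype_card, Fintype.card_set, ← Nat.card_eq_fintype_card,
          card_fst_ne_snd, Nat.card_fin]
    _ ≤ subdirectCount n := card_set_offDiag_le_card_subdirect

lemma sq_le_two_pow_sub_two {n : ℕ} (hn : 10 ≤ n) : n ^ 2 ≤ 2 ^ (n - 2) := by
  induction n, hn using Nat.le_induction with
  | base => norm_num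
  | succ n hn ih =>
    calc (n + 1) ^ 2 ≤ 2 * n ^ 2 := by nlinarith
      _ ≤ 2 * 2 ^ (n - 2) := by omega
      _ = 2 ^ (n + 1 - 2) := by rw [← pow_succ', show n + 1 - 2 = n - 2 + 1 by omega]

lemma fiberCount_mul_two_pow_le {n : ℕ} (hn : 10 ≤ n) :
    fiberCount n * 2 ^ n ≤ subdirectCount n :=
  calc fiberCount n * 2 ^ n ≤ (n ^ n * n ^ n) * 2 ^ n :=
        Nat.mul_le_mul_right _ (fiberCount_le (by omega))
    _ = (n ^ 2) ^ n * 2 ^ n := by rw [sq, mul_pow]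
    _ ≤ (2 ^ (n - 2)) ^ n * 2 ^ n :=
        Nat.mul_le_mul_right _ (Nat.pow_le_pow_left (sq_le_two_pow_sub_two hn) n)
    _ = 2 ^ (n * (n - 1)) := by
        rw [← pow_mul, ← pow_add, show n - 1 = n - 2 + 1 by omega]
        ring_nf
    _ ≤ subdirectCount n := two_pow_le_subdirectCount n

/-- `g(n) / f(n) → 0` as `n → ∞`. -/
theorem stmt17 :
    Filter.Tendsto (fun n : ℕ => (fiberCount n : ℝ) / (subdirectCount n : ℝ))
      Filter.atTop (nhds 0) := by
  refine squeeze_zero' (Filter.Eventually.of_forall fun n => by positivity)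
    ?_ (tendsto_pow_atTop_nhds_zero_of_lt_one (r := (1 / 2 : ℝ)) (by norm_num) (by norm_num))
  filter_upwards [Filter.eventually_ge_atTop 10] with n hn
  have hf : (0 : ℝ) < subdirectCount n := by
    exact_mod_cast (Nat.two_pow_pos _).trans_le (two_pow_le_subdirectCount n)
  rw [div_le_iff₀ hf, one_div_pow, div_mul_eq_mul_div, le_div_iff₀ (by positivity), one_mul]
  exact_mod_cast fiberCount_mul_two_pow_le hn
end
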